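/- arXiv:2512.08177 — 2 statements merged into one kernel-verified Lean document; each statement's English description precedes it below -/
import Mathlib

section
/- Every Baron–Myerson-with-price-cap regulation is robustly optimal. Moreover, every robustly optimal price regulation (p, t) satisfies p(θ) = min{z*(θ), θ̄} for all θ ∈ (θ̲, θ̄]. -/
open MeasureTheory Set

noncomputable section

/-- The base environment: type space `Θ = [θl, θu]`, capacity `qbar`, lowest inverse
demand `Pl = P̲` (decreasing and continuous on `[0, qbar]` with `Pl 0 > θu`) and the
induced lowest demand `Dl = D̲`, with `Dl θl < qbar`. -/
structure Env where
  θl : ℝ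
  θu : ℝ
  qbar : ℝ
  Pl : ℝ → ℝ
  Dl : ℝ → ℝ
  θl_pos : 0 < θl
  θlu : θl < θu
  qbar_pos : 0 < qbar
  Pl_anti : StrictAntiOn Pl (Icc 0 qbar)
  Pl_cont : ContinuousOn Pl (Icc 0 qbar)
  Pl0 : θu < Pl 0
  Dl_inv : ∀ p, Pl qbar ≤ p → p ≤ Pl 0 → Dl p ∈ Icc (0:ℝ) qbar ∧ Pl (Dl p) = p
  Dl_high : ∀ p, Pl 0 < p → Dl p = 0
  Dl_low : ∀ p, p < Pl qbar → Dl p = qbar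
  Dl_lt : Dl θl < qbar

namespace Env

/-- The type space `Θ = [θl, θu]`. -/
def Θ (E : Env) : Set ℝ := Icc E.θl E.θu

/-- The lowest gross value function `V̲ (x) = ∫_0^x P̲`. -/
def Vl (E : Env) (x : ℝ) : ℝ := ∫ s in (0:ℝ)..x, E.Pl s

/-- `q_ℓ = D̲(θu)`: the efficient quantity at the lowest demand and highest cost. -/
def ql (E : Env) : ℝ := E.Dl E.θu

/-- `G* = V̲(q_ℓ) − θu · q_ℓ`: the maximal attainable guarantee. -/
def Gstar (E : Env) : ℝ := E.Vl E.ql - E.θu * E.ql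

/-- A feasible quantity schedule: weakly decreasing on `Θ`, valued in `[0, qbar]`. -/
def IsSchedule (E : Env) (q : ℝ → ℝ) : Prop :=
  AntitoneOn q E.Θ ∧ ∀ θ ∈ E.Θ, q θ ∈ Icc (0:ℝ) E.qbar

/-- `W̲(θ, q) = V̲(q(θ)) − θ q(θ) − ∫_θ^{θu} q`: ex-post welfare at the lowest demand
with zero rent for the highest type. -/
def Wl (E : Env) (q : ℝ → ℝ) (θ : ℝ) : ℝ :=
  E.Vl (q θ) - θ * q θ - ∫ y in θ..E.θu, q y

/-- An IC and IR (direct) quantity mechanism `(q, u)`. -/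
def IsMech (E : Env) (q u : ℝ → ℝ) : Prop :=
  E.IsSchedule q ∧ 0 ≤ u E.θu ∧
    ∀ θ ∈ E.Θ, u θ = u E.θu + ∫ y in θ..E.θu, q y

/-- The set `𝒱` of admissible gross value functions: integrals of decreasing continuous
inverse demands dominating `P̲` pointwise. -/
def IsValue (E : Env) (V : ℝ → ℝ) : Prop :=
  ∃ P : ℝ → ℝ, StrictAntiOn P (Icc 0 E.qbar) ∧ ContinuousOn P (Icc 0 E.qbar) ∧
    (∀ s ∈ Icc (0:ℝ) E.qbar, E.Pl s ≤ P s) ∧ ∀ x, V x = ∫ s in (0:ℝ)..x, P s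

/-- A Borel probability measure supported in `Θ` (the measure of a cdf `F ∈ 𝒻`). -/
def IsTech (E : Env) (μ : Measure ℝ) : Prop :=
  IsProbabilityMeasure μ ∧ μ (E.Θᶜ) = 0

/-- Ex-ante welfare `W(M; V, F)` of the mechanism `(q, u)` under value `V` and
cost technology `μ`. -/
def W (E : Env) (q u V : ℝ → ℝ) (μ : Measure ℝ) : ℝ :=
  ∫ θ, (V (q θ) - θ * q θ - u θ) ∂μ

/-- The welfare guarantee `G(M) = inf_{V ∈ 𝒱, F ∈ 𝒻} W(M; V, F)`. -/
def G (E : Env) (q u : ℝ → ℝ) : ℝ :=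
  sInf {w : ℝ | ∃ (V : ℝ → ℝ) (μ : Measure ℝ),
    E.IsValue V ∧ E.IsTech μ ∧ w = E.W q u V μ}

/-- The short list: IC and IR mechanisms with the highest guarantee. -/
def ShortList (E : Env) (q u : ℝ → ℝ) : Prop :=
  E.IsMech q u ∧ ∀ q' u' : ℝ → ℝ, E.IsMech q' u' → E.G q' u' ≤ E.G q u

/-- Feasibility in the program (ROPT): a schedule satisfying all robustness
constraints `W̲(θ, q) ≥ G*`. -/
def FeasibleROPT (E : Env) (q : ℝ → ℝ) : Prop :=
  E.IsSchedule q ∧ ∀ θ ∈ E.Θ, E.Gstar ≤ E.Wl q θ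

end Env

/-- A demand `D ∈ 𝒟`, bundled with the inverse demand `P` that induces it:
`P` decreasing and continuous on `[0, qbar]`, `P ≥ P̲` pointwise, `P 0 > θu`. -/
structure Demand (E : Env) where
  P : ℝ → ℝ
  D : ℝ → ℝ
  P_anti : StrictAntiOn P (Icc 0 E.qbar)
  P_cont : ContinuousOn P (Icc 0 E.qbar)
  P_ge : ∀ s ∈ Icc (0:ℝ) E.qbar, E.Pl s ≤ P s
  P0 : E.θu < P 0
  D_inv : ∀ p, P E.qbar ≤ p → p ≤ P 0 → D p ∈ Icc (0:ℝ) E.qbar ∧ P (D p) = p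
  D_high : ∀ p, P 0 < p → D p = 0
  D_low : ∀ p, p < P E.qbar → D p = E.qbar
  D_lt : D E.θl < E.qbar

namespace Demand

/-- The gross value function `V_D(x) = ∫_0^x P` induced by a demand `D ∈ 𝒟`. -/
def V {E : Env} (D : Demand E) (x : ℝ) : ℝ := ∫ s in (0:ℝ)..x, D.P s

end Demand

namespace Env

/-- The lowest demand `D̲` as an element of `𝒟`. -/
def DlDemand (E : Env) : Demand E where
  P := E.Pl
  D := E.Dl
  P_anti := E.Pl_anti
  P_cont := E.Pl_cont
  P_ge := fun _ _ => le_refl _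
  P0 := E.Pl0
  D_inv := E.Dl_inv
  D_high := E.Dl_high
  D_low := E.Dl_low
  D_lt := E.Dl_lt

/-- A price regulation `(p, t)`: nonnegative prices and transfers. -/
def IsPriceReg (E : Env) (p : ℝ → ℝ) (t : ℝ → Demand E → ℝ) : Prop :=
  (∀ θ ∈ E.Θ, 0 ≤ p θ) ∧ ∀ θ ∈ E.Θ, ∀ D : Demand E, 0 ≤ t θ D

/-- The rent `ũ(θ, D) = t(θ, D) − θ · D(p(θ))` of the monopolist. -/
def rent (E : Env) (p : ℝ → ℝ) (t : ℝ → Demand E → ℝ) (θ : ℝ) (D : Demand E) : ℝ :=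
  t θ D - θ * D.D (p θ)

/-- Ex-post incentive compatibility of a price regulation. -/
def EPIC (E : Env) (p : ℝ → ℝ) (t : ℝ → Demand E → ℝ) : Prop :=
  ∀ θ ∈ E.Θ, ∀ θ' ∈ E.Θ, ∀ D : Demand E,
    t θ' D - θ * D.D (p θ') ≤ E.rent p t θ D

/-- Ex-post individual rationality of a price regulation. -/
def EPIR (E : Env) (p : ℝ → ℝ) (t : ℝ → Demand E → ℝ) : Prop :=
  ∀ θ ∈ E.Θ, ∀ D : Demand E, 0 ≤ E.rent p t θ D

/-- Ex-post welfare `w̃(θ; D) = V_D(D(p(θ))) − θ·D(p(θ)) − ũ(θ, D)`. -/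
def wt (E : Env) (p : ℝ → ℝ) (t : ℝ → Demand E → ℝ) (θ : ℝ) (D : Demand E) : ℝ :=
  D.V (D.D (p θ)) - θ * D.D (p θ) - E.rent p t θ D

/-- Ex-ante welfare `W̃((p,t); D, F)` of a price regulation. -/
def Wt (E : Env) (p : ℝ → ℝ) (t : ℝ → Demand E → ℝ) (D : Demand E) (μ : Measure ℝ) : ℝ :=
  ∫ θ, E.wt p t θ D ∂μ

/-- The welfare guarantee `G̃((p,t)) = inf_{D ∈ 𝒟, F ∈ 𝒻} W̃((p,t); D, F)`. -/
def Gt (E : Env) (p : ℝ → ℝ) (t : ℝ → Demand E → ℝ) : ℝ :=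
  sInf {w : ℝ | ∃ (D : Demand E) (μ : Measure ℝ), E.IsTech μ ∧ w = E.Wt p t D μ}

/-- An EPIC and EPIR price regulation. -/
def IsAdmissiblePR (E : Env) (p : ℝ → ℝ) (t : ℝ → Demand E → ℝ) : Prop :=
  E.IsPriceReg p t ∧ E.EPIC p t ∧ E.EPIR p t

/-- The price short list: EPIC and EPIR price regulations with the highest guarantee. -/
def PriceShortList (E : Env) (p : ℝ → ℝ) (t : ℝ → Demand E → ℝ) : Prop :=
  E.IsAdmissiblePR p t ∧
    ∀ (p' : ℝ → ℝ) (t' : ℝ → Demand E → ℝ), E.IsAdmissiblePR p' t' → E.Gt p' t' ≤ E.Gt p t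

end Env

/-- The conjectured model: a regular cdf `F*` with density `f*` on `Θ`, and a
conjectured inverse demand `P*` (with induced demand `D*`) dominating `P̲`. -/
structure Model (E : Env) where
  Fstar : ℝ → ℝ
  fstar : ℝ → ℝ
  Pstar : ℝ → ℝ
  Dstar : ℝ → ℝ
  fstar_pos : ∀ θ ∈ E.Θ, 0 < fstar θ
  Fstar_ac : ∀ θ ∈ E.Θ, Fstar θ = ∫ y in E.θl..θ, fstar y
  Fstar_l : Fstar E.θl = 0
  Fstar_u : Fstar E.θu = 1
  zstar_cont : ContinuousOn (fun θ => θ + Fstar θ / fstar θ) E.Θ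
  zstar_mono : StrictMonoOn (fun θ => θ + Fstar θ / fstar θ) E.Θ
  Pstar_anti : StrictAntiOn Pstar (Icc 0 E.qbar)
  Pstar_cont : ContinuousOn Pstar (Icc 0 E.qbar)
  Pstar_ge : ∀ s ∈ Icc (0:ℝ) E.qbar, E.Pl s ≤ Pstar s
  Pstar0 : E.θu < Pstar 0
  Dstar_inv : ∀ p, Pstar E.qbar ≤ p → p ≤ Pstar 0 →
    Dstar p ∈ Icc (0:ℝ) E.qbar ∧ Pstar (Dstar p) = p
  Dstar_high : ∀ p, Pstar 0 < p → Dstar p = 0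
  Dstar_low : ∀ p, p < Pstar E.qbar → Dstar p = E.qbar
  Dstar_lt : Dstar E.θl < E.qbar

namespace Model

variable {E : Env} (Mo : Model E)

/-- The virtual cost `z*(θ) = θ + F*(θ)/f*(θ)`. -/
def zstar (θ : ℝ) : ℝ := θ + Mo.Fstar θ / Mo.fstar θ

/-- The conjectured gross value function `V*(x) = ∫_0^x P*`. -/
def Vstar (x : ℝ) : ℝ := ∫ s in (0:ℝ)..x, Mo.Pstar s

/-- The Baron–Myerson schedule `q^BM(θ) = D*(z*(θ))`. -/
def qBM (θ : ℝ) : ℝ := Mo.Dstar (Mo.zstar θ)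

/-- The Baron–Myerson-with-quantity-floor schedule `q*(θ) = max{q^BM(θ), q_ℓ}`. -/
def qstar (θ : ℝ) : ℝ := max (Mo.qBM θ) E.ql

/-- The objective of (ROPT): expected virtual surplus under the conjectured model. -/
def J (q : ℝ → ℝ) : ℝ :=
  ∫ θ in E.θl..E.θu, (Mo.Vstar (q θ) - Mo.zstar θ * q θ) * Mo.fstar θ

/-- `q` solves the program (ROPT). -/
def SolvesROPT (q : ℝ → ℝ) : Prop :=
  E.FeasibleROPT q ∧ ∀ q' : ℝ → ℝ, E.FeasibleROPT q' → Mo.J q' ≤ Mo.J q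

/-- `θ*`: the unique solution of `q^BM(θ*) = q_ℓ` in `Θ` when `q^BM(θu) < q_ℓ`;
otherwise `θ* = θu`. -/
def IsThetaStar (θs : ℝ) : Prop :=
  (Mo.qBM E.θu < E.ql ∧ θs ∈ E.Θ ∧ Mo.qBM θs = E.ql) ∨
    (E.ql ≤ Mo.qBM E.θu ∧ θs = E.θu)

/-- `θ^m`: the largest minimizer of `W̲(·, q*)` over `Θ`. -/
def IsThetaM (θm : ℝ) : Prop :=
  θm ∈ E.Θ ∧ (∀ θ' ∈ E.Θ, E.Wl Mo.qstar θm ≤ E.Wl Mo.qstar θ') ∧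
    ∀ θ ∈ E.Θ, (∀ θ' ∈ E.Θ, E.Wl Mo.qstar θ ≤ E.Wl Mo.qstar θ') → θ ≤ θm

/-- The conjectured demand `D*` as an element of `𝒟`. -/
def DstarDemand : Demand E where
  P := Mo.Pstar
  D := Mo.Dstar
  P_anti := Mo.Pstar_anti
  P_cont := Mo.Pstar_cont
  P_ge := Mo.Pstar_ge
  P0 := Mo.Pstar0
  D_inv := Mo.Dstar_inv
  D_high := Mo.Dstar_high
  D_low := Mo.Dstar_low
  D_lt := Mo.Dstar_lt

/-- Expected welfare `W((q,u); V*, F*)` of a quantity mechanism under the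
conjectured model. -/
def WStar (q u : ℝ → ℝ) : ℝ :=
  ∫ θ in E.θl..E.θu, (Mo.Vstar (q θ) - θ * q θ - u θ) * Mo.fstar θ

/-- Expected welfare `W̃((p,t); D*, F*)` of a price regulation under the
conjectured model. -/
def WtStar (p : ℝ → ℝ) (t : ℝ → Demand E → ℝ) : ℝ :=
  ∫ θ in E.θl..E.θu, E.wt p t θ Mo.DstarDemand * Mo.fstar θ

/-- A robustly optimal price regulation: in the price short list, and maximizing
expected welfare under the conjectured model over the price short list. -/
def RobustlyOptimalPR (p : ℝ → ℝ) (t : ℝ → Demand E → ℝ) : Prop :=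
  E.PriceShortList p t ∧
    ∀ (p' : ℝ → ℝ) (t' : ℝ → Demand E → ℝ), E.PriceShortList p' t' →
      Mo.WtStar p' t' ≤ Mo.WtStar p t

/-- A Baron–Myerson-with-price-cap regulation. -/
def IsBMPriceCap (p : ℝ → ℝ) (t : ℝ → Demand E → ℝ) : Prop :=
  E.IsAdmissiblePR p t ∧
  (∀ θ ∈ E.Θ, p θ = min (Mo.zstar θ) E.θu) ∧
  (∀ θ ∈ E.Θ, ∀ D : Demand E,
    E.rent p t θ D = E.rent p t E.θu D + ∫ y in θ..E.θu, D.D (p y)) ∧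
  (∀ D : Demand E, D ≠ E.DlDemand → D ≠ Mo.DstarDemand →
    0 ≤ E.rent p t E.θu D ∧
      E.rent p t E.θu D ≤ D.V (D.D E.θu) - E.θu * D.D E.θu - E.Gstar) ∧
  E.rent p t E.θu E.DlDemand = 0 ∧ E.rent p t E.θu Mo.DstarDemand = 0

end Model
open intervalIntegral

namespace Demand

variable {E : Env}

lemma Pq_le (D : Demand E) : D.P E.qbar ≤ E.θl := by
  by_contra h
  push_neg at h
  have := D.D_low E.θl h
  have := D.D_lt
  linarith

lemma mem_inv (D : Demand E) {x : ℝ} (h1 : E.θl ≤ x) (h2 : x ≤ E.θu) :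
    D.D x ∈ Icc (0:ℝ) E.qbar ∧ D.P (D.D x) = x :=
  D.D_inv x (le_trans D.Pq_le h1) (le_of_lt (lt_of_le_of_lt h2 D.P0))

/-- `D` is antitone on the inverse range. -/
lemma anti (D : Demand E) {a b : ℝ} (hab : a ≤ b)
    (ha : D.P E.qbar ≤ a) (hb : b ≤ D.P 0) : D.D b ≤ D.D a := by
  by_contra h
  push_neg at h
  have ha' : a ≤ D.P 0 := le_trans hab hb
  have hb' : D.P E.qbar ≤ b := le_trans ha hab
  obtain ⟨hma, hpa⟩ := D.D_inv a ha ha'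
  obtain ⟨hmb, hpb⟩ := D.D_inv b hb' hb
  have := D.P_anti hma hmb h
  rw [hpa, hpb] at this
  linarith

lemma P_intInt (D : Demand E) {x y : ℝ} (hx : x ∈ Icc (0:ℝ) E.qbar)
    (hy : y ∈ Icc (0:ℝ) E.qbar) : IntervalIntegrable D.P MeasureTheory.volume x y := by
  apply ContinuousOn.intervalIntegrable
  apply D.P_cont.mono
  have h := Set.uIcc_subset_uIcc_iff_mem.mpr
    (by rw [Set.uIcc_of_le (le_of_lt E.qbar_pos)]; exact ⟨hx, hy⟩ :
      x ∈ Set.uIcc (0:ℝ) E.qbar ∧ y ∈ Set.uIcc (0:ℝ) E.qbar)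
  rwa [Set.uIcc_of_le (le_of_lt E.qbar_pos)] at h

lemma V_sub (D : Demand E) {x y : ℝ} (hx : x ∈ Icc (0:ℝ) E.qbar)
    (hy : y ∈ Icc (0:ℝ) E.qbar) : D.V x - D.V y = ∫ s in y..x, D.P s := by
  have h0 : (0:ℝ) ∈ Icc (0:ℝ) E.qbar := ⟨le_refl _, le_of_lt E.qbar_pos⟩
  rw [Demand.V, Demand.V]
  exact intervalIntegral.integral_interval_sub_left (D.P_intInt h0 hx) (D.P_intInt h0 hy)

/-- Key one-dimensional maximization: `q ↦ V(q) − c q` is maximized at `q = D(c)`,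
strictly so. -/
lemma opt (D : Demand E) {c q : ℝ} (hc1 : E.θl ≤ c) (hc2 : c ≤ E.θu)
    (hq : q ∈ Icc (0:ℝ) E.qbar) :
    D.V q - c * q ≤ D.V (D.D c) - c * (D.D c) := by
  obtain ⟨hd, hPd⟩ := D.mem_inv hc1 hc2
  rcases le_or_gt q (D.D c) with h | h
  · have key : (D.D c - q) * c ≤ ∫ s in q..(D.D c), D.P s := by
      calc (D.D c - q) * c = ∫ _ in q..(D.D c), c := by
            rw [intervalIntegral.integral_const, smul_eq_mul]
      _ ≤ ∫ s in q..(D.D c), D.P s := by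
            apply intervalIntegral.integral_mono_on h intervalIntegrable_const
              (D.P_intInt hq hd)
            intro s hs
            rw [← hPd]
            rcases eq_or_lt_of_le hs.2 with he | hlt
            · rw [he]
            · exact le_of_lt (D.P_anti ⟨le_trans hq.1 hs.1, le_trans hs.2 hd.2⟩ hd hlt)
    have := D.V_sub hd hq
    nlinarith
  · have key : ∫ s in (D.D c)..q, D.P s ≤ (q - D.D c) * c := by
      calc ∫ s in (D.D c)..q, D.P s ≤ ∫ _ in (D.D c)..q, c := by
            apply intervalIntegral.integral_mono_on (le_of_lt h) (D.P_intInt hd hq)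
              intervalIntegrable_const
            intro s hs
            rw [← hPd]
            rcases eq_or_lt_of_le hs.1 with he | hlt
            · rw [← he]
            · exact le_of_lt (D.P_anti hd ⟨le_trans hd.1 hs.1, le_trans hs.2 hq.2⟩ hlt)
      _ = (q - D.D c) * c := by rw [intervalIntegral.integral_const, smul_eq_mul]
    have := D.V_sub hq hd
    nlinarith

/-- Strict version of `Demand.opt`. -/
lemma opt_strict (D : Demand E) {c q : ℝ} (hc1 : E.θl ≤ c) (hc2 : c ≤ E.θu)
    (hq : q ∈ Icc (0:ℝ) E.qbar) (hne : q ≠ D.D c) :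
    D.V q - c * q < D.V (D.D c) - c * (D.D c) := by
  obtain ⟨hd, hPd⟩ := D.mem_inv hc1 hc2
  rcases lt_or_gt_of_ne hne with h | h
  · -- q < D c; use midpoint
    set m := (q + D.D c) / 2 with hm
    have hqm : q < m := by simp only [hm]; linarith
    have hmd : m < D.D c := by simp only [hm]; linarith
    have hmmem : m ∈ Icc (0:ℝ) E.qbar := ⟨le_trans hq.1 (le_of_lt hqm), le_trans (le_of_lt hmd) hd.2⟩
    have hPm : c < D.P m := by
      rw [← hPd]; exact D.P_anti hmmem hd hmd
    have key1 : (m - q) * D.P m ≤ ∫ s in q..m, D.P s := by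
      calc (m - q) * D.P m = ∫ _ in q..m, D.P m := by
            rw [intervalIntegral.integral_const, smul_eq_mul]
      _ ≤ ∫ s in q..m, D.P s := by
            apply intervalIntegral.integral_mono_on (le_of_lt hqm) intervalIntegrable_const
              (D.P_intInt hq hmmem)
            intro s hs
            rcases eq_or_lt_of_le hs.2 with he | hlt
            · rw [he]
            · exact le_of_lt (D.P_anti ⟨le_trans hq.1 hs.1, le_trans hs.2 hmmem.2⟩ hmmem hlt)
    have key2 : (D.D c - m) * c ≤ ∫ s in m..(D.D c), D.P s := by
      calc (D.D c - m) * c = ∫ _ in m..(D.D c), c := by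
            rw [intervalIntegral.integral_const, smul_eq_mul]
      _ ≤ ∫ s in m..(D.D c), D.P s := by
            apply intervalIntegral.integral_mono_on (le_of_lt hmd) intervalIntegrable_const
              (D.P_intInt hmmem hd)
            intro s hs
            rw [← hPd]
            rcases eq_or_lt_of_le hs.2 with he | hlt
            · rw [he]
            · exact le_of_lt (D.P_anti ⟨le_trans hmmem.1 hs.1, le_trans hs.2 hd.2⟩ hd hlt)
    have hsplit : ∫ s in q..(D.D c), D.P s
        = (∫ s in q..m, D.P s) + ∫ s in m..(D.D c), D.P s := by
      rw [intervalIntegral.integral_add_adjacent_intervals (D.P_intInt hq hmmem)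
        (D.P_intInt hmmem hd)]
    have := D.V_sub hd hq
    nlinarith
  · -- q > D c
    set m := (q + D.D c) / 2 with hm
    have hdm : D.D c < m := by simp only [hm]; linarith
    have hmq : m < q := by simp only [hm]; linarith
    have hmmem : m ∈ Icc (0:ℝ) E.qbar := ⟨le_trans hd.1 (le_of_lt hdm), le_trans (le_of_lt hmq) hq.2⟩
    have hPm : D.P m < c := by
      rw [← hPd]; exact D.P_anti hd hmmem hdm
    have key1 : ∫ s in (D.D c)..m, D.P s ≤ (m - D.D c) * c := by
      calc ∫ s in (D.D c)..m, D.P s ≤ ∫ _ in (D.D c)..m, c := by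
            apply intervalIntegral.integral_mono_on (le_of_lt hdm) (D.P_intInt hd hmmem)
              intervalIntegrable_const
            intro s hs
            rw [← hPd]
            rcases eq_or_lt_of_le hs.1 with he | hlt
            · rw [← he]
            · exact le_of_lt (D.P_anti hd ⟨le_trans hd.1 hs.1, le_trans hs.2 hmmem.2⟩ hlt)
      _ = (m - D.D c) * c := by rw [intervalIntegral.integral_const, smul_eq_mul]
    have key2 : ∫ s in m..q, D.P s ≤ (q - m) * D.P m := by
      calc ∫ s in m..q, D.P s ≤ ∫ _ in m..q, D.P m := by
            apply intervalIntegral.integral_mono_on (le_of_lt hmq) (D.P_intInt hmmem hq)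
              intervalIntegrable_const
            intro s hs
            rcases eq_or_lt_of_le hs.1 with he | hlt
            · rw [← he]
            · exact le_of_lt (D.P_anti hmmem ⟨le_trans hmmem.1 hs.1, le_trans hs.2 hq.2⟩ hlt)
      _ = (q - m) * D.P m := by rw [intervalIntegral.integral_const, smul_eq_mul]
    have hsplit : ∫ s in (D.D c)..q, D.P s
        = (∫ s in (D.D c)..m, D.P s) + ∫ s in m..q, D.P s := by
      rw [intervalIntegral.integral_add_adjacent_intervals (D.P_intInt hd hmmem)
        (D.P_intInt hmmem hq)]
    have := D.V_sub hq hd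
    nlinarith

end Demand

lemma Env.θl_le_θu (E : Env) : E.θl ≤ E.θu := le_of_lt E.θlu

namespace Env

variable (E : Env)

@[simp] lemma DlDemand_D : E.DlDemand.D = E.Dl := rfl
@[simp] lemma DlDemand_P : E.DlDemand.P = E.Pl := rfl
@[simp] lemma DlDemand_V : E.DlDemand.V = E.Vl := rfl

lemma ql_spec : E.ql ∈ Icc (0:ℝ) E.qbar ∧ E.Pl E.ql = E.θu :=
  E.DlDemand.mem_inv (le_of_lt E.θlu) (le_refl _)

lemma ql_mem : E.ql ∈ Icc (0:ℝ) E.qbar := E.ql_spec.1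

lemma Pl_ql : E.Pl E.ql = E.θu := E.ql_spec.2

lemma ql_pos : 0 < E.ql := by
  rcases eq_or_lt_of_le E.ql_mem.1 with h | h
  · exfalso
    have := E.Pl_ql
    rw [← h] at this
    have := E.Pl0
    linarith
  · exact h

lemma ql_lt : E.ql < E.qbar := by
  have h1 : E.Dl E.θu ≤ E.Dl E.θl := by
    have := E.DlDemand.anti (le_of_lt E.θlu) E.DlDemand.Pq_le (le_of_lt E.Pl0)
    simpa using this
  have := E.Dl_lt
  rw [ql]
  linarith

lemma Vl_zero : E.Vl 0 = 0 := intervalIntegral.integral_same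

lemma Gstar_pos : 0 < E.Gstar := by
  have h := E.DlDemand.opt_strict (c := E.θu) (q := 0) (le_of_lt E.θlu) (le_refl _)
    ⟨le_refl _, le_of_lt E.qbar_pos⟩ (by exact ne_of_lt E.ql_pos)
  simp only [DlDemand_V, DlDemand_D] at h
  rw [E.Vl_zero] at h
  rw [Gstar]
  have : E.θu * (0:ℝ) = 0 := by ring
  rw [← ql] at h
  linarith [h]

end Env

namespace Demand

variable {E : Env} (D : Demand E)

lemma V_ge_Vl {x : ℝ} (hx : x ∈ Icc (0:ℝ) E.qbar) : E.Vl x ≤ D.V x := by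
  rw [Env.Vl, Demand.V]
  apply intervalIntegral.integral_mono_on hx.1
    (E.DlDemand.P_intInt ⟨le_refl _, le_of_lt E.qbar_pos⟩ hx)
    (D.P_intInt ⟨le_refl _, le_of_lt E.qbar_pos⟩ hx)
  intro s hs
  exact D.P_ge s ⟨hs.1, le_trans hs.2 hx.2⟩

/-- The welfare at `θu` under any demand is at least `G*`. -/
lemma Gstar_le : E.Gstar ≤ D.V (D.D E.θu) - E.θu * D.D E.θu := by
  have h1 : E.Vl E.ql ≤ D.V E.ql := D.V_ge_Vl E.ql_mem
  have h2 := D.opt (c := E.θu) (q := E.ql) (le_of_lt E.θlu) (le_refl _) E.ql_mem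
  rw [Env.Gstar]
  linarith

end Demand

/-- Abstract partitioning bound: if `G x − G y ≥ −(y−x)(r x − r y)` for all
`x ≤ y` in `[a,b]` and `r a − r b ≤ B`, then `G b ≤ G a`. -/
lemma partition_bound {a b B : ℝ} (hab : a ≤ b) (G r : ℝ → ℝ)
    (hrB : r a - r b ≤ B)
    (h2 : ∀ x y, a ≤ x → x ≤ y → y ≤ b → -((y - x) * (r x - r y)) ≤ G x - G y) :
    G b ≤ G a := by
  refine le_of_forall_pos_le_add fun ε hε => ?_
  obtain ⟨n, hn⟩ := exists_nat_gt ((b - a) * |B| / ε)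
  have hn1 : (0:ℝ) < (n:ℝ) + 1 := by positivity
  set Δ := (b - a) / (n + 1) with hΔ
  have hΔ0 : 0 ≤ Δ := div_nonneg (by linarith) (le_of_lt hn1)
  set x : ℕ → ℝ := fun i => a + i * Δ with hx
  have hx0 : x 0 = a := by simp [hx]
  have hab' : a + ((n:ℝ) + 1) * Δ = b := by
    rw [hΔ]; field_simp; ring
  have hxn : x (n + 1) = b := by
    rw [hx]; push_cast; exact hab'
  have hxmem : ∀ i : ℕ, i ≤ n + 1 → a ≤ x i ∧ x i ≤ b := by
    intro i hi
    constructor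
    · have : (0:ℝ) ≤ i * Δ := mul_nonneg (Nat.cast_nonneg i) hΔ0
      simp only [hx]; linarith
    · have h1 : (i:ℝ) * Δ ≤ ((n:ℝ)+1) * Δ := by
        apply mul_le_mul_of_nonneg_right _ hΔ0
        exact_mod_cast hi
      simp only [hx]; linarith
  have hstep : ∀ i : ℕ, x (i+1) - x i = Δ := by
    intro i; simp only [hx]; push_cast; ring
  have key : ∀ i ∈ Finset.range (n + 1),
      -(Δ * (r (x i) - r (x (i+1)))) ≤ G (x i) - G (x (i+1)) := by
    intro i hi
    rw [Finset.mem_range] at hi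
    have h1 := hxmem i (by omega)
    have h2' := hxmem (i+1) (by omega)
    have hle : x i ≤ x (i+1) := by
      have := hstep i; linarith
    have hh := h2 (x i) (x (i+1)) h1.1 hle h2'.2
    rwa [hstep i] at hh
  have hsum := Finset.sum_le_sum key
  have l1 : ∑ i ∈ Finset.range (n+1), -(Δ * (r (x i) - r (x (i+1))))
      = -(Δ * (r a - r b)) := by
    rw [Finset.sum_neg_distrib, ← Finset.mul_sum,
      Finset.sum_range_sub' (fun i => r (x i)), hx0, hxn]
  have l2 : ∑ i ∈ Finset.range (n+1), (G (x i) - G (x (i+1)))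
      = G a - G b := by
    rw [Finset.sum_range_sub' (fun i => G (x i)), hx0, hxn]
  rw [l1, l2] at hsum
  have hΔB : Δ * B ≤ ε := by
    have h1 : Δ * B ≤ Δ * |B| := mul_le_mul_of_nonneg_left (le_abs_self B) hΔ0
    have h2 : (b - a) * |B| < ε * ((n:ℝ)+1) := by
      rw [div_lt_iff₀ hε] at hn
      nlinarith
    have h3 : Δ * |B| < ε := by
      rw [hΔ, div_mul_eq_mul_div, div_lt_iff₀ hn1]
      linarith
    linarith
  have : Δ * (r a - r b) ≤ Δ * B := mul_le_mul_of_nonneg_left hrB hΔ0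
  linarith

/-- Lower Riemann bound: if `u x − u y ≥ (y−x) g y` for `x ≤ y` (an EPIC-type
condition) and `g` is antitone, then `u a − u b ≥ ∫_a^b g`. -/
lemma riemann_lower {a b : ℝ} (hab : a ≤ b) (u g : ℝ → ℝ)
    (hanti : AntitoneOn g (Icc a b))
    (hstep : ∀ x y, a ≤ x → x ≤ y → y ≤ b → (y - x) * g y ≤ u x - u y) :
    ∫ s in a..b, g s ≤ u a - u b := by
  have hint : ∀ x y, x ∈ Icc a b → y ∈ Icc a b →
      IntervalIntegrable g MeasureTheory.volume x y := fun x y hx hy =>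
    (hanti.mono (Set.uIcc_subset_Icc hx hy)).intervalIntegrable
  have hmem : a ∈ Icc a b := ⟨le_refl _, hab⟩
  have hG := partition_bound (B := g a - g b) hab
    (fun x => u x + ∫ s in a..x, g s) g (le_refl _) ?_
  · have h0 : (∫ s in a..a, g s) = 0 := intervalIntegral.integral_same
    rw [h0] at hG
    linarith
  · intro x y hax hxy hyb
    have hx : x ∈ Icc a b := ⟨hax, le_trans hxy hyb⟩
    have hy : y ∈ Icc a b := ⟨le_trans hax hxy, hyb⟩
    have hsplit : (∫ s in a..y, g s) = (∫ s in a..x, g s) + ∫ s in x..y, g s :=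
      (intervalIntegral.integral_add_adjacent_intervals (hint a x hmem hx)
        (hint x y hx hy)).symm
    have hbound : (∫ s in x..y, g s) ≤ (y - x) * g x := by
      calc (∫ s in x..y, g s) ≤ ∫ _ in x..y, g x := by
            apply intervalIntegral.integral_mono_on hxy (hint x y hx hy)
              intervalIntegrable_const
            intro s hs
            exact hanti hx ⟨le_trans hax hs.1, le_trans hs.2 hyb⟩ hs.1
      _ = (y - x) * g x := by rw [intervalIntegral.integral_const, smul_eq_mul]
    have h1 := hstep x y hax hxy hyb
    rw [hsplit]
    nlinarith

namespace Demand

variable {E : Env} (D : Demand E)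

lemma integral_P_ge {x y : ℝ} (hx : x ∈ Icc (0:ℝ) E.qbar) (hy : y ∈ Icc (0:ℝ) E.qbar)
    (hxy : y ≤ x) : (x - y) * D.P x ≤ ∫ s in y..x, D.P s := by
  calc (x - y) * D.P x = ∫ _ in y..x, D.P x := by
        rw [intervalIntegral.integral_const, smul_eq_mul]
  _ ≤ ∫ s in y..x, D.P s := by
        apply intervalIntegral.integral_mono_on hxy intervalIntegrable_const (D.P_intInt hy hx)
        intro s hs
        rcases eq_or_lt_of_le hs.2 with he | hlt
        · rw [he]
        · exact le_of_lt (D.P_anti ⟨le_trans hy.1 hs.1, le_trans hs.2 hx.2⟩ hx hlt)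

/-- Monotonicity of ex-post welfare along prices above cost:
`V(q(θu)) − θu q(θu) ≤ V(q(a)) − a q(a) − ∫_a^{θu} q` for `q = D ∘ p`. -/
lemma welfare_antitone {a : ℝ} (p : ℝ → ℝ)
    (ha : E.θl ≤ a) (hab : a ≤ E.θu)
    (hp : ∀ θ, a ≤ θ → θ ≤ E.θu → E.θl ≤ p θ ∧ p θ ≤ E.θu ∧ θ ≤ p θ)
    (hq : ∀ x y, a ≤ x → x ≤ y → y ≤ E.θu → D.D (p y) ≤ D.D (p x)) :
    D.V (D.D (p E.θu)) - E.θu * D.D (p E.θu)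
      ≤ D.V (D.D (p a)) - a * D.D (p a) - ∫ s in a..E.θu, D.D (p s) := by
  set q : ℝ → ℝ := fun θ => D.D (p θ) with hqdef
  have hqanti : AntitoneOn q (Icc a E.θu) := fun x hx y hy hxy => hq x y hx.1 hxy hy.2
  have hint : ∀ x y, x ∈ Icc a E.θu → y ∈ Icc a E.θu →
      IntervalIntegrable q MeasureTheory.volume x y := fun x y hx hy =>
    (hqanti.mono (Set.uIcc_subset_Icc hx hy)).intervalIntegrable
  have hqmem : ∀ θ, a ≤ θ → θ ≤ E.θu → q θ ∈ Icc (0:ℝ) E.qbar ∧ D.P (q θ) = p θ := by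
    intro θ h1 h2
    obtain ⟨hl, hu, _⟩ := hp θ h1 h2
    exact D.mem_inv hl hu
  have hG := partition_bound (B := q a - q E.θu) hab
    (fun θ => D.V (q θ) - θ * q θ - ∫ s in θ..E.θu, q s) q (le_refl _) ?_
  · have h0 : (∫ s in E.θu..E.θu, q s) = 0 := intervalIntegral.integral_same
    rw [h0] at hG
    simp only [hqdef] at hG
    linarith
  · intro x y hax hxy hyb
    have hx : x ∈ Icc a E.θu := ⟨hax, le_trans hxy hyb⟩
    have hy : y ∈ Icc a E.θu := ⟨le_trans hax hxy, hyb⟩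
    obtain ⟨hqx, hPx⟩ := hqmem x hax (le_trans hxy hyb)
    obtain ⟨hqy, hPy⟩ := hqmem y (le_trans hax hxy) hyb
    have hqyx : q y ≤ q x := hq x y hax hxy hyb
    -- value difference bound
    have hV : (q x - q y) * p x ≤ D.V (q x) - D.V (q y) := by
      have := D.integral_P_ge hqx hqy hqyx
      rw [hPx] at this
      rw [D.V_sub hqx hqy]
      exact this
    -- integral splitting
    have hsplit : (∫ s in x..E.θu, q s) = (∫ s in x..y, q s) + ∫ s in y..E.θu, q s :=
      (intervalIntegral.integral_add_adjacent_intervals (hint x y hx hy)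
        (hint y E.θu hy ⟨le_trans (le_trans hax hxy) hyb, le_refl _⟩)).symm
    have hbound : (∫ s in x..y, q s) ≤ (y - x) * q x := by
      calc (∫ s in x..y, q s) ≤ ∫ _ in x..y, q x := by
            apply intervalIntegral.integral_mono_on hxy (hint x y hx hy)
              intervalIntegrable_const
            intro s hs
            exact hqanti hx ⟨le_trans hax hs.1, le_trans hs.2 hyb⟩ hs.1
      _ = (y - x) * q x := by rw [intervalIntegral.integral_const, smul_eq_mul]
    have hpx : x ≤ p x := (hp x hax (le_trans hxy hyb)).2.2
    rw [hsplit]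
    nlinarith
end Demand

namespace Demand

variable {E : Env} (D : Demand E)

lemma mem_univ (x : ℝ) : D.D x ∈ Icc (0:ℝ) E.qbar := by
  rcases lt_or_ge x (D.P E.qbar) with h | h
  · rw [D.D_low x h]
    exact ⟨le_of_lt E.qbar_pos, le_refl _⟩
  · rcases le_or_gt x (D.P 0) with h2 | h2
    · exact (D.D_inv x h h2).1
    · rw [D.D_high x h2]
      exact ⟨le_refl _, le_of_lt E.qbar_pos⟩

end Demand

namespace Env

variable (E : Env)

/-- Clamping into `Θ`. -/
def clamp (θ : ℝ) : ℝ := max E.θl (min θ E.θu)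

lemma clamp_mem (θ : ℝ) : E.clamp θ ∈ E.Θ := by
  constructor
  · exact le_max_left _ _
  · rw [clamp]
    exact max_le (le_of_lt E.θlu) (min_le_right _ _)

lemma clamp_eq {θ : ℝ} (hθ : θ ∈ E.Θ) : E.clamp θ = θ := by
  rw [clamp, min_eq_left hθ.2, max_eq_right hθ.1]

lemma clamp_mono : Monotone E.clamp := fun x y hxy =>
  max_le_max (le_refl _) (min_le_min hxy (le_refl _))

end Env

namespace Model

variable {E : Env} (Mo : Model E)

@[simp] lemma DstarDemand_D : Mo.DstarDemand.D = Mo.Dstar := rfl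
@[simp] lemma DstarDemand_P : Mo.DstarDemand.P = Mo.Pstar := rfl
@[simp] lemma DstarDemand_V : Mo.DstarDemand.V = Mo.Vstar := rfl

lemma f_intInt : IntervalIntegrable Mo.fstar MeasureTheory.volume E.θl E.θu := by
  by_contra h
  have h1 := Mo.Fstar_ac E.θu ⟨le_of_lt E.θlu, le_refl _⟩
  rw [intervalIntegral.integral_undef h, Mo.Fstar_u] at h1
  exact one_ne_zero h1

lemma f_intInt' {a b : ℝ} (ha : a ∈ E.Θ) (hb : b ∈ E.Θ) :
    IntervalIntegrable Mo.fstar MeasureTheory.volume a b :=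
  Mo.f_intInt.mono_set (by
    rw [Set.uIcc_of_le (le_of_lt E.θlu)]
    exact Set.uIcc_subset_Icc ha hb)

lemma Fstar_nonneg {θ : ℝ} (hθ : θ ∈ E.Θ) : 0 ≤ Mo.Fstar θ := by
  rw [Mo.Fstar_ac θ hθ]
  apply intervalIntegral.integral_nonneg hθ.1
  intro u hu
  exact le_of_lt (Mo.fstar_pos u ⟨hu.1, le_trans hu.2 hθ.2⟩)

lemma zstar_ge {θ : ℝ} (hθ : θ ∈ E.Θ) : θ ≤ Mo.zstar θ := by
  rw [zstar]
  have h1 := Mo.Fstar_nonneg hθ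
  have h2 := Mo.fstar_pos θ hθ
  have : 0 ≤ Mo.Fstar θ / Mo.fstar θ := div_nonneg h1 (le_of_lt h2)
  linarith

lemma zstar_u : E.θu < Mo.zstar E.θu := by
  rw [zstar, Mo.Fstar_u]
  have h2 := Mo.fstar_pos E.θu ⟨le_of_lt E.θlu, le_refl _⟩
  have : 0 < 1 / Mo.fstar E.θu := by positivity
  linarith

lemma Fstar_eq {θ : ℝ} (hθ : θ ∈ E.Θ) :
    Mo.Fstar θ = (Mo.zstar θ - θ) * Mo.fstar θ := by
  have h2 := ne_of_gt (Mo.fstar_pos θ hθ)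
  rw [zstar]
  field_simp
  ring

/-- The capped price `min{z*(θ), θu}`. -/
def pcap (θ : ℝ) : ℝ := min (Mo.zstar θ) E.θu

lemma pcap_mem {θ : ℝ} (hθ : θ ∈ E.Θ) :
    E.θl ≤ Mo.pcap θ ∧ Mo.pcap θ ≤ E.θu ∧ θ ≤ Mo.pcap θ := by
  refine ⟨?_, min_le_right _ _, ?_⟩
  · apply le_min (le_trans hθ.1 (Mo.zstar_ge hθ)) (le_of_lt E.θlu)
  · exact le_min (Mo.zstar_ge hθ) hθ.2

lemma pcap_mono : MonotoneOn Mo.pcap E.Θ := fun x hx y hy hxy =>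
  min_le_min (le_of_eq (by rfl) |>.trans ((Mo.zstar_mono.monotoneOn) hx hy hxy)) (le_refl _)

lemma pcap_u : Mo.pcap E.θu = E.θu :=
  min_eq_right (le_of_lt Mo.zstar_u)

/-- Globally defined BM price (clamped). -/
def pBM (θ : ℝ) : ℝ := Mo.pcap (E.clamp θ)

lemma pBM_eq {θ : ℝ} (hθ : θ ∈ E.Θ) : Mo.pBM θ = Mo.pcap θ := by
  rw [pBM, E.clamp_eq hθ]

lemma pBM_mono : Monotone Mo.pBM := fun x y hxy =>
  Mo.pcap_mono (E.clamp_mem x) (E.clamp_mem y) (E.clamp_mono hxy)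

lemma pBM_mem (θ : ℝ) : E.θl ≤ Mo.pBM θ ∧ Mo.pBM θ ≤ E.θu := by
  have := Mo.pcap_mem (E.clamp_mem θ)
  exact ⟨this.1, this.2.1⟩

lemma pBM_u : Mo.pBM E.θu = E.θu := by
  rw [Mo.pBM_eq ⟨le_of_lt E.θlu, le_refl _⟩, Mo.pcap_u]

lemma qBM_anti (D : Demand E) : Antitone (fun θ => D.D (Mo.pBM θ)) := by
  intro x y hxy
  exact D.anti (Mo.pBM_mono hxy) (le_trans D.Pq_le (Mo.pBM_mem x).1)
    (le_of_lt (lt_of_le_of_lt (Mo.pBM_mem y).2 D.P0))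

lemma qBM_mem (D : Demand E) (θ : ℝ) : D.D (Mo.pBM θ) ∈ Icc (0:ℝ) E.qbar :=
  (D.mem_inv (Mo.pBM_mem θ).1 (Mo.pBM_mem θ).2).1

lemma qBM_intInt (D : Demand E) (a b : ℝ) :
    IntervalIntegrable (fun θ => D.D (Mo.pBM θ)) MeasureTheory.volume a b :=
  Antitone.intervalIntegrable (Mo.qBM_anti D)

/-- The canonical BM transfer. -/
def tBM (θ : ℝ) (D : Demand E) : ℝ :=
  θ * D.D (Mo.pBM θ) + ∫ y in θ..E.θu, D.D (Mo.pBM y)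

lemma rent_tBM (θ : ℝ) (D : Demand E) :
    E.rent Mo.pBM Mo.tBM θ D = ∫ y in θ..E.θu, D.D (Mo.pBM y) := by
  rw [Env.rent, tBM]; ring

/-- The canonical BM regulation is a Baron–Myerson-with-price-cap regulation. -/
lemma isBM : Mo.IsBMPriceCap Mo.pBM Mo.tBM := by
  have hrent := Mo.rent_tBM
  have hEPIC : E.EPIC Mo.pBM Mo.tBM := by
    intro θ hθ θ' hθ' D
    have hsplit : (∫ y in θ..E.θu, D.D (Mo.pBM y))
        = (∫ y in θ..θ', D.D (Mo.pBM y)) + ∫ y in θ'..E.θu, D.D (Mo.pBM y) :=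
      (intervalIntegral.integral_add_adjacent_intervals (Mo.qBM_intInt D θ θ')
        (Mo.qBM_intInt D θ' E.θu)).symm
    have hkey : (θ' - θ) * D.D (Mo.pBM θ') ≤ ∫ y in θ..θ', D.D (Mo.pBM y) := by
      rcases le_or_gt θ θ' with h | h
      · calc (θ' - θ) * D.D (Mo.pBM θ') = ∫ _ in θ..θ', D.D (Mo.pBM θ') := by
              rw [intervalIntegral.integral_const, smul_eq_mul]
        _ ≤ ∫ y in θ..θ', D.D (Mo.pBM y) := by
              apply intervalIntegral.integral_mono_on h intervalIntegrable_const
                (Mo.qBM_intInt D θ θ')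
              intro s hs
              exact Mo.qBM_anti D hs.2
      · rw [intervalIntegral.integral_symm]
        have : (∫ y in θ'..θ, D.D (Mo.pBM y)) ≤ (θ - θ') * D.D (Mo.pBM θ') := by
          calc (∫ y in θ'..θ, D.D (Mo.pBM y)) ≤ ∫ _ in θ'..θ, D.D (Mo.pBM θ') := by
                apply intervalIntegral.integral_mono_on (le_of_lt h)
                  (Mo.qBM_intInt D θ' θ) intervalIntegrable_const
                intro s hs
                exact Mo.qBM_anti D hs.1
          _ = (θ - θ') * D.D (Mo.pBM θ') := by
                rw [intervalIntegral.integral_const, smul_eq_mul]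
        linarith
    have : Mo.tBM θ' D - θ * D.D (Mo.pBM θ') =
        (∫ y in θ'..E.θu, D.D (Mo.pBM y)) + (θ' - θ) * D.D (Mo.pBM θ') := by
      rw [tBM]; ring
    rw [this, hrent θ D, hsplit]
    linarith
  have hq_nonneg : ∀ θ D, θ ≤ E.θu → (0:ℝ) ≤ ∫ y in θ..E.θu, (D : Demand E).D (Mo.pBM y) := by
    intro θ D hθ
    apply intervalIntegral.integral_nonneg hθ
    intro u _
    exact (Mo.qBM_mem D u).1
  have hEPIR : E.EPIR Mo.pBM Mo.tBM := by
    intro θ hθ D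
    rw [hrent θ D]
    exact hq_nonneg θ D hθ.2
  refine ⟨⟨⟨?_, ?_⟩, hEPIC, hEPIR⟩, ?_, ?_, ?_, ?_, ?_⟩
  · intro θ hθ
    exact le_trans (le_of_lt E.θl_pos) (Mo.pBM_mem θ).1
  · intro θ hθ D
    rw [tBM]
    have h1 : 0 ≤ θ * D.D (Mo.pBM θ) :=
      mul_nonneg (le_trans (le_of_lt E.θl_pos) hθ.1) (Mo.qBM_mem D θ).1
    have h2 := hq_nonneg θ D hθ.2
    linarith
  · intro θ hθ
    rw [Mo.pBM_eq hθ, pcap]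
  · intro θ hθ D
    rw [hrent θ D, hrent E.θu D, intervalIntegral.integral_same]
    ring
  · intro D h1 h2
    rw [hrent E.θu D, intervalIntegral.integral_same]
    refine ⟨le_refl _, ?_⟩
    have := D.Gstar_le
    linarith
  · rw [hrent E.θu E.DlDemand, intervalIntegral.integral_same]
  · rw [hrent E.θu Mo.DstarDemand, intervalIntegral.integral_same]

end Model

namespace Env

variable (E : Env)

lemma measurableSet_Θ : MeasurableSet E.Θ := measurableSet_Icc

lemma isTech_dirac {θ : ℝ} (hθ : θ ∈ E.Θ) : E.IsTech (MeasureTheory.Measure.dirac θ) := by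
  refine ⟨inferInstance, ?_⟩
  rw [MeasureTheory.Measure.dirac_apply' _ E.measurableSet_Θ.compl]
  simp [hθ]

lemma wt_mem_Gt_set (p : ℝ → ℝ) (t : ℝ → Demand E → ℝ) {θ : ℝ} (hθ : θ ∈ E.Θ)
    (D : Demand E) :
    E.wt p t θ D ∈ {w : ℝ | ∃ (D : Demand E) (μ : MeasureTheory.Measure ℝ),
      E.IsTech μ ∧ w = E.Wt p t D μ} := by
  refine ⟨D, MeasureTheory.Measure.dirac θ, E.isTech_dirac hθ, ?_⟩
  rw [Env.Wt, MeasureTheory.integral_dirac (fun θ => E.wt p t θ D) θ]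

/-- The guarantee of any admissible price regulation is at most `G*`. -/
lemma Gt_le_Gstar {p : ℝ → ℝ} {t : ℝ → Demand E → ℝ} (hadm : E.IsAdmissiblePR p t) :
    E.Gt p t ≤ E.Gstar := by
  by_cases hbdd : BddBelow {w : ℝ | ∃ (D : Demand E) (μ : MeasureTheory.Measure ℝ),
      E.IsTech μ ∧ w = E.Wt p t D μ}
  · have hu : E.θu ∈ E.Θ := ⟨le_of_lt E.θlu, le_refl _⟩
    have hmem := E.wt_mem_Gt_set p t hu E.DlDemand
    have h1 : E.Gt p t ≤ E.wt p t E.θu E.DlDemand := csInf_le hbdd hmem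
    have h2 : E.wt p t E.θu E.DlDemand ≤ E.Gstar := by
      rw [Env.wt]
      have hrent := hadm.2.2 E.θu hu E.DlDemand
      have hopt := E.DlDemand.opt (c := E.θu) (q := E.DlDemand.D (p E.θu))
        (le_of_lt E.θlu) (le_refl _) (E.DlDemand.mem_univ (p E.θu))
      have hVq : E.DlDemand.V (E.DlDemand.D E.θu) = E.Vl E.ql := by
        simp [Env.ql]
      rw [hVq] at hopt
      simp only [DlDemand_D, DlDemand_V] at hopt ⊢
      rw [Env.Gstar]
      have hql : E.Dl E.θu = E.ql := rfl
      rw [hql] at hopt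
      linarith
    linarith
  · rw [Env.Gt, Real.sInf_of_not_bddBelow hbdd]
    exact le_of_lt E.Gstar_pos

end Env

namespace Model

variable {E : Env} (Mo : Model E)

/-- Pointwise robustness of a BM-with-price-cap regulation: ex-post welfare is at
least `G*` in every state. -/
lemma BM_wt_ge {p : ℝ → ℝ} {t : ℝ → Demand E → ℝ} (h : Mo.IsBMPriceCap p t)
    {θ : ℝ} (hθ : θ ∈ E.Θ) (D : Demand E) : E.Gstar ≤ E.wt p t θ D := by
  obtain ⟨hadm, hp, hrent, hbound, hDl, hDstar⟩ := h
  have hu : E.θu ∈ E.Θ := ⟨le_of_lt E.θlu, le_refl _⟩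
  -- the rent at the top is at most the slack
  have hru : E.rent p t E.θu D ≤ D.V (D.D E.θu) - E.θu * D.D E.θu - E.Gstar := by
    by_cases h1 : D = E.DlDemand
    · rw [h1, hDl]
      have := E.DlDemand.Gstar_le
      linarith
    · by_cases h2 : D = Mo.DstarDemand
      · rw [h2, hDstar]
        have := Mo.DstarDemand.Gstar_le
        linarith
      · exact (hbound D h1 h2).2
  -- properties of the price on [θ, θu]
  have hpmem : ∀ y, θ ≤ y → y ≤ E.θu → E.θl ≤ p y ∧ p y ≤ E.θu ∧ y ≤ p y := by
    intro y h1 h2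
    have hy : y ∈ E.Θ := ⟨le_trans hθ.1 h1, h2⟩
    rw [hp y hy]
    exact Mo.pcap_mem hy
  have hqanti : ∀ x y, θ ≤ x → x ≤ y → y ≤ E.θu → D.D (p y) ≤ D.D (p x) := by
    intro x y h1 h2 h3
    have hx : x ∈ E.Θ := ⟨le_trans hθ.1 h1, le_trans h2 h3⟩
    have hy : y ∈ E.Θ := ⟨le_trans hx.1 h2, h3⟩
    rw [hp x hx, hp y hy]
    exact D.anti (Mo.pcap_mono hx hy h2) (le_trans D.Pq_le (Mo.pcap_mem hx).1)
      (le_of_lt (lt_of_le_of_lt (Mo.pcap_mem hy).2.1 D.P0))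
  have hwa := D.welfare_antitone (a := θ) p hθ.1 hθ.2 hpmem hqanti
  have hpu : p E.θu = E.θu := by
    rw [hp E.θu hu]
    exact min_eq_right (le_of_lt Mo.zstar_u)
  rw [hpu] at hwa
  have hr := hrent θ hθ D
  rw [Env.wt, hr]
  linarith

/-- The guarantee of any BM-with-price-cap regulation is at least `G*`. -/
lemma Gstar_le_Gt {p : ℝ → ℝ} {t : ℝ → Demand E → ℝ} (h : Mo.IsBMPriceCap p t) :
    E.Gstar ≤ E.Gt p t := by
  have hl : E.θl ∈ E.Θ := ⟨le_refl _, le_of_lt E.θlu⟩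
  apply le_csInf ⟨_, E.wt_mem_Gt_set p t hl E.DlDemand⟩
  rintro w ⟨D, μ, ⟨hprob, hnull⟩, rfl⟩
  haveI := hprob
  -- nice representative of the ex-post welfare
  set q : ℝ → ℝ := fun y => D.D (Mo.pBM y) with hqdef
  have hVcont : ContinuousOn D.V (Icc (0:ℝ) E.qbar) := by
    have hP : MeasureTheory.IntegrableOn D.P (uIcc (0:ℝ) E.qbar) MeasureTheory.volume := by
      rw [Set.uIcc_of_le (le_of_lt E.qbar_pos)]
      exact D.P_cont.integrableOn_Icc
    have := intervalIntegral.continuousOn_primitive_interval hP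
    rwa [Set.uIcc_of_le (le_of_lt E.qbar_pos)] at this
  set Vc : ℝ → ℝ := fun x => D.V (max 0 (min x E.qbar)) with hVcdef
  have hclamp : Continuous fun x : ℝ => max 0 (min x E.qbar) := by
    fun_prop
  have hclamp_mem : ∀ x : ℝ, max 0 (min x E.qbar) ∈ Icc (0:ℝ) E.qbar := by
    intro x
    exact ⟨le_max_left _ _, max_le (le_of_lt E.qbar_pos) (min_le_right _ _)⟩
  have hVc : Continuous Vc := hVcont.comp_continuous hclamp hclamp_mem
  have hVc_eq : ∀ x ∈ Icc (0:ℝ) E.qbar, Vc x = D.V x := by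
    intro x hx
    rw [hVcdef]
    simp only
    rw [min_eq_left hx.2, max_eq_right hx.1]
  set I : ℝ → ℝ := fun θ => ∫ y in θ..E.θu, q y with hIdef
  have hI : Continuous I := by
    have h1 : Continuous fun x : ℝ => ∫ y in E.θu..x, q y :=
      intervalIntegral.continuous_primitive (fun a b => (Mo.qBM_intInt D a b)) E.θu
    have : I = fun θ => -∫ y in E.θu..θ, q y := by
      funext θ
      rw [hIdef]
      simp only
      rw [intervalIntegral.integral_symm]
    rw [this]
    exact h1.neg
  set c := E.rent p t E.θu D with hcdef
  set g : ℝ → ℝ := fun θ => Vc (q θ) - θ * q θ - I θ - c with hgdef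
  have hqmeas : Measurable q := (Mo.qBM_anti D).measurable
  have hgmeas : Measurable g := by
    apply Measurable.sub
    apply Measurable.sub
    apply Measurable.sub
    · exact hVc.measurable.comp hqmeas
    · exact measurable_id.mul hqmeas
    · exact hI.measurable
    · exact measurable_const
  -- g agrees with wt on Θ
  have hagree : ∀ θ ∈ E.Θ, E.wt p t θ D = g θ := by
    intro θ hθ
    have hpθ : p θ = Mo.pBM θ := by
      rw [h.2.1 θ hθ, Mo.pBM_eq hθ, pcap]
    have hrθ : E.rent p t θ D = c + ∫ y in θ..E.θu, q y := by
      rw [h.2.2.1 θ hθ, ← hcdef]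
      congr 1
      apply intervalIntegral.integral_congr
      intro y hy
      rw [Set.uIcc_of_le hθ.2] at hy
      have hyΘ : y ∈ E.Θ := ⟨le_trans hθ.1 hy.1, hy.2⟩
      rw [hqdef]
      simp only
      rw [h.2.1 y hyΘ, Mo.pBM_eq hyΘ, pcap]
    rw [Env.wt, hrθ, hgdef]
    simp only
    rw [hpθ, hVc_eq _ (Mo.qBM_mem D θ), hIdef]
    ring
  -- bound on Θ
  obtain ⟨KV, hKV⟩ := (isCompact_Icc : IsCompact (Icc (0:ℝ) E.qbar)).exists_bound_of_continuousOn
    hVc.continuousOn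
  have hbound : ∀ θ ∈ E.Θ, ‖g θ‖ ≤ KV + (|E.θl| + |E.θu|) * E.qbar + E.qbar * |E.θu - E.θl| + ‖c‖ := by
    intro θ hθ
    have hq1 := Mo.qBM_mem D θ
    have h1 : ‖Vc (q θ)‖ ≤ KV := hKV _ hq1
    have h2 : |θ * q θ| ≤ (|E.θl| + |E.θu|) * E.qbar := by
      rw [abs_mul]
      apply mul_le_mul _ _ (abs_nonneg _) (by positivity)
      · rcases abs_cases θ with ⟨he, _⟩ | ⟨he, _⟩ <;> rcases hθ with ⟨ha, hb⟩ <;>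
          cases abs_cases E.θl with
          | inl h => cases abs_cases E.θu with
            | inl h' => nlinarith
            | inr h' => nlinarith
          | inr h => cases abs_cases E.θu with
            | inl h' => nlinarith
            | inr h' => nlinarith
      · rw [abs_le]
        constructor <;> [linarith [hq1.1, hq1.2]; exact hq1.2]
    have h3 : ‖I θ‖ ≤ E.qbar * |E.θu - θ| := by
      rw [hIdef]
      apply intervalIntegral.norm_integral_le_of_norm_le_const
      intro y _
      have hqy : q y ∈ Icc (0:ℝ) E.qbar := Mo.qBM_mem D y
      rw [Real.norm_eq_abs, abs_le]
      exact ⟨by linarith [hqy.1, E.qbar_pos], hqy.2⟩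
    have h3' : E.qbar * |E.θu - θ| ≤ E.qbar * |E.θu - E.θl| := by
      apply mul_le_mul_of_nonneg_left _ (le_of_lt E.qbar_pos)
      rw [abs_of_nonneg (by linarith [hθ.2] : (0:ℝ) ≤ E.θu - θ),
        abs_of_nonneg (by linarith [E.θlu] : (0:ℝ) ≤ E.θu - E.θl)]
      linarith [hθ.1]
    rw [hgdef]
    simp only
    calc ‖Vc (q θ) - θ * q θ - I θ - c‖
        ≤ ‖Vc (q θ)‖ + ‖θ * q θ‖ + ‖I θ‖ + ‖c‖ := by
          have := norm_sub_le (Vc (q θ) - θ * q θ - I θ) c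
          have := norm_sub_le (Vc (q θ) - θ * q θ) (I θ)
          have := norm_sub_le (Vc (q θ)) (θ * q θ)
          linarith
    _ ≤ KV + (|E.θl| + |E.θu|) * E.qbar + E.qbar * |E.θu - E.θl| + ‖c‖ := by
          have h2' : ‖θ * q θ‖ ≤ (|E.θl| + |E.θu|) * E.qbar := h2
          linarith [le_trans h3 h3']
  -- almost-everywhere membership in Θ
  have hae : ∀ᵐ θ ∂μ, θ ∈ E.Θ := by
    rw [MeasureTheory.ae_iff]
    exact hnull
  have hint : MeasureTheory.Integrable g μ := by
    apply MeasureTheory.Integrable.mono'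
      (MeasureTheory.integrable_const
        (KV + (|E.θl| + |E.θu|) * E.qbar + E.qbar * |E.θu - E.θl| + ‖c‖))
      hgmeas.aestronglyMeasurable
    exact hae.mono fun θ hθ => hbound θ hθ
  have heq : E.Wt p t D μ = ∫ θ, g θ ∂μ := by
    rw [Env.Wt]
    exact MeasureTheory.integral_congr_ae (hae.mono fun θ hθ => hagree θ hθ)
  rw [heq]
  calc E.Gstar = ∫ _, E.Gstar ∂μ := by
        rw [MeasureTheory.integral_const]
        simp [hprob.measure_univ]
  _ ≤ ∫ θ, g θ ∂μ := by
        apply MeasureTheory.integral_mono_ae (MeasureTheory.integrable_const _) hint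
        exact hae.mono fun θ hθ => by
          rw [← hagree θ hθ]
          exact Mo.BM_wt_ge h hθ D

end Model

open MeasureTheory in
/-- Fubini / integration by parts: `∫ (∫_θ^b q) f(θ) dθ = ∫ q(y) (∫_a^y f) dy`. -/
lemma fubini_parts {a b B : ℝ} (hab : a ≤ b) (q f : ℝ → ℝ) (hq : Antitone q)
    (hf : IntervalIntegrable f MeasureTheory.volume a b) (hqb : ∀ y, |q y| ≤ B) :
    ∫ θ in a..b, (∫ y in θ..b, q y) * f θ
      = ∫ y in a..b, q y * (∫ s in a..y, f s) := by
  set μ0 := MeasureTheory.volume.restrict (Ioc a b) with hμ0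
  haveI : IsFiniteMeasure μ0 := by
    constructor
    rw [hμ0, Measure.restrict_apply_univ]
    exact measure_Ioc_lt_top
  have hfi : Integrable f μ0 := by
    rw [hμ0]
    exact (intervalIntegrable_iff_integrableOn_Ioc_of_le hab).mp hf
  have hqm : Measurable q := hq.measurable
  have hqi : Integrable q μ0 := by
    apply Integrable.mono' (integrable_const B) hqm.aestronglyMeasurable
    exact Filter.Eventually.of_forall fun y => hqb y
  set s : Set (ℝ × ℝ) := {z : ℝ × ℝ | z.1 < z.2} with hs
  have hsm : MeasurableSet s := measurableSet_lt measurable_fst measurable_snd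
  set K : ℝ × ℝ → ℝ := s.indicator (fun z => q z.2 * f z.1) with hK
  have hKint : Integrable K (μ0.prod μ0) := by
    apply Integrable.indicator _ hsm
    have h1 : Integrable (fun z : ℝ × ℝ => f z.1 * q z.2) (μ0.prod μ0) :=
      hfi.mul_prod hqi
    have : (fun z : ℝ × ℝ => q z.2 * f z.1) = fun z : ℝ × ℝ => f z.1 * q z.2 := by
      funext z; ring
    rw [this]
    exact h1
  have hswap : ∫ θ, (∫ y, K (θ, y) ∂μ0) ∂μ0 = ∫ y, (∫ θ, K (θ, y) ∂μ0) ∂μ0 := by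
    exact MeasureTheory.integral_integral_swap (f := fun θ y => K (θ, y)) hKint
  -- inner integral in y
  have hinner1 : ∀ θ ∈ Ioc a b, (∫ y, K (θ, y) ∂μ0) = (∫ y in θ..b, q y) * f θ := by
    intro θ hθ
    have h1 : (fun y => K (θ, y)) = (Ioi θ).indicator (fun y => q y * f θ) := by
      funext y
      rw [hK]
      by_cases hy : θ < y
      · rw [Set.indicator_of_mem (by exact hy : y ∈ Ioi θ),
          Set.indicator_of_mem (by exact hy : (θ, y) ∈ s)]
      · rw [Set.indicator_of_notMem (by exact hy : y ∉ Ioi θ),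
          Set.indicator_of_notMem (by exact hy : (θ, y) ∉ s)]
    rw [h1, MeasureTheory.integral_indicator measurableSet_Ioi]
    rw [hμ0, Measure.restrict_restrict measurableSet_Ioi]
    have h2 : Ioi θ ∩ Ioc a b = Ioc θ b := by
      ext z
      simp only [mem_inter_iff, mem_Ioi, mem_Ioc]
      constructor
      · rintro ⟨h1', h2', h3'⟩
        exact ⟨h1', h3'⟩
      · rintro ⟨h1', h2'⟩
        exact ⟨h1', lt_trans hθ.1 h1', h2'⟩
    rw [h2, MeasureTheory.integral_mul_const, intervalIntegral.integral_of_le hθ.2]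
  have hinner2 : ∀ y ∈ Ioc a b, (∫ θ, K (θ, y) ∂μ0) = q y * (∫ s in a..y, f s) := by
    intro y hy
    have h1 : (fun θ => K (θ, y)) = (Iio y).indicator (fun θ => q y * f θ) := by
      funext θ
      rw [hK]
      by_cases hθ : θ < y
      · rw [Set.indicator_of_mem (by exact hθ : θ ∈ Iio y),
          Set.indicator_of_mem (by exact hθ : (θ, y) ∈ s)]
      · rw [Set.indicator_of_notMem (by exact hθ : θ ∉ Iio y),
          Set.indicator_of_notMem (by exact hθ : (θ, y) ∉ s)]
    rw [h1, MeasureTheory.integral_indicator measurableSet_Iio]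
    rw [hμ0, Measure.restrict_restrict measurableSet_Iio]
    have h2 : Iio y ∩ Ioc a b = Ioo a y := by
      ext z
      simp only [mem_inter_iff, mem_Iio, mem_Ioc, mem_Ioo]
      constructor
      · rintro ⟨h1', h2', h3'⟩
        exact ⟨h2', h1'⟩
      · rintro ⟨h1', h2'⟩
        exact ⟨h2', h1', le_trans (le_of_lt h2') hy.2⟩
    rw [h2, MeasureTheory.integral_const_mul, ← MeasureTheory.integral_Ioc_eq_integral_Ioo,
      intervalIntegral.integral_of_le hy.1.le]
  -- put together
  rw [intervalIntegral.integral_of_le hab, intervalIntegral.integral_of_le hab]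
  have e1 : ∫ θ, (∫ y in θ..b, q y) * f θ ∂μ0 = ∫ θ, (∫ y, K (θ, y) ∂μ0) ∂μ0 :=
    MeasureTheory.integral_congr_ae ((MeasureTheory.ae_restrict_mem measurableSet_Ioc).mono
      fun θ hθ => (hinner1 θ hθ).symm)
  have e2 : ∫ y, q y * (∫ s in a..y, f s) ∂μ0 = ∫ y, (∫ θ, K (θ, y) ∂μ0) ∂μ0 :=
    MeasureTheory.integral_congr_ae ((MeasureTheory.ae_restrict_mem measurableSet_Ioc).mono
      fun y hy => (hinner2 y hy).symm)
  rw [hμ0] at e1 e2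
  rw [e1, e2, ← hμ0, hswap]

namespace Env

variable {E : Env}

lemma clamp_cont (E : Env) : Continuous E.clamp := by
  have h : E.clamp = fun θ => max E.θl (min θ E.θu) := rfl
  rw [h]
  fun_prop

/-- EPIC implies the realized quantity is antitone in the report. -/
lemma epic_anti {p : ℝ → ℝ} {t : ℝ → Demand E → ℝ} (hE : E.EPIC p t) (D : Demand E)
    {x y : ℝ} (hx : x ∈ E.Θ) (hy : y ∈ E.Θ) (hxy : x ≤ y) : D.D (p y) ≤ D.D (p x) := by
  rcases eq_or_lt_of_le hxy with rfl | hlt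
  · exact le_refl _
  · have h1 := hE x hx y hy D
    have h2 := hE y hy x hx D
    rw [Env.rent] at h1 h2
    nlinarith

/-- EPIC implies the rent is `qbar`-Lipschitz on `Θ`. -/
lemma rent_lipschitz {p : ℝ → ℝ} {t : ℝ → Demand E → ℝ} (hE : E.EPIC p t) (D : Demand E)
    {x y : ℝ} (hx : x ∈ E.Θ) (hy : y ∈ E.Θ) :
    |E.rent p t x D - E.rent p t y D| ≤ E.qbar * |x - y| := by
  have key : ∀ a b, a ∈ E.Θ → b ∈ E.Θ → a ≤ b →
      E.rent p t a D - E.rent p t b D ≤ E.qbar * (b - a) ∧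
      0 ≤ E.rent p t a D - E.rent p t b D := by
    intro a b ha hb hab
    have h1 := hE a ha b hb D
    have h2 := hE b hb a ha D
    simp only [Env.rent] at h1 h2
    have hqa := D.mem_univ (p a)
    have hqb := D.mem_univ (p b)
    simp only [Env.rent]
    constructor
    · nlinarith [hqa.1, hqa.2, hb.1, ha.1, E.θl_pos]
    · nlinarith [hqb.1, hb.1, ha.1, E.θl_pos]
  rcases le_total x y with h | h
  · obtain ⟨h1, h2⟩ := key x y hx hy h
    rw [abs_of_nonneg h2, abs_of_nonpos (by linarith : x - y ≤ 0)]
    linarith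
  · obtain ⟨h1, h2⟩ := key y x hy hx h
    rw [abs_of_nonpos (by linarith : E.rent p t x D - E.rent p t y D ≤ 0),
      abs_of_nonneg (by linarith : 0 ≤ x - y)]
    linarith

lemma rent_cont {p : ℝ → ℝ} {t : ℝ → Demand E → ℝ} (hE : E.EPIC p t) (D : Demand E) :
    Continuous (fun θ => E.rent p t (E.clamp θ) D) := by
  have hlip : LipschitzOnWith (Real.toNNReal E.qbar) (fun θ => E.rent p t θ D) E.Θ := by
    apply LipschitzOnWith.of_dist_le_mul
    intro x hx y hy
    rw [Real.dist_eq, Real.dist_eq]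
    have := E.rent_lipschitz hE D hx hy
    calc |E.rent p t x D - E.rent p t y D| ≤ E.qbar * |x - y| := this
    _ ≤ (Real.toNNReal E.qbar : ℝ) * |x - y| := by
        apply mul_le_mul_of_nonneg_right _ (abs_nonneg _)
        exact le_max_left _ _
  exact hlip.continuousOn.comp_continuous E.clamp_cont E.clamp_mem

/-- EPIC+EPIR implies the rent is bounded below by the information rent integral. -/
lemma rent_lower {p : ℝ → ℝ} {t : ℝ → Demand E → ℝ} (hE : E.EPIC p t) (hI : E.EPIR p t)
    (D : Demand E) {θ : ℝ} (hθ : θ ∈ E.Θ) :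
    (∫ y in θ..E.θu, D.D (p y)) ≤ E.rent p t θ D := by
  have hu : E.θu ∈ E.Θ := ⟨le_of_lt E.θlu, le_refl _⟩
  have h := riemann_lower hθ.2 (fun y => E.rent p t y D) (fun y => D.D (p y)) ?_ ?_
  · have h2 := hI E.θu hu D
    linarith
  · intro x hx y hy hxy
    exact E.epic_anti hE D ⟨le_trans hθ.1 hx.1, hx.2⟩ ⟨le_trans hθ.1 hy.1, hy.2⟩ hxy
  · intro x y hx hxy hyb
    have hxΘ : x ∈ E.Θ := ⟨le_trans hθ.1 hx, le_trans hxy hyb⟩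
    have hyΘ : y ∈ E.Θ := ⟨le_trans hxΘ.1 hxy, hyb⟩
    have h1 := hE x hxΘ y hyΘ D
    simp only [Env.rent] at h1 ⊢
    nlinarith

/-- Pointwise robustness pins the top price to `θu` and caps prices at `θu`. -/
lemma price_cap {p : ℝ → ℝ} {t : ℝ → Demand E → ℝ} (hadm : E.IsAdmissiblePR p t)
    (hR : ∀ θ ∈ E.Θ, E.Gstar ≤ E.wt p t θ E.DlDemand) :
    p E.θu = E.θu ∧ ∀ θ ∈ E.Θ, p θ ≤ E.θu := by
  have hu : E.θu ∈ E.Θ := ⟨le_of_lt E.θlu, le_refl _⟩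
  have hql : E.Dl (p E.θu) = E.ql := by
    by_contra hne
    have h1 := hR E.θu hu
    rw [Env.wt] at h1
    have h2 := hadm.2.2 E.θu hu E.DlDemand
    have h3 := E.DlDemand.opt_strict (c := E.θu) (q := E.DlDemand.D (p E.θu))
      (le_of_lt E.θlu) (le_refl _) (E.DlDemand.mem_univ (p E.θu)) hne
    simp only [DlDemand_D, DlDemand_V] at h1 h3
    have h4 : E.Dl E.θu = E.ql := rfl
    rw [Env.Gstar] at h1
    rw [h4] at h3
    linarith
  have hpu : p E.θu = E.θu := by
    rcases lt_or_ge (p E.θu) (E.Pl E.qbar) with h | h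
    · exfalso
      have := E.Dl_low (p E.θu) h
      rw [this] at hql
      exact absurd hql (ne_of_gt E.ql_lt)
    · rcases le_or_gt (p E.θu) (E.Pl 0) with h2 | h2
      · obtain ⟨_, hinv⟩ := E.Dl_inv (p E.θu) h h2
        rw [hql, E.Pl_ql] at hinv
        exact hinv.symm
      · exfalso
        have := E.Dl_high (p E.θu) h2
        rw [this] at hql
        exact absurd hql.symm (ne_of_gt E.ql_pos)
  refine ⟨hpu, ?_⟩
  intro θ hθ
  by_contra hgt
  push_neg at hgt
  have hanti : E.DlDemand.D (p E.θu) ≤ E.DlDemand.D (p θ) :=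
    E.epic_anti hadm.2.1 E.DlDemand hθ hu hθ.2
  have hanti' : E.ql ≤ E.Dl (p θ) := by
    have : E.DlDemand.D (p E.θu) = E.ql := hql
    rw [this] at hanti
    exact hanti
  -- so Dl (p θ) ≥ ql but price is above θu
  rcases le_or_gt (p θ) (E.Pl 0) with h2 | h2
  · have hrange : E.Pl E.qbar ≤ p θ := le_trans E.DlDemand.Pq_le (le_trans E.θl_le_θu (le_of_lt hgt))
    obtain ⟨hmem, hinv⟩ := E.Dl_inv (p θ) hrange h2
    have hql_mem : E.ql ∈ Icc (0:ℝ) E.qbar := E.ql_mem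
    -- Pl (Dl (p θ)) = p θ > θu = Pl ql, so Dl (p θ) < ql by antitonicity
    have hcon : E.Dl (p θ) < E.ql := by
      rcases eq_or_lt_of_le hanti' with he | hlt
      · exfalso
        have h5 : E.Pl (E.Dl (p θ)) = p θ := hinv
        rw [← he, E.Pl_ql] at h5
        rw [← h5] at hgt
        exact lt_irrefl _ hgt
      · exfalso
        have h5 := E.Pl_anti hql_mem hmem hlt
        rw [hinv, E.Pl_ql] at h5
        linarith
    linarith
  · have := E.Dl_high (p θ) h2
    rw [this] at hanti'
    have := E.ql_pos
    linarith

end Env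

namespace Demand

variable {E : Env} (D : Demand E)

/-- The value function composed with clamping to `[0, qbar]`. -/
def Vc (x : ℝ) : ℝ := D.V (max 0 (min x E.qbar))

lemma Vc_cont : Continuous D.Vc := by
  have hVcont : ContinuousOn D.V (Icc (0:ℝ) E.qbar) := by
    have hP : MeasureTheory.IntegrableOn D.P (uIcc (0:ℝ) E.qbar) MeasureTheory.volume := by
      rw [Set.uIcc_of_le (le_of_lt E.qbar_pos)]
      exact D.P_cont.integrableOn_Icc
    have := intervalIntegral.continuousOn_primitive_interval hP
    rwa [Set.uIcc_of_le (le_of_lt E.qbar_pos)] at this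
  have hclamp : Continuous fun x : ℝ => max 0 (min x E.qbar) := by fun_prop
  exact hVcont.comp_continuous hclamp fun x =>
    ⟨le_max_left _ _, max_le (le_of_lt E.qbar_pos) (min_le_right _ _)⟩

lemma Vc_eq {x : ℝ} (hx : x ∈ Icc (0:ℝ) E.qbar) : D.Vc x = D.V x := by
  rw [Vc, min_eq_left hx.2, max_eq_right hx.1]

lemma Vc_bdd : ∃ C, ∀ x, |D.Vc x| ≤ C := by
  obtain ⟨C, hC⟩ := (isCompact_Icc : IsCompact (Icc (0:ℝ) E.qbar)).exists_bound_of_continuousOn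
    D.Vc_cont.continuousOn
  refine ⟨C, fun x => ?_⟩
  have hmem : max 0 (min x E.qbar) ∈ Icc (0:ℝ) E.qbar :=
    ⟨le_max_left _ _, max_le (le_of_lt E.qbar_pos) (min_le_right _ _)⟩
  have h1 : D.Vc x = D.Vc (max 0 (min x E.qbar)) := by
    rw [D.Vc_eq hmem, Demand.Vc]
  rw [h1]
  exact hC _ hmem

end Demand

namespace Model

variable {E : Env} (Mo : Model E)

lemma zc_cont : Continuous (fun θ => Mo.zstar (E.clamp θ)) :=
  Mo.zstar_cont.comp_continuous E.clamp_cont E.clamp_mem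

/-- A bounded measurable function times the density is interval integrable. -/
lemma bdd_mul_intInt (g : ℝ → ℝ) (hmeas : Measurable g) {C : ℝ}
    (hbdd : ∀ θ ∈ Icc E.θl E.θu, |g θ| ≤ C) :
    IntervalIntegrable (fun θ => g θ * Mo.fstar θ) MeasureTheory.volume E.θl E.θu := by
  have hf := Mo.f_intInt
  constructor
  · apply MeasureTheory.Integrable.mono' (hf.1.abs.const_mul C)
      (hmeas.aestronglyMeasurable.mul hf.1.aestronglyMeasurable)
    apply (MeasureTheory.ae_restrict_mem measurableSet_Ioc).mono
    intro θ hθ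
    have hθ' : θ ∈ Icc E.θl E.θu := ⟨le_of_lt hθ.1, hθ.2⟩
    simp only [Pi.mul_apply]
    rw [Real.norm_eq_abs, abs_mul]
    exact mul_le_mul_of_nonneg_right (hbdd θ hθ') (abs_nonneg _)
  · rw [Set.Ioc_eq_empty (not_lt.mpr (le_of_lt E.θlu))]
    exact MeasureTheory.integrableOn_empty

/-- Pointwise virtual-surplus optimality of the capped BM quantity. -/
lemma ptwise_opt {θ q : ℝ} (hθ : θ ∈ E.Θ) (hq : q ∈ Icc (0:ℝ) E.qbar)
    (hqge : Mo.DstarDemand.D E.θu ≤ q) :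
    Mo.DstarDemand.V q - Mo.zstar θ * q
      ≤ Mo.DstarDemand.V (Mo.DstarDemand.D (Mo.pcap θ))
        - Mo.zstar θ * Mo.DstarDemand.D (Mo.pcap θ) := by
  rcases le_or_gt (Mo.zstar θ) E.θu with hz | hz
  · have hpc : Mo.pcap θ = Mo.zstar θ := min_eq_left hz
    rw [hpc]
    exact Mo.DstarDemand.opt (le_trans hθ.1 (Mo.zstar_ge hθ)) hz hq
  · have hpc : Mo.pcap θ = E.θu := min_eq_right (le_of_lt hz)
    rw [hpc]
    have hopt := Mo.DstarDemand.opt (c := E.θu) (le_of_lt E.θlu) (le_refl _) hq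
    nlinarith [hqge, hz]

/-- Strict version of `ptwise_opt`. -/
lemma ptwise_opt_strict {θ q : ℝ} (hθ : θ ∈ E.Θ) (hq : q ∈ Icc (0:ℝ) E.qbar)
    (hqge : Mo.DstarDemand.D E.θu ≤ q) (hne : q ≠ Mo.DstarDemand.D (Mo.pcap θ)) :
    Mo.DstarDemand.V q - Mo.zstar θ * q
      < Mo.DstarDemand.V (Mo.DstarDemand.D (Mo.pcap θ))
        - Mo.zstar θ * Mo.DstarDemand.D (Mo.pcap θ) := by
  rcases le_or_gt (Mo.zstar θ) E.θu with hz | hz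
  · have hpc : Mo.pcap θ = Mo.zstar θ := min_eq_left hz
    rw [hpc]
    rw [hpc] at hne
    exact Mo.DstarDemand.opt_strict (le_trans hθ.1 (Mo.zstar_ge hθ)) hz hq hne
  · have hpc : Mo.pcap θ = E.θu := min_eq_right (le_of_lt hz)
    rw [hpc]
    rw [hpc] at hne
    have hopt := Mo.DstarDemand.opt (c := E.θu) (le_of_lt E.θlu) (le_refl _) hq
    have hgt : Mo.DstarDemand.D E.θu < q := lt_of_le_of_ne hqge (Ne.symm hne)
    nlinarith [hz]

/-- The benchmark value: expected virtual surplus of the capped BM schedule. -/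
def JcN : ℝ :=
  ∫ θ in E.θl..E.θu,
    (Mo.DstarDemand.V (Mo.DstarDemand.D (Mo.pBM θ))
      - Mo.zstar (E.clamp θ) * Mo.DstarDemand.D (Mo.pBM θ)) * Mo.fstar θ

/-- The key integral identity turning information rents into virtual costs. -/
lemma integral_equal (q : ℝ → ℝ) (hq : Antitone q)
    (hq01 : ∀ θ, q θ ∈ Icc (0:ℝ) E.qbar) :
    ∫ θ in E.θl..E.θu,
        (Mo.DstarDemand.V (q θ) - θ * q θ - ∫ y in θ..E.θu, q y) * Mo.fstar θ
      = ∫ θ in E.θl..E.θu,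
        (Mo.DstarDemand.V (q θ) - Mo.zstar (E.clamp θ) * q θ) * Mo.fstar θ := by
  set Ds := Mo.DstarDemand with hDs
  obtain ⟨CV, hCV⟩ := Ds.Vc_bdd
  obtain ⟨Cz, hCz⟩ := (isCompact_Icc : IsCompact (Icc E.θl E.θu)).exists_bound_of_continuousOn
    (Mo.zc_cont.continuousOn)
  have hVcq : ∀ θ, Ds.V (q θ) = Ds.Vc (q θ) := fun θ => (Ds.Vc_eq (hq01 θ)).symm
  have hqmeas : Measurable q := hq.measurable
  set g1 : ℝ → ℝ := fun θ => Ds.Vc (q θ) - θ * q θ with hg1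
  set g2 : ℝ → ℝ := fun θ => ∫ y in θ..E.θu, q y with hg2
  set g3 : ℝ → ℝ := fun θ => q θ * (Mo.zstar (E.clamp θ) - θ) with hg3
  have hg1meas : Measurable g1 :=
    (Ds.Vc_cont.measurable.comp hqmeas).sub (measurable_id.mul hqmeas)
  have hg2cont : Continuous g2 := by
    have h1 : Continuous fun x : ℝ => ∫ y in E.θu..x, q y :=
      intervalIntegral.continuous_primitive (fun _ _ => hq.intervalIntegrable) E.θu
    have h2 : g2 = fun θ => -∫ y in E.θu..θ, q y := by
      funext θ
      exact intervalIntegral.integral_symm E.θu θ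
    rw [h2]
    exact h1.neg
  have hg3meas : Measurable g3 :=
    hqmeas.mul ((Mo.zc_cont.measurable).sub measurable_id)
  have habs : ∀ θ ∈ Icc E.θl E.θu, |θ| ≤ |E.θl| + |E.θu| := by
    intro θ hθ
    rcases abs_cases θ with ⟨he, _⟩ | ⟨he, _⟩ <;> rcases abs_cases E.θl with ⟨hl, _⟩ | ⟨hl, _⟩ <;>
      rcases abs_cases E.θu with ⟨hu, _⟩ | ⟨hu, _⟩ <;> rcases hθ with ⟨h1, h2⟩ <;> linarith
  have hg1bdd : ∀ θ ∈ Icc E.θl E.θu, |g1 θ| ≤ CV + (|E.θl| + |E.θu|) * E.qbar := by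
    intro θ hθ
    have h1 := hCV (q θ)
    have h2 : |θ * q θ| ≤ (|E.θl| + |E.θu|) * E.qbar := by
      rw [abs_mul]
      apply mul_le_mul (habs θ hθ) _ (abs_nonneg _) (by positivity)
      rw [abs_le]
      exact ⟨by linarith [(hq01 θ).1, E.qbar_pos], (hq01 θ).2⟩
    calc |g1 θ| ≤ |Ds.Vc (q θ)| + |θ * q θ| := abs_sub _ _
    _ ≤ CV + (|E.θl| + |E.θu|) * E.qbar := by linarith
  have hg2bdd : ∀ θ ∈ Icc E.θl E.θu, |g2 θ| ≤ E.qbar * (E.θu - E.θl) := by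
    intro θ hθ
    have h1 : |g2 θ| ≤ E.qbar * |E.θu - θ| := by
      show |∫ y in θ..E.θu, q y| ≤ E.qbar * |E.θu - θ|
      rw [← Real.norm_eq_abs]
      apply intervalIntegral.norm_integral_le_of_norm_le_const
      intro y _
      rw [Real.norm_eq_abs, abs_le]
      exact ⟨by linarith [(hq01 y).1, E.qbar_pos], (hq01 y).2⟩
    have h2 : |E.θu - θ| ≤ E.θu - E.θl := by
      rw [abs_of_nonneg (by linarith [hθ.2])]
      linarith [hθ.1]
    calc |g2 θ| ≤ E.qbar * |E.θu - θ| := h1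
    _ ≤ E.qbar * (E.θu - E.θl) := mul_le_mul_of_nonneg_left h2 (le_of_lt E.qbar_pos)
  have hg3bdd : ∀ θ ∈ Icc E.θl E.θu, |g3 θ| ≤ E.qbar * (Cz + (|E.θl| + |E.θu|)) := by
    intro θ hθ
    show |q θ * (Mo.zstar (E.clamp θ) - θ)| ≤ E.qbar * (Cz + (|E.θl| + |E.θu|))
    rw [abs_mul]
    apply mul_le_mul
    · rw [abs_le]
      exact ⟨by linarith [(hq01 θ).1, E.qbar_pos], (hq01 θ).2⟩
    · calc |Mo.zstar (E.clamp θ) - θ| ≤ |Mo.zstar (E.clamp θ)| + |θ| := abs_sub _ _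
      _ ≤ Cz + (|E.θl| + |E.θu|) := by
          have := hCz θ hθ
          have := habs θ hθ
          rw [Real.norm_eq_abs] at *
          linarith
    · exact abs_nonneg _
    · exact le_of_lt E.qbar_pos
  -- step 1: split
  have e0 : (fun θ => (Ds.V (q θ) - θ * q θ - ∫ y in θ..E.θu, q y) * Mo.fstar θ)
      = fun θ => g1 θ * Mo.fstar θ - g2 θ * Mo.fstar θ := by
    funext θ
    rw [hVcq θ]
    show (Ds.Vc (q θ) - θ * q θ - ∫ y in θ..E.θu, q y) * Mo.fstar θ
      = (Ds.Vc (q θ) - θ * q θ) * Mo.fstar θ - (∫ y in θ..E.θu, q y) * Mo.fstar θ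
    ring
  have e1 : ∫ θ in E.θl..E.θu,
      (Ds.V (q θ) - θ * q θ - ∫ y in θ..E.θu, q y) * Mo.fstar θ
      = (∫ θ in E.θl..E.θu, g1 θ * Mo.fstar θ) - ∫ θ in E.θl..E.θu, g2 θ * Mo.fstar θ := by
    rw [e0]
    exact intervalIntegral.integral_sub (Mo.bdd_mul_intInt g1 hg1meas hg1bdd)
      (Mo.bdd_mul_intInt g2 hg2cont.measurable hg2bdd)
  -- step 2: Fubini on the rent term
  have e2 : ∫ θ in E.θl..E.θu, g2 θ * Mo.fstar θ
      = ∫ y in E.θl..E.θu, q y * (∫ s in E.θl..y, Mo.fstar s) := by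
    exact fubini_parts (B := E.qbar) (le_of_lt E.θlu) q Mo.fstar hq Mo.f_intInt
      (fun y => by
        rw [abs_le]
        exact ⟨by linarith [(hq01 y).1, E.qbar_pos], (hq01 y).2⟩)
  have e3 : ∫ y in E.θl..E.θu, q y * (∫ s in E.θl..y, Mo.fstar s)
      = ∫ y in E.θl..E.θu, g3 y * Mo.fstar y := by
    apply intervalIntegral.integral_congr
    intro y hy
    rw [Set.uIcc_of_le (le_of_lt E.θlu)] at hy
    have hyΘ : y ∈ E.Θ := hy
    show q y * (∫ s in E.θl..y, Mo.fstar s) = q y * (Mo.zstar (E.clamp y) - y) * Mo.fstar y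
    rw [← Mo.Fstar_ac y hyΘ, Mo.Fstar_eq hyΘ, E.clamp_eq hyΘ]
    ring
  -- step 3: recombine
  have e4 : (∫ θ in E.θl..E.θu, g1 θ * Mo.fstar θ) - ∫ θ in E.θl..E.θu, g3 θ * Mo.fstar θ
      = ∫ θ in E.θl..E.θu, (g1 θ * Mo.fstar θ - g3 θ * Mo.fstar θ) :=
    (intervalIntegral.integral_sub (Mo.bdd_mul_intInt g1 hg1meas hg1bdd)
      (Mo.bdd_mul_intInt g3 hg3meas hg3bdd)).symm
  have e5 : (fun θ => g1 θ * Mo.fstar θ - g3 θ * Mo.fstar θ)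
      = fun θ => (Ds.V (q θ) - Mo.zstar (E.clamp θ) * q θ) * Mo.fstar θ := by
    funext θ
    rw [hVcq θ]
    show (Ds.Vc (q θ) - θ * q θ) * Mo.fstar θ - q θ * (Mo.zstar (E.clamp θ) - θ) * Mo.fstar θ
      = (Ds.Vc (q θ) - Mo.zstar (E.clamp θ) * q θ) * Mo.fstar θ
    ring
  rw [e1, e2, e3, e4, e5]

end Model

namespace Model

variable {E : Env} (Mo : Model E)

/-- Expected conjectured welfare of a BM-with-price-cap regulation equals `JcN`. -/
lemma WtStar_BM {p : ℝ → ℝ} {t : ℝ → Demand E → ℝ} (h : Mo.IsBMPriceCap p t) :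
    Mo.WtStar p t = Mo.JcN := by
  have hq01 : ∀ θ, Mo.DstarDemand.D (Mo.pBM θ) ∈ Icc (0:ℝ) E.qbar := Mo.qBM_mem _
  have key := Mo.integral_equal (fun θ => Mo.DstarDemand.D (Mo.pBM θ))
    (Mo.qBM_anti _) hq01
  beta_reduce at key
  have e1 : Mo.WtStar p t
      = ∫ θ in E.θl..E.θu,
          (Mo.DstarDemand.V (Mo.DstarDemand.D (Mo.pBM θ))
            - θ * Mo.DstarDemand.D (Mo.pBM θ)
            - ∫ y in θ..E.θu, Mo.DstarDemand.D (Mo.pBM y)) * Mo.fstar θ := by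
    rw [Model.WtStar]
    apply intervalIntegral.integral_congr
    intro θ hθ
    rw [Set.uIcc_of_le (le_of_lt E.θlu)] at hθ
    have hθΘ : θ ∈ E.Θ := hθ
    have hpθ : p θ = Mo.pBM θ := by
      rw [h.2.1 θ hθΘ, Mo.pBM_eq hθΘ, pcap]
    have hrent : E.rent p t θ Mo.DstarDemand
        = ∫ y in θ..E.θu, Mo.DstarDemand.D (Mo.pBM y) := by
      rw [h.2.2.1 θ hθΘ, h.2.2.2.2.2]
      rw [zero_add]
      apply intervalIntegral.integral_congr
      intro y hy
      rw [Set.uIcc_of_le hθΘ.2] at hy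
      have hyΘ : y ∈ E.Θ := ⟨le_trans hθΘ.1 hy.1, hy.2⟩
      show Mo.DstarDemand.D (p y) = Mo.DstarDemand.D (Mo.pBM y)
      rw [h.2.1 y hyΘ, Mo.pBM_eq hyΘ, pcap]
    show E.wt p t θ Mo.DstarDemand * Mo.fstar θ = _
    rw [Env.wt, hrent, hpθ]
  rw [e1, key, Model.JcN]

/-- Expected conjectured welfare of any pointwise-robust admissible regulation is at
most `JcN`. -/
lemma WtStar_le {p : ℝ → ℝ} {t : ℝ → Demand E → ℝ} (hadm : E.IsAdmissiblePR p t)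
    (hR : ∀ θ ∈ E.Θ, ∀ D : Demand E, E.Gstar ≤ E.wt p t θ D) :
    Mo.WtStar p t ≤ Mo.JcN := by
  obtain ⟨hpu, hcap⟩ := E.price_cap hadm (fun θ hθ => hR θ hθ E.DlDemand)
  set Ds := Mo.DstarDemand with hDs
  set qt : ℝ → ℝ := fun θ => Ds.D (p (E.clamp θ)) with hqt
  have hqtanti : Antitone qt := fun x y hxy =>
    E.epic_anti hadm.2.1 Ds (E.clamp_mem x) (E.clamp_mem y) (E.clamp_mono hxy)
  have hqt01 : ∀ θ, qt θ ∈ Icc (0:ℝ) E.qbar := fun θ => Ds.mem_univ _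
  have hqtmeas : Measurable qt := hqtanti.measurable
  set rc : ℝ → ℝ := fun θ => E.rent p t (E.clamp θ) Ds with hrc
  have hrccont : Continuous rc := E.rent_cont hadm.2.1 Ds
  set It : ℝ → ℝ := fun θ => ∫ y in θ..E.θu, qt y with hIt
  have hItcont : Continuous It := by
    have h1 : Continuous fun x : ℝ => ∫ y in E.θu..x, qt y :=
      intervalIntegral.continuous_primitive (fun _ _ => hqtanti.intervalIntegrable) E.θu
    have h2 : It = fun θ => -∫ y in E.θu..θ, qt y := by
      funext θ
      exact intervalIntegral.integral_symm E.θu θ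
    rw [h2]
    exact h1.neg
  obtain ⟨CV, hCV⟩ := Ds.Vc_bdd
  obtain ⟨Cr, hCr⟩ := (isCompact_Icc : IsCompact (Icc E.θl E.θu)).exists_bound_of_continuousOn
    hrccont.continuousOn
  obtain ⟨CI, hCI⟩ := (isCompact_Icc : IsCompact (Icc E.θl E.θu)).exists_bound_of_continuousOn
    hItcont.continuousOn
  obtain ⟨Cz, hCz⟩ := (isCompact_Icc : IsCompact (Icc E.θl E.θu)).exists_bound_of_continuousOn
    (Mo.zc_cont.continuousOn)
  have habs : ∀ θ ∈ Icc E.θl E.θu, |θ| ≤ |E.θl| + |E.θu| := by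
    intro θ hθ
    rcases abs_cases θ with ⟨he, _⟩ | ⟨he, _⟩ <;> rcases abs_cases E.θl with ⟨hl, _⟩ | ⟨hl, _⟩ <;>
      rcases abs_cases E.θu with ⟨hu, _⟩ | ⟨hu, _⟩ <;> rcases hθ with ⟨h1, h2⟩ <;> linarith
  have hqabs : ∀ (r : ℝ → ℝ), (∀ θ, r θ ∈ Icc (0:ℝ) E.qbar) →
      ∀ θ ∈ Icc E.θl E.θu, |Ds.Vc (r θ) - θ * r θ| ≤ CV + (|E.θl| + |E.θu|) * E.qbar := by
    intro r hr θ hθ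
    have h1 := hCV (r θ)
    have h2 : |θ * r θ| ≤ (|E.θl| + |E.θu|) * E.qbar := by
      rw [abs_mul]
      apply mul_le_mul (habs θ hθ) _ (abs_nonneg _) (by positivity)
      rw [abs_le]
      exact ⟨by linarith [(hr θ).1, E.qbar_pos], (hr θ).2⟩
    calc |Ds.Vc (r θ) - θ * r θ| ≤ |Ds.Vc (r θ)| + |θ * r θ| := abs_sub _ _
    _ ≤ CV + (|E.θl| + |E.θu|) * E.qbar := by linarith
  -- step 1 : rewrite WtStar with the clamped representative
  have e1 : Mo.WtStar p t
      = ∫ θ in E.θl..E.θu, (Ds.Vc (qt θ) - θ * qt θ - rc θ) * Mo.fstar θ := by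
    rw [Model.WtStar]
    apply intervalIntegral.integral_congr
    intro θ hθ
    rw [Set.uIcc_of_le (le_of_lt E.θlu)] at hθ
    have hθΘ : θ ∈ E.Θ := hθ
    show E.wt p t θ Ds * Mo.fstar θ = _
    rw [Env.wt]
    have h1 : Ds.D (p θ) = qt θ := by
      rw [hqt]
      simp only
      rw [E.clamp_eq hθΘ]
    have h2 : E.rent p t θ Ds = rc θ := by
      rw [hrc]
      simp only
      rw [E.clamp_eq hθΘ]
    rw [h1, h2]
    show (Ds.V (qt θ) - θ * qt θ - rc θ) * Mo.fstar θ
      = (Ds.Vc (qt θ) - θ * qt θ - rc θ) * Mo.fstar θ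
    rw [Ds.Vc_eq (hqt01 θ)]
  -- step 2 : rent is at least the information rent
  have e2 : (∫ θ in E.θl..E.θu, (Ds.Vc (qt θ) - θ * qt θ - rc θ) * Mo.fstar θ)
      ≤ ∫ θ in E.θl..E.θu, (Ds.Vc (qt θ) - θ * qt θ - It θ) * Mo.fstar θ := by
    apply intervalIntegral.integral_mono_on (le_of_lt E.θlu)
    · apply Mo.bdd_mul_intInt _ (((Ds.Vc_cont.measurable.comp hqtmeas).sub
        (measurable_id.mul hqtmeas)).sub hrccont.measurable)
        (C := CV + (|E.θl| + |E.θu|) * E.qbar + Cr)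
      intro θ hθ
      have := hqabs qt hqt01 θ hθ
      have h2 := hCr θ hθ
      rw [Real.norm_eq_abs] at h2
      calc |Ds.Vc (qt θ) - θ * qt θ - rc θ| ≤ |Ds.Vc (qt θ) - θ * qt θ| + |rc θ| := abs_sub _ _
      _ ≤ CV + (|E.θl| + |E.θu|) * E.qbar + Cr := by linarith
    · apply Mo.bdd_mul_intInt _ (((Ds.Vc_cont.measurable.comp hqtmeas).sub
        (measurable_id.mul hqtmeas)).sub hItcont.measurable)
        (C := CV + (|E.θl| + |E.θu|) * E.qbar + CI)
      intro θ hθ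
      have := hqabs qt hqt01 θ hθ
      have h2 := hCI θ hθ
      rw [Real.norm_eq_abs] at h2
      calc |Ds.Vc (qt θ) - θ * qt θ - It θ| ≤ |Ds.Vc (qt θ) - θ * qt θ| + |It θ| := abs_sub _ _
      _ ≤ CV + (|E.θl| + |E.θu|) * E.qbar + CI := by linarith
    · intro θ hθ
      have hθΘ : θ ∈ E.Θ := hθ
      have hf := le_of_lt (Mo.fstar_pos θ hθΘ)
      have hIle : It θ ≤ rc θ := by
        have hlow := E.rent_lower hadm.2.1 hadm.2.2 Ds hθΘ
        have hcongr : It θ = ∫ y in θ..E.θu, Ds.D (p y) := by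
          rw [hIt]
          apply intervalIntegral.integral_congr
          intro y hy
          rw [Set.uIcc_of_le hθΘ.2] at hy
          have hyΘ : y ∈ E.Θ := ⟨le_trans hθΘ.1 hy.1, hy.2⟩
          rw [hqt]
          simp only
          rw [E.clamp_eq hyΘ]
        have hrcθ : rc θ = E.rent p t θ Ds := by
          rw [hrc]
          simp only
          rw [E.clamp_eq hθΘ]
        rw [hcongr, hrcθ]
        exact hlow
      have : Ds.Vc (qt θ) - θ * qt θ - rc θ ≤ Ds.Vc (qt θ) - θ * qt θ - It θ := by linarith
      exact mul_le_mul_of_nonneg_right this hf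
  -- step 3 : integral identity
  have e3 : (∫ θ in E.θl..E.θu, (Ds.Vc (qt θ) - θ * qt θ - It θ) * Mo.fstar θ)
      = ∫ θ in E.θl..E.θu, (Ds.Vc (qt θ) - Mo.zstar (E.clamp θ) * qt θ) * Mo.fstar θ := by
    have key := Mo.integral_equal qt hqtanti hqt01
    rw [← hDs] at key
    have hVeq : ∀ x : ℝ, Ds.V (qt x) = Ds.Vc (qt x) := fun x => (Ds.Vc_eq (hqt01 x)).symm
    simp only [hVeq] at key
    exact key
  -- step 4 : pointwise optimization
  have e4 : (∫ θ in E.θl..E.θu, (Ds.Vc (qt θ) - Mo.zstar (E.clamp θ) * qt θ) * Mo.fstar θ)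
      ≤ ∫ θ in E.θl..E.θu,
          (Ds.Vc (Ds.D (Mo.pBM θ)) - Mo.zstar (E.clamp θ) * Ds.D (Mo.pBM θ)) * Mo.fstar θ := by
    apply intervalIntegral.integral_mono_on (le_of_lt E.θlu)
    · apply Mo.bdd_mul_intInt _ ((Ds.Vc_cont.measurable.comp hqtmeas).sub
        (Mo.zc_cont.measurable.mul hqtmeas))
        (C := CV + Cz * E.qbar)
      intro θ hθ
      have h1 := hCV (qt θ)
      have h2 : |Mo.zstar (E.clamp θ) * qt θ| ≤ Cz * E.qbar := by
        rw [abs_mul]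
        have h3 := hCz θ hθ
        rw [Real.norm_eq_abs] at h3
        apply mul_le_mul h3 _ (abs_nonneg _) (le_trans (abs_nonneg _) h3)
        rw [abs_le]
        exact ⟨by linarith [(hqt01 θ).1, E.qbar_pos], (hqt01 θ).2⟩
      calc |Ds.Vc (qt θ) - Mo.zstar (E.clamp θ) * qt θ|
          ≤ |Ds.Vc (qt θ)| + |Mo.zstar (E.clamp θ) * qt θ| := abs_sub _ _
      _ ≤ CV + Cz * E.qbar := by linarith
    · have hqBMmeas : Measurable (fun θ => Ds.D (Mo.pBM θ)) := (Mo.qBM_anti Ds).measurable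
      apply Mo.bdd_mul_intInt _ ((Ds.Vc_cont.measurable.comp hqBMmeas).sub
        (Mo.zc_cont.measurable.mul hqBMmeas))
        (C := CV + Cz * E.qbar)
      intro θ hθ
      have h1 := hCV (Ds.D (Mo.pBM θ))
      have h2 : |Mo.zstar (E.clamp θ) * Ds.D (Mo.pBM θ)| ≤ Cz * E.qbar := by
        rw [abs_mul]
        have h3 := hCz θ hθ
        rw [Real.norm_eq_abs] at h3
        apply mul_le_mul h3 _ (abs_nonneg _) (le_trans (abs_nonneg _) h3)
        rw [abs_le]
        exact ⟨by linarith [(Mo.qBM_mem Ds θ).1, E.qbar_pos], (Mo.qBM_mem Ds θ).2⟩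
      calc |Ds.Vc (Ds.D (Mo.pBM θ)) - Mo.zstar (E.clamp θ) * Ds.D (Mo.pBM θ)|
          ≤ |Ds.Vc (Ds.D (Mo.pBM θ))| + |Mo.zstar (E.clamp θ) * Ds.D (Mo.pBM θ)| := abs_sub _ _
      _ ≤ CV + Cz * E.qbar := by linarith
    · intro θ hθ
      have hθΘ : θ ∈ E.Θ := hθ
      have hf := le_of_lt (Mo.fstar_pos θ hθΘ)
      have hqge : Ds.D E.θu ≤ qt θ := by
        rw [hqt]
        simp only
        rw [E.clamp_eq hθΘ]
        rcases lt_or_ge (p θ) (Ds.P E.qbar) with hlow | hge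
        · rw [Ds.D_low _ hlow]
          exact (Ds.mem_univ E.θu).2
        · exact Ds.anti (hcap θ hθΘ) hge (le_of_lt (lt_of_le_of_lt (le_refl _) Ds.P0))
      have hopt := Mo.ptwise_opt (θ := θ) (q := qt θ) hθΘ (hqt01 θ) hqge
      have hkey : Ds.Vc (qt θ) - Mo.zstar (E.clamp θ) * qt θ
          ≤ Ds.Vc (Ds.D (Mo.pBM θ)) - Mo.zstar (E.clamp θ) * Ds.D (Mo.pBM θ) := by
        rw [E.clamp_eq hθΘ, Mo.pBM_eq hθΘ, Ds.Vc_eq (hqt01 θ),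
          Ds.Vc_eq (Ds.mem_inv (Mo.pcap_mem hθΘ).1 (Mo.pcap_mem hθΘ).2.1).1]
        exact hopt
      exact mul_le_mul_of_nonneg_right hkey hf
  -- conclude
  have e5 : (∫ θ in E.θl..E.θu,
      (Ds.Vc (Ds.D (Mo.pBM θ)) - Mo.zstar (E.clamp θ) * Ds.D (Mo.pBM θ)) * Mo.fstar θ)
      = Mo.JcN := by
    rw [Model.JcN]
    apply intervalIntegral.integral_congr
    intro θ _
    show (Ds.Vc (Ds.D (Mo.pBM θ)) - Mo.zstar (E.clamp θ) * Ds.D (Mo.pBM θ)) * Mo.fstar θ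
      = (Mo.DstarDemand.V (Mo.DstarDemand.D (Mo.pBM θ))
          - Mo.zstar (E.clamp θ) * Mo.DstarDemand.D (Mo.pBM θ)) * Mo.fstar θ
    rw [Ds.Vc_eq (Mo.qBM_mem Ds θ), hDs]
  linarith [e2, e4, e1.le, e1.ge, e3.le, e3.ge, e5.le, e5.ge]

end Model

namespace Demand

variable {E : Env} (D : Demand E)

lemma P_anti_le {a b : ℝ} (ha : a ∈ Icc (0:ℝ) E.qbar) (hb : b ∈ Icc (0:ℝ) E.qbar)
    (hab : a ≤ b) : D.P b ≤ D.P a := by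
  rcases eq_or_lt_of_le hab with rfl | h
  · exact le_refl _
  · exact le_of_lt (D.P_anti ha hb h)

end Demand

namespace Env

variable (E : Env)

lemma pointwise_of_Gt {p : ℝ → ℝ} {t : ℝ → Demand E → ℝ} (hGt : E.Gstar ≤ E.Gt p t) :
    ∀ θ ∈ E.Θ, ∀ D : Demand E, E.Gstar ≤ E.wt p t θ D := by
  intro θ hθ D
  have hmem := E.wt_mem_Gt_set p t hθ D
  by_cases hbdd : BddBelow {w : ℝ | ∃ (D : Demand E) (μ : MeasureTheory.Measure ℝ),
      E.IsTech μ ∧ w = E.Wt p t D μ}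
  · exact le_trans hGt (csInf_le hbdd hmem)
  · exfalso
    rw [Env.Gt, Real.sInf_of_not_bddBelow hbdd] at hGt
    linarith [E.Gstar_pos]

end Env

namespace Model

variable {E : Env} (Mo : Model E)

lemma zstar_l : Mo.zstar E.θl = E.θl := by
  rw [zstar, Mo.Fstar_l]
  simp

lemma pBM_cont : Continuous Mo.pBM := by
  have h : Mo.pBM = fun θ => min (Mo.zstar (E.clamp θ)) E.θu := rfl
  rw [h]
  exact Mo.zc_cont.min continuous_const

/-- Part 1: every BM-with-price-cap regulation is robustly optimal. -/
lemma BM_robust {p : ℝ → ℝ} {t : ℝ → Demand E → ℝ} (h : Mo.IsBMPriceCap p t) :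
    Mo.RobustlyOptimalPR p t := by
  have hshort : E.PriceShortList p t :=
    ⟨h.1, fun p' t' hadm' => le_trans (E.Gt_le_Gstar hadm') (Mo.Gstar_le_Gt h)⟩
  refine ⟨hshort, ?_⟩
  intro p' t' hsl'
  have hGt' : E.Gstar ≤ E.Gt p' t' := le_trans (Mo.Gstar_le_Gt h) (hsl'.2 p t h.1)
  have hR := E.pointwise_of_Gt hGt'
  rw [Mo.WtStar_BM h]
  exact Mo.WtStar_le hsl'.1 hR

end Model

namespace Model

variable {E : Env} (Mo : Model E)

/-- Part 2 workhorse: any short-list regulation whose conjectured welfare is at least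
`JcN` charges the capped BM price on `(θl, θu]`. -/
lemma unique_price {p : ℝ → ℝ} {t : ℝ → Demand E → ℝ} (hsl : E.PriceShortList p t)
    (hW : Mo.JcN ≤ Mo.WtStar p t) :
    ∀ θ ∈ Ioc E.θl E.θu, p θ = min (Mo.zstar θ) E.θu := by
  have hadm := hsl.1
  have hGt : E.Gstar ≤ E.Gt p t :=
    le_trans (Mo.Gstar_le_Gt Mo.isBM) (hsl.2 Mo.pBM Mo.tBM Mo.isBM.1)
  have hR := E.pointwise_of_Gt hGt
  obtain ⟨hpu, hcap⟩ := E.price_cap hadm (fun θ hθ => hR θ hθ E.DlDemand)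
  set Ds := Mo.DstarDemand with hDs
  set qt : ℝ → ℝ := fun θ => Ds.D (p (E.clamp θ)) with hqt
  set qc : ℝ → ℝ := fun θ => Ds.D (Mo.pBM θ) with hqc
  have hqtanti : Antitone qt := fun x y hxy =>
    E.epic_anti hadm.2.1 Ds (E.clamp_mem x) (E.clamp_mem y) (E.clamp_mono hxy)
  have hqt01 : ∀ θ, qt θ ∈ Icc (0:ℝ) E.qbar := fun θ => Ds.mem_univ _
  have hqc01 : ∀ θ, qc θ ∈ Icc (0:ℝ) E.qbar := fun θ => Mo.qBM_mem Ds θ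
  have hqtmeas : Measurable qt := hqtanti.measurable
  have hqcmeas : Measurable qc := (Mo.qBM_anti Ds).measurable
  set rc : ℝ → ℝ := fun θ => E.rent p t (E.clamp θ) Ds with hrc
  have hrccont : Continuous rc := E.rent_cont hadm.2.1 Ds
  set It : ℝ → ℝ := fun θ => ∫ y in θ..E.θu, qt y with hIt
  have hItcont : Continuous It := by
    have h1 : Continuous fun x : ℝ => ∫ y in E.θu..x, qt y :=
      intervalIntegral.continuous_primitive (fun _ _ => hqtanti.intervalIntegrable) E.θu
    have h2 : It = fun θ => -∫ y in E.θu..θ, qt y := by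
      funext θ
      exact intervalIntegral.integral_symm E.θu θ
    rw [h2]
    exact h1.neg
  obtain ⟨CV, hCV⟩ := Ds.Vc_bdd
  obtain ⟨Cr, hCr⟩ := (isCompact_Icc : IsCompact (Icc E.θl E.θu)).exists_bound_of_continuousOn
    hrccont.continuousOn
  obtain ⟨CI, hCI⟩ := (isCompact_Icc : IsCompact (Icc E.θl E.θu)).exists_bound_of_continuousOn
    hItcont.continuousOn
  obtain ⟨Cz, hCz⟩ := (isCompact_Icc : IsCompact (Icc E.θl E.θu)).exists_bound_of_continuousOn
    (Mo.zc_cont.continuousOn)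
  have habs : ∀ θ ∈ Icc E.θl E.θu, |θ| ≤ |E.θl| + |E.θu| := by
    intro θ hθ
    rcases abs_cases θ with ⟨he, _⟩ | ⟨he, _⟩ <;> rcases abs_cases E.θl with ⟨hl, _⟩ | ⟨hl, _⟩ <;>
      rcases abs_cases E.θu with ⟨hu, _⟩ | ⟨hu, _⟩ <;> rcases hθ with ⟨h1, h2⟩ <;> linarith
  have hqabs : ∀ (r : ℝ → ℝ), (∀ θ, r θ ∈ Icc (0:ℝ) E.qbar) →
      ∀ θ ∈ Icc E.θl E.θu, |Ds.Vc (r θ) - θ * r θ| ≤ CV + (|E.θl| + |E.θu|) * E.qbar := by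
    intro r hr θ hθ
    have h1 := hCV (r θ)
    have h2 : |θ * r θ| ≤ (|E.θl| + |E.θu|) * E.qbar := by
      rw [abs_mul]
      apply mul_le_mul (habs θ hθ) _ (abs_nonneg _) (by positivity)
      rw [abs_le]
      exact ⟨by linarith [(hr θ).1, E.qbar_pos], (hr θ).2⟩
    calc |Ds.Vc (r θ) - θ * r θ| ≤ |Ds.Vc (r θ)| + |θ * r θ| := abs_sub _ _
    _ ≤ CV + (|E.θl| + |E.θu|) * E.qbar := by linarith
  have hvz : ∀ (r : ℝ → ℝ), (∀ θ, r θ ∈ Icc (0:ℝ) E.qbar) →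
      ∀ θ ∈ Icc E.θl E.θu,
        |Ds.Vc (r θ) - Mo.zstar (E.clamp θ) * r θ| ≤ CV + Cz * E.qbar := by
    intro r hr θ hθ
    have h1 := hCV (r θ)
    have h2 : |Mo.zstar (E.clamp θ) * r θ| ≤ Cz * E.qbar := by
      rw [abs_mul]
      have h3 := hCz θ hθ
      rw [Real.norm_eq_abs] at h3
      apply mul_le_mul h3 _ (abs_nonneg _) (le_trans (abs_nonneg _) h3)
      rw [abs_le]
      exact ⟨by linarith [(hr θ).1, E.qbar_pos], (hr θ).2⟩
    calc |Ds.Vc (r θ) - Mo.zstar (E.clamp θ) * r θ|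
        ≤ |Ds.Vc (r θ)| + |Mo.zstar (E.clamp θ) * r θ| := abs_sub _ _
    _ ≤ CV + Cz * E.qbar := by linarith
  have hint3 : IntervalIntegrable
      (fun θ => (Ds.Vc (qt θ) - Mo.zstar (E.clamp θ) * qt θ) * Mo.fstar θ)
      MeasureTheory.volume E.θl E.θu :=
    Mo.bdd_mul_intInt _ ((Ds.Vc_cont.measurable.comp hqtmeas).sub
      (Mo.zc_cont.measurable.mul hqtmeas)) (hvz qt hqt01)
  have hint4 : IntervalIntegrable
      (fun θ => (Ds.Vc (qc θ) - Mo.zstar (E.clamp θ) * qc θ) * Mo.fstar θ)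
      MeasureTheory.volume E.θl E.θu :=
    Mo.bdd_mul_intInt _ ((Ds.Vc_cont.measurable.comp hqcmeas).sub
      (Mo.zc_cont.measurable.mul hqcmeas)) (hvz qc hqc01)
  -- the quantity comparison facts
  have hqge : ∀ θ ∈ E.Θ, Ds.D E.θu ≤ qt θ := by
    intro θ hθΘ
    rw [hqt]
    simp only
    rw [E.clamp_eq hθΘ]
    rcases lt_or_ge (p θ) (Ds.P E.qbar) with hlow | hge
    · rw [Ds.D_low _ hlow]
      exact (Ds.mem_univ E.θu).2
    · exact Ds.anti (hcap θ hθΘ) hge (le_of_lt (lt_of_le_of_lt (le_refl _) Ds.P0))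
  have hptwise : ∀ θ ∈ Icc E.θl E.θu,
      (Ds.Vc (qt θ) - Mo.zstar (E.clamp θ) * qt θ) * Mo.fstar θ
        ≤ (Ds.Vc (qc θ) - Mo.zstar (E.clamp θ) * qc θ) * Mo.fstar θ := by
    intro θ hθ
    have hθΘ : θ ∈ E.Θ := hθ
    have hf := le_of_lt (Mo.fstar_pos θ hθΘ)
    have hopt := Mo.ptwise_opt (θ := θ) (q := qt θ) hθΘ (hqt01 θ) (hqge θ hθΘ)
    have hkey : Ds.Vc (qt θ) - Mo.zstar (E.clamp θ) * qt θ
        ≤ Ds.Vc (qc θ) - Mo.zstar (E.clamp θ) * qc θ := by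
      have hqcθ : qc θ = Ds.D (Mo.pcap θ) := by
        rw [hqc]
        simp only
        rw [Mo.pBM_eq hθΘ]
      rw [E.clamp_eq hθΘ, hqcθ, Ds.Vc_eq (hqt01 θ),
        Ds.Vc_eq (Ds.mem_inv (Mo.pcap_mem hθΘ).1 (Mo.pcap_mem hθΘ).2.1).1]
      exact hopt
    exact mul_le_mul_of_nonneg_right hkey hf
  -- chain of (in)equalities, as in `WtStar_le`
  have e1 : Mo.WtStar p t
      = ∫ θ in E.θl..E.θu, (Ds.Vc (qt θ) - θ * qt θ - rc θ) * Mo.fstar θ := by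
    rw [Model.WtStar]
    apply intervalIntegral.integral_congr
    intro θ hθ
    rw [Set.uIcc_of_le (le_of_lt E.θlu)] at hθ
    have hθΘ : θ ∈ E.Θ := hθ
    show E.wt p t θ Ds * Mo.fstar θ = _
    rw [Env.wt]
    have h1 : Ds.D (p θ) = qt θ := by
      rw [hqt]
      simp only
      rw [E.clamp_eq hθΘ]
    have h2 : E.rent p t θ Ds = rc θ := by
      rw [hrc]
      simp only
      rw [E.clamp_eq hθΘ]
    rw [h1, h2]
    show (Ds.V (qt θ) - θ * qt θ - rc θ) * Mo.fstar θ
      = (Ds.Vc (qt θ) - θ * qt θ - rc θ) * Mo.fstar θ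
    rw [Ds.Vc_eq (hqt01 θ)]
  have e2 : (∫ θ in E.θl..E.θu, (Ds.Vc (qt θ) - θ * qt θ - rc θ) * Mo.fstar θ)
      ≤ ∫ θ in E.θl..E.θu, (Ds.Vc (qt θ) - θ * qt θ - It θ) * Mo.fstar θ := by
    apply intervalIntegral.integral_mono_on (le_of_lt E.θlu)
    · apply Mo.bdd_mul_intInt _ (((Ds.Vc_cont.measurable.comp hqtmeas).sub
        (measurable_id.mul hqtmeas)).sub hrccont.measurable)
        (C := CV + (|E.θl| + |E.θu|) * E.qbar + Cr)
      intro θ hθ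
      have := hqabs qt hqt01 θ hθ
      have h2 := hCr θ hθ
      rw [Real.norm_eq_abs] at h2
      calc |Ds.Vc (qt θ) - θ * qt θ - rc θ| ≤ |Ds.Vc (qt θ) - θ * qt θ| + |rc θ| := abs_sub _ _
      _ ≤ CV + (|E.θl| + |E.θu|) * E.qbar + Cr := by linarith
    · apply Mo.bdd_mul_intInt _ (((Ds.Vc_cont.measurable.comp hqtmeas).sub
        (measurable_id.mul hqtmeas)).sub hItcont.measurable)
        (C := CV + (|E.θl| + |E.θu|) * E.qbar + CI)
      intro θ hθ
      have := hqabs qt hqt01 θ hθ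
      have h2 := hCI θ hθ
      rw [Real.norm_eq_abs] at h2
      calc |Ds.Vc (qt θ) - θ * qt θ - It θ| ≤ |Ds.Vc (qt θ) - θ * qt θ| + |It θ| := abs_sub _ _
      _ ≤ CV + (|E.θl| + |E.θu|) * E.qbar + CI := by linarith
    · intro θ hθ
      have hθΘ : θ ∈ E.Θ := hθ
      have hf := le_of_lt (Mo.fstar_pos θ hθΘ)
      have hIle : It θ ≤ rc θ := by
        have hlow := E.rent_lower hadm.2.1 hadm.2.2 Ds hθΘ
        have hcongr : It θ = ∫ y in θ..E.θu, Ds.D (p y) := by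
          rw [hIt]
          apply intervalIntegral.integral_congr
          intro y hy
          rw [Set.uIcc_of_le hθΘ.2] at hy
          have hyΘ : y ∈ E.Θ := ⟨le_trans hθΘ.1 hy.1, hy.2⟩
          rw [hqt]
          simp only
          rw [E.clamp_eq hyΘ]
        have hrcθ : rc θ = E.rent p t θ Ds := by
          rw [hrc]
          simp only
          rw [E.clamp_eq hθΘ]
        rw [hcongr, hrcθ]
        exact hlow
      have : Ds.Vc (qt θ) - θ * qt θ - rc θ ≤ Ds.Vc (qt θ) - θ * qt θ - It θ := by linarith
      exact mul_le_mul_of_nonneg_right this hf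
  have e3 : (∫ θ in E.θl..E.θu, (Ds.Vc (qt θ) - θ * qt θ - It θ) * Mo.fstar θ)
      = ∫ θ in E.θl..E.θu, (Ds.Vc (qt θ) - Mo.zstar (E.clamp θ) * qt θ) * Mo.fstar θ := by
    have key := Mo.integral_equal qt hqtanti hqt01
    rw [← hDs] at key
    have hVeq : ∀ x : ℝ, Ds.V (qt x) = Ds.Vc (qt x) := fun x => (Ds.Vc_eq (hqt01 x)).symm
    simp only [hVeq] at key
    exact key
  have e4 : (∫ θ in E.θl..E.θu, (Ds.Vc (qt θ) - Mo.zstar (E.clamp θ) * qt θ) * Mo.fstar θ)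
      ≤ ∫ θ in E.θl..E.θu, (Ds.Vc (qc θ) - Mo.zstar (E.clamp θ) * qc θ) * Mo.fstar θ :=
    intervalIntegral.integral_mono_on (le_of_lt E.θlu) hint3 hint4 hptwise
  have e5 : (∫ θ in E.θl..E.θu,
      (Ds.Vc (qc θ) - Mo.zstar (E.clamp θ) * qc θ) * Mo.fstar θ) = Mo.JcN := by
    rw [Model.JcN]
    apply intervalIntegral.integral_congr
    intro θ _
    show (Ds.Vc (qc θ) - Mo.zstar (E.clamp θ) * qc θ) * Mo.fstar θ
      = (Mo.DstarDemand.V (Mo.DstarDemand.D (Mo.pBM θ))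
          - Mo.zstar (E.clamp θ) * Mo.DstarDemand.D (Mo.pBM θ)) * Mo.fstar θ
    rw [Ds.Vc_eq (hqc01 θ), hDs]
  -- equality of the two integrals
  have hA3A4 : (∫ θ in E.θl..E.θu, (Ds.Vc (qt θ) - Mo.zstar (E.clamp θ) * qt θ) * Mo.fstar θ)
      = ∫ θ in E.θl..E.θu, (Ds.Vc (qc θ) - Mo.zstar (E.clamp θ) * qc θ) * Mo.fstar θ := by
    have h1 : Mo.JcN ≤ ∫ θ in E.θl..E.θu,
        (Ds.Vc (qt θ) - Mo.zstar (E.clamp θ) * qt θ) * Mo.fstar θ := by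
      calc Mo.JcN ≤ Mo.WtStar p t := hW
      _ = _ := e1
      _ ≤ _ := e2
      _ = _ := e3
    linarith [e4, e5.le, e5.ge]
  -- the difference integrand vanishes almost everywhere
  set φ : ℝ → ℝ := fun θ => (Ds.Vc (qc θ) - Mo.zstar (E.clamp θ) * qc θ) * Mo.fstar θ
    - (Ds.Vc (qt θ) - Mo.zstar (E.clamp θ) * qt θ) * Mo.fstar θ with hφ
  have hφint : MeasureTheory.IntegrableOn φ (Ioc E.θl E.θu) MeasureTheory.volume :=
    hint4.1.sub hint3.1
  have hφnn : ∀ θ ∈ Icc E.θl E.θu, 0 ≤ φ θ := by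
    intro θ hθ
    have := hptwise θ hθ
    rw [hφ]
    simp only
    linarith
  have hφzero : ∫ θ in Ioc E.θl E.θu, φ θ = 0 := by
    have h1 : ∫ θ in E.θl..E.θu, φ θ = 0 := by
      rw [hφ]
      rw [intervalIntegral.integral_sub hint4 hint3]
      rw [hA3A4]
      ring
    rwa [intervalIntegral.integral_of_le (le_of_lt E.θlu)] at h1
  have hae0 : ∀ᵐ θ ∂(MeasureTheory.volume.restrict (Ioc E.θl E.θu)), φ θ = 0 := by
    have h1 := (MeasureTheory.integral_eq_zero_iff_of_nonneg_ae
      ((MeasureTheory.ae_restrict_mem measurableSet_Ioc).mono fun θ hθ =>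
        hφnn θ ⟨le_of_lt hθ.1, hθ.2⟩) hφint).mp hφzero
    exact h1.mono fun θ hθ => by simpa using hθ
  have hnull : (MeasureTheory.volume.restrict (Ioc E.θl E.θu)) {a | ¬ φ a = 0} = 0 :=
    MeasureTheory.ae_iff.mp hae0
  -- density of zeros in every subinterval
  have hzero_dense : ∀ c d : ℝ, E.θl ≤ c → c < d → d ≤ E.θu →
      ∃ x, x ∈ Ioo c d ∧ φ x = 0 := by
    intro c d h1 h2 h3
    by_contra hno
    push_neg at hno
    have hsub : Ioo c d ⊆ {a | ¬ φ a = 0} := fun x hx => hno x hx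
    have hle := MeasureTheory.measure_mono (μ := MeasureTheory.volume.restrict (Ioc E.θl E.θu)) hsub
    rw [hnull] at hle
    have hres : (MeasureTheory.volume.restrict (Ioc E.θl E.θu)) (Ioo c d)
        = MeasureTheory.volume (Ioo c d) := by
      rw [MeasureTheory.Measure.restrict_apply measurableSet_Ioo]
      congr 1
      rw [Set.inter_eq_self_of_subset_left]
      intro x hx
      exact ⟨lt_of_le_of_lt h1 hx.1, le_trans (le_of_lt hx.2) h3⟩
    rw [hres, Real.volume_Ioo] at hle
    have : (0:ENNReal) < ENNReal.ofReal (d - c) := by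
      rw [ENNReal.ofReal_pos]
      linarith
    exact absurd (le_antisymm hle zero_le) (ne_of_gt this)
  -- zeros force the two quantities to agree
  have hAeq : ∀ x, x ∈ Icc E.θl E.θu → φ x = 0 → qt x = qc x := by
    intro x hx hzero
    by_contra hne
    have hxΘ : x ∈ E.Θ := hx
    have hf := Mo.fstar_pos x hxΘ
    have hqcx : qc x = Ds.D (Mo.pcap x) := by
      rw [hqc]
      simp only
      rw [Mo.pBM_eq hxΘ]
    have hstrict := Mo.ptwise_opt_strict (θ := x) (q := qt x) hxΘ (hqt01 x) (hqge x hxΘ)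
      (by rw [← hqcx]; exact hne)
    have hkey : Ds.Vc (qt x) - Mo.zstar (E.clamp x) * qt x
        < Ds.Vc (qc x) - Mo.zstar (E.clamp x) * qc x := by
      rw [E.clamp_eq hxΘ, hqcx, Ds.Vc_eq (hqt01 x),
        Ds.Vc_eq (Ds.mem_inv (Mo.pcap_mem hxΘ).1 (Mo.pcap_mem hxΘ).2.1).1]
      exact hstrict
    have : 0 < φ x := by
      rw [hφ]
      simp only
      have := mul_lt_mul_of_pos_right hkey hf
      linarith
    linarith [hzero, this]
  -- one-sided continuity bounds for qc
  have hPqc : ∀ θ, Ds.P (qc θ) = Mo.pBM θ :=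
    fun θ => (Ds.mem_inv (Mo.pBM_mem θ).1 (Mo.pBM_mem θ).2).2
  have claim_dn : ∀ θ, ∀ ε > (0:ℝ), ∃ δ > (0:ℝ), ∀ x, |x - θ| < δ → qc θ - ε ≤ qc x := by
    intro θ ε hε
    rcases lt_or_ge (qc θ - ε) 0 with hneg | hpos
    · exact ⟨1, one_pos, fun x _ => le_trans (le_of_lt hneg) (hqc01 x).1⟩
    · set q1 := qc θ - ε with hq1
      have hq1mem : q1 ∈ Icc (0:ℝ) E.qbar := ⟨hpos, by linarith [(hqc01 θ).2]⟩
      have hPgt : Mo.pBM θ < Ds.P q1 := by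
        rw [← hPqc θ]
        exact Ds.P_anti hq1mem (hqc01 θ) (by linarith)
      obtain ⟨δ, hδ, hball⟩ := Metric.continuousAt_iff.mp (Mo.pBM_cont.continuousAt)
        (Ds.P q1 - Mo.pBM θ) (by linarith)
      refine ⟨δ, hδ, fun x hx => ?_⟩
      have := hball (by rwa [Real.dist_eq] : dist x θ < δ)
      rw [Real.dist_eq] at this
      have hlt : Mo.pBM x < Ds.P q1 := by
        rcases abs_lt.mp this with ⟨h1, h2⟩
        linarith
      by_contra hcon
      push_neg at hcon
      have hle : qc x ≤ q1 := by linarith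
      have := Ds.P_anti_le (hqc01 x) hq1mem hle
      rw [hPqc x] at this
      linarith
  have claim_up : ∀ θ, ∀ ε > (0:ℝ), ∃ δ > (0:ℝ), ∀ x, |x - θ| < δ → qc x ≤ qc θ + ε := by
    intro θ ε hε
    rcases lt_or_ge E.qbar (qc θ + ε) with hbig | hsmall
    · exact ⟨1, one_pos, fun x _ => le_trans (hqc01 x).2 (le_of_lt hbig)⟩
    · set q2 := qc θ + ε with hq2
      have hq2mem : q2 ∈ Icc (0:ℝ) E.qbar := ⟨by linarith [(hqc01 θ).1], hsmall⟩
      have hPlt : Ds.P q2 < Mo.pBM θ := by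
        rw [← hPqc θ]
        exact Ds.P_anti (hqc01 θ) hq2mem (by linarith)
      obtain ⟨δ, hδ, hball⟩ := Metric.continuousAt_iff.mp (Mo.pBM_cont.continuousAt)
        (Mo.pBM θ - Ds.P q2) (by linarith)
      refine ⟨δ, hδ, fun x hx => ?_⟩
      have := hball (by rwa [Real.dist_eq] : dist x θ < δ)
      rw [Real.dist_eq] at this
      have hlt : Ds.P q2 < Mo.pBM x := by
        rcases abs_lt.mp this with ⟨h1, h2⟩
        linarith
      by_contra hcon
      push_neg at hcon
      have hle : q2 ≤ qc x := le_of_lt hcon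
      have := Ds.P_anti_le hq2mem (hqc01 x) hle
      rw [hPqc x] at this
      linarith
  -- on the open interval, qt = qc
  have hmain : ∀ θ, θ ∈ Ioo E.θl E.θu → qt θ = qc θ := by
    intro θ hθ
    have key : ∀ ε > (0:ℝ), qc θ - ε ≤ qt θ ∧ qt θ ≤ qc θ + ε := by
      intro ε hε
      constructor
      · obtain ⟨δ, hδ, hdn⟩ := claim_dn θ ε hε
        obtain ⟨x, hx, hφx⟩ := hzero_dense θ (min E.θu (θ + δ))
          (le_of_lt hθ.1) (lt_min hθ.2 (by linarith)) (min_le_left _ _)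
        have hxIcc : x ∈ Icc E.θl E.θu :=
          ⟨le_trans (le_of_lt hθ.1) (le_of_lt hx.1), le_trans (le_of_lt hx.2) (min_le_left _ _)⟩
        have hqeq := hAeq x hxIcc hφx
        have h1 : qt x ≤ qt θ := hqtanti (le_of_lt hx.1)
        have h2 : qc θ - ε ≤ qc x := by
          apply hdn
          have hxu : x < θ + δ := lt_of_lt_of_le hx.2 (min_le_right _ _)
          rw [abs_lt]
          constructor <;> linarith [hx.1]
        linarith [hqeq.ge]
      · obtain ⟨δ, hδ, hup⟩ := claim_up θ ε hε
        obtain ⟨x, hx, hφx⟩ := hzero_dense (max E.θl (θ - δ)) θ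
          (le_max_left _ _) (max_lt hθ.1 (by linarith)) (le_of_lt hθ.2)
        have hxIcc : x ∈ Icc E.θl E.θu :=
          ⟨le_trans (le_max_left _ _) (le_of_lt hx.1), le_trans (le_of_lt hx.2) (le_of_lt hθ.2)⟩
        have hqeq := hAeq x hxIcc hφx
        have h1 : qt θ ≤ qt x := hqtanti (le_of_lt hx.2)
        have h2 : qc x ≤ qc θ + ε := by
          apply hup
          have hxl : θ - δ < x := lt_of_le_of_lt (le_max_right _ _) hx.1
          rw [abs_lt]
          constructor <;> linarith [hx.2]
        linarith [hqeq.le]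
    apply le_antisymm
    · apply le_of_forall_pos_le_add
      intro ε hε
      exact (key ε hε).2
    · by_contra hlt
      push_neg at hlt
      obtain ⟨h1, _⟩ := key ((qc θ - qt θ)/2) (by linarith)
      linarith
  -- conclude the price identity on (θl, θu]
  intro θ hθ
  rcases eq_or_lt_of_le hθ.2 with rfl | hlt
  · rw [hpu]
    exact (min_eq_right (le_of_lt Mo.zstar_u)).symm
  · have hθΘ : θ ∈ E.Θ := ⟨le_of_lt hθ.1, le_of_lt hlt⟩
    have hθIoo : θ ∈ Ioo E.θl E.θu := ⟨hθ.1, hlt⟩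
    have hqeq := hmain θ hθIoo
    -- pcap θ > θl
    have hzgt : E.θl < Mo.zstar θ := by
      have h1 := Mo.zstar_mono ⟨le_refl _, le_of_lt E.θlu⟩ hθΘ hθ.1
      have h2 : Mo.zstar E.θl < Mo.zstar θ := h1
      rwa [Mo.zstar_l] at h2
    have hpcgt : E.θl < Mo.pcap θ := lt_min hzgt E.θlu
    -- qc θ < qbar
    have hqclt : qc θ < E.qbar := by
      rcases eq_or_lt_of_le (hqc01 θ).2 with he | h
      · exfalso
        have := hPqc θ
        rw [he] at this
        have h2 : Mo.pBM θ = Mo.pcap θ := Mo.pBM_eq hθΘ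
        rw [h2] at this
        have h3 := Ds.Pq_le
        rw [this] at h3
        linarith
      · exact h
    -- now pin the price
    have hqtθ : Ds.D (p θ) = qc θ := by
      have : qt θ = Ds.D (p θ) := by
        rw [hqt]
        simp only
        rw [E.clamp_eq hθΘ]
      rw [← this, hqeq]
    rcases lt_or_ge (p θ) (Ds.P E.qbar) with hlow | hge
    · exfalso
      have := Ds.D_low _ hlow
      rw [this] at hqtθ
      rw [← hqtθ] at hqclt
      exact lt_irrefl _ hqclt
    · have hle : p θ ≤ Ds.P 0 :=
        le_of_lt (lt_of_le_of_lt (hcap θ hθΘ) Ds.P0)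
      obtain ⟨_, hinv⟩ := Ds.D_inv (p θ) hge hle
      rw [hqtθ, hPqc θ, Mo.pBM_eq hθΘ] at hinv
      rw [← hinv]
      rfl

end Model



/-- Proposition 3 (optimality of Baron–Myerson-with-price-cap): every
Baron–Myerson-with-price-cap regulation is robustly optimal, and every robustly optimal
price regulation charges `p(θ) = min{z*(θ), θu}` for all `θ ∈ (θl, θu]`. -/
theorem BMpriceCap_robustly_optimal (E : Env) (Mo : Model E) :
    (∀ (p : ℝ → ℝ) (t : ℝ → Demand E → ℝ),
      Mo.IsBMPriceCap p t → Mo.RobustlyOptimalPR p t) ∧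
    (∀ (p : ℝ → ℝ) (t : ℝ → Demand E → ℝ), Mo.RobustlyOptimalPR p t →
      ∀ θ ∈ Ioc E.θl E.θu, p θ = min (Mo.zstar θ) E.θu) := by
  constructor
  · intro p t h
    exact Mo.BM_robust h
  · intro p t hro θ hθ
    have hBMrobust := Mo.BM_robust Mo.isBM
    have hW : Mo.JcN ≤ Mo.WtStar p t := by
      have := hro.2 Mo.pBM Mo.tBM hBMrobust.1
      rwa [Mo.WtStar_BM Mo.isBM] at this
    exact Mo.unique_price hro.1 hW θ hθ
end
end

section
/- Suppose the Baron–Myerson-with-quantity-floor schedule q* solves (ROPT). Then for every solution q^OPT of (ROPT), with u^OPT(θ) = ∫_θ^{θ̄} q^OPT(y) dy, and for every robustly optimal price regulation M̃: W((q^OPT, u^OPT); V*, F*) ≥ W̃(M̃; D*, F*); the inequality is strict if D*(θ̄) > D̲(θ̄). That is, quantity regulation dominates price regulation, strictly when the conjectured demand at the highest cost strictly exceeds the lowest demand at the highest cost. -/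
open MeasureTheory Set

noncomputable section

namespace QDP


lemma ci {P : ℝ → ℝ} {c a b : ℝ} (hc : ContinuousOn P (Icc 0 c))
    (h0 : 0 ≤ a) (hab : a ≤ b) (hbc : b ≤ c) :
    IntervalIntegrable P volume a b :=
  ContinuousOn.intervalIntegrable
    (by rw [uIcc_of_le hab]; exact hc.mono (Icc_subset_Icc h0 hbc))

lemma integral_le_left {P : ℝ → ℝ} {c a b : ℝ}
    (hP : AntitoneOn P (Icc 0 c)) (hc : ContinuousOn P (Icc 0 c))
    (h0 : 0 ≤ a) (hab : a ≤ b) (hbc : b ≤ c) :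
    ∫ s in a..b, P s ≤ (b - a) * P a := by
  have hsub : Icc a b ⊆ Icc 0 c := Icc_subset_Icc h0 hbc
  have := intervalIntegral.integral_mono_on (μ := volume) hab (ci hc h0 hab hbc)
    intervalIntegrable_const (g := fun _ => P a)
    (fun x hx => hP (hsub (left_mem_Icc.2 hab)) (hsub hx) hx.1)
  simpa using this

lemma integral_ge_right {P : ℝ → ℝ} {c a b : ℝ}
    (hP : AntitoneOn P (Icc 0 c)) (hc : ContinuousOn P (Icc 0 c))
    (h0 : 0 ≤ a) (hab : a ≤ b) (hbc : b ≤ c) :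
    (b - a) * P b ≤ ∫ s in a..b, P s := by
  have hsub : Icc a b ⊆ Icc 0 c := Icc_subset_Icc h0 hbc
  have := intervalIntegral.integral_mono_on (μ := volume) hab
    intervalIntegrable_const (ci hc h0 hab hbc) (f := fun _ => P b)
    (fun x hx => hP (hsub hx) (hsub (right_mem_Icc.2 hab)) hx.2)
  simpa using this

lemma integral_lt_left {P : ℝ → ℝ} {c a b : ℝ}
    (hP : StrictAntiOn P (Icc 0 c)) (hc : ContinuousOn P (Icc 0 c))
    (h0 : 0 ≤ a) (hab : a < b) (hbc : b ≤ c) :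
    ∫ s in a..b, P s < (b - a) * P a := by
  have ham : a < (a + b) / 2 := by linarith
  have hmb : (a + b) / 2 < b := by linarith
  have h1 : ∫ s in a..(a + b) / 2, P s ≤ ((a + b) / 2 - a) * P a :=
    integral_le_left hP.antitoneOn hc h0 ham.le (by linarith)
  have h2 : ∫ s in ((a + b) / 2)..b, P s ≤ (b - (a + b) / 2) * P ((a + b) / 2) :=
    integral_le_left hP.antitoneOn hc (by linarith) hmb.le hbc
  have hsplit := intervalIntegral.integral_add_adjacent_intervals
    (ci hc h0 ham.le (by linarith)) (ci hc (by linarith : (0:ℝ) ≤ (a+b)/2) hmb.le hbc)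
  have hPm : P ((a + b) / 2) < P a := hP ⟨h0, by linarith⟩ ⟨by linarith, by linarith⟩ ham
  nlinarith [hsplit]

lemma integral_gt_right {P : ℝ → ℝ} {c a b : ℝ}
    (hP : StrictAntiOn P (Icc 0 c)) (hc : ContinuousOn P (Icc 0 c))
    (h0 : 0 ≤ a) (hab : a < b) (hbc : b ≤ c) :
    (b - a) * P b < ∫ s in a..b, P s := by
  have ham : a < (a + b) / 2 := by linarith
  have hmb : (a + b) / 2 < b := by linarith
  have h1 : ((a + b) / 2 - a) * P ((a + b) / 2) ≤ ∫ s in a..(a + b) / 2, P s :=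
    integral_ge_right hP.antitoneOn hc h0 ham.le (by linarith)
  have h2 : (b - (a + b) / 2) * P b ≤ ∫ s in ((a + b) / 2)..b, P s :=
    integral_ge_right hP.antitoneOn hc (by linarith) hmb.le hbc
  have hsplit := intervalIntegral.integral_add_adjacent_intervals
    (ci hc h0 ham.le (by linarith)) (ci hc (by linarith : (0:ℝ) ≤ (a+b)/2) hmb.le hbc)
  have hPm : P b < P ((a + b) / 2) := hP ⟨by linarith, by linarith⟩ ⟨by linarith, hbc⟩ hmb
  nlinarith [hsplit]


variable {E : Env}

lemma P_qbar_le (D : Demand E) : D.P E.qbar ≤ E.θl := by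
  by_contra h
  push_neg at h
  have h2 := D.D_low E.θl h
  have := D.D_lt
  linarith

lemma D_mem (D : Demand E) (v : ℝ) : D.D v ∈ Icc (0:ℝ) E.qbar := by
  rcases lt_or_ge v (D.P E.qbar) with h | h
  · rw [D.D_low v h]; exact ⟨E.qbar_pos.le, le_refl _⟩
  rcases le_or_gt v (D.P 0) with h2 | h2
  · exact (D.D_inv v h h2).1
  · rw [D.D_high v h2]; exact ⟨le_refl _, E.qbar_pos.le⟩

lemma D_inv' (D : Demand E) {v : ℝ} (h1 : E.θl ≤ v) (h2 : v ≤ D.P 0) :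
    D.P (D.D v) = v := (D.D_inv v (le_trans (P_qbar_le D) h1) h2).2

lemma Pval_le (D : Demand E) {v : ℝ} (h1 : E.θl ≤ v) : D.P (D.D v) ≤ v := by
  rcases le_or_gt v (D.P 0) with h2 | h2
  · exact (D_inv' D h1 h2).le
  · rw [D.D_high v h2]; exact h2.le

lemma Pval_ge (D : Demand E) {v : ℝ} (h2 : v ≤ D.P 0) : v ≤ D.P (D.D v) := by
  rcases lt_or_ge v (D.P E.qbar) with h | h
  · rw [D.D_low v h]; exact h.le
  · exact ((D.D_inv v h h2).2).ge

lemma D_anti (D : Demand E) {v w : ℝ} (hvw : v ≤ w) : D.D w ≤ D.D v := by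
  rcases lt_or_ge v (D.P E.qbar) with h | h
  · rw [D.D_low v h]; exact (D_mem D w).2
  rcases le_or_gt w (D.P 0) with h2 | h2
  swap
  · rw [D.D_high w h2]; exact (D_mem D v).1
  by_contra hcon
  push_neg at hcon
  have hv := (D.D_inv v h (le_trans hvw h2)).2
  have hw := (D.D_inv w (le_trans h hvw) h2).2
  have := D.P_anti (D_mem D v) (D_mem D w) hcon
  rw [hv, hw] at this; linarith

lemma ql_eq (E : Env) : E.ql = E.DlDemand.D E.θu := rfl

lemma ql_mem (E : Env) : E.ql ∈ Icc (0:ℝ) E.qbar := D_mem E.DlDemand E.θu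

lemma Pl_ql (E : Env) : E.Pl E.ql = E.θu :=
  D_inv' E.DlDemand E.θlu.le (le_of_lt E.Pl0)

lemma ql_pos (E : Env) : 0 < E.ql := by
  rcases (ql_mem E).1.lt_or_eq with h | h
  · exact h
  · exfalso; have := Pl_ql E; rw [← h] at this; have := E.Pl0; linarith

lemma ql_lt_qbar (E : Env) : E.ql < E.qbar := by
  rcases (ql_mem E).2.lt_or_eq with h | h
  · exact h
  · exfalso
    have h1 := Pl_ql E; rw [h] at h1
    have := P_qbar_le E.DlDemand
    have := E.θlu
    simp only [Env.DlDemand] at *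
    linarith

lemma ql_le_Dθu (D : Demand E) : E.ql ≤ D.D E.θu := by
  by_contra h
  push_neg at h
  have h2 : E.Pl E.ql < E.Pl (D.D E.θu) := E.Pl_anti (D_mem D E.θu) (ql_mem E) h
  have h3 : E.Pl (D.D E.θu) ≤ D.P (D.D E.θu) := D.P_ge _ (D_mem D E.θu)
  have h4 : D.P (D.D E.θu) ≤ E.θu := Pval_le D E.θlu.le
  rw [Pl_ql] at h2
  linarith

lemma guarantee_ge (D : Demand E) : E.Gstar ≤ D.V (D.D E.θu) - E.θu * D.D E.θu := by
  have hA : E.ql ≤ D.D E.θu := ql_le_Dθu D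
  have hmem := D_mem D E.θu
  have hqm := ql_mem E
  have hPA : E.θu ≤ D.P (D.D E.θu) := Pval_ge D (le_of_lt D.P0)
  have h1 : (D.D E.θu - E.ql) * D.P (D.D E.θu) ≤ ∫ s in E.ql..(D.D E.θu), D.P s :=
    integral_ge_right D.P_anti.antitoneOn D.P_cont hqm.1 hA hmem.2
  have h1' : (D.D E.θu - E.ql) * E.θu ≤ ∫ s in E.ql..(D.D E.θu), D.P s := by
    refine le_trans ?_ h1
    exact mul_le_mul_of_nonneg_left hPA (by linarith)
  have h2 : E.Vl E.ql ≤ D.V E.ql := by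
    apply intervalIntegral.integral_mono_on hqm.1
      (ci E.Pl_cont le_rfl hqm.1 hqm.2) (ci D.P_cont le_rfl hqm.1 hqm.2)
    intro x hx
    exact D.P_ge x (Icc_subset_Icc le_rfl hqm.2 hx)
  have h3 : D.V E.ql + ∫ s in E.ql..(D.D E.θu), D.P s = D.V (D.D E.θu) :=
    intervalIntegral.integral_add_adjacent_intervals
      (ci D.P_cont le_rfl hqm.1 hqm.2) (ci D.P_cont hqm.1 hA hmem.2)
  simp only [Env.Gstar]
  linarith

lemma Vl_strict_max {x : ℝ} (E : Env) (hx : x ∈ Icc (0:ℝ) E.qbar) (hne : x ≠ E.ql) :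
    E.Vl x - E.θu * x < E.Gstar := by
  have hqm := ql_mem E
  rcases lt_or_gt_of_ne hne with h | h
  · have h1 : (E.ql - x) * E.Pl E.ql < ∫ s in x..E.ql, E.Pl s :=
      integral_gt_right E.Pl_anti E.Pl_cont hx.1 h hqm.2
    have h3 : E.Vl x + ∫ s in x..E.ql, E.Pl s = E.Vl E.ql :=
      intervalIntegral.integral_add_adjacent_intervals
        (ci E.Pl_cont le_rfl hx.1 hx.2) (ci E.Pl_cont hx.1 h.le hqm.2)
    rw [Pl_ql] at h1
    simp only [Env.Gstar]
    linarith
  · have h1 : ∫ s in E.ql..x, E.Pl s < (x - E.ql) * E.Pl E.ql :=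
      integral_lt_left E.Pl_anti E.Pl_cont hqm.1 h hx.2
    have h3 : E.Vl E.ql + ∫ s in E.ql..x, E.Pl s = E.Vl x :=
      intervalIntegral.integral_add_adjacent_intervals
        (ci E.Pl_cont le_rfl hqm.1 hqm.2) (ci E.Pl_cont hqm.1 h.le hx.2)
    rw [Pl_ql] at h1
    simp only [Env.Gstar]
    linarith

lemma Gstar_pos (E : Env) : 0 < E.Gstar := by
  have h1 : E.ql * E.Pl E.ql < ∫ s in (0:ℝ)..E.ql, E.Pl s := by
    have := integral_gt_right E.Pl_anti E.Pl_cont le_rfl (ql_pos E) (ql_mem E).2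
    simpa using this
  rw [Pl_ql] at h1
  simp only [Env.Gstar, Env.Vl]
  nlinarith

end QDP

namespace QDP

/-- The fixed-price regulation `p ≡ θu`, `t(θ,D) = θu·D(θu)`. -/
def pFix (E : Env) : ℝ → ℝ := fun _ => E.θu

def tFix (E : Env) : ℝ → Demand E → ℝ := fun _ D => E.θu * D.D E.θu

variable {E : Env}

lemma θu_pos (E : Env) : 0 < E.θu := lt_trans E.θl_pos E.θlu

lemma fix_admissible (E : Env) : E.IsAdmissiblePR (pFix E) (tFix E) := by
  refine ⟨⟨fun θ hθ => (θu_pos E).le, fun θ hθ D => mul_nonneg (θu_pos E).le (D_mem D E.θu).1⟩,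
    ?_, ?_⟩
  · intro θ hθ θ' hθ' D
    simp only [Env.rent, pFix, tFix]
    exact le_refl _
  · intro θ hθ D
    simp only [Env.rent, pFix, tFix]
    nlinarith [(D_mem D E.θu).1, hθ.2]

lemma dirac_tech (E : Env) {θ : ℝ} (hθ : θ ∈ E.Θ) : E.IsTech (Measure.dirac θ) := by
  refine ⟨by infer_instance, ?_⟩
  simp only [Env.Θ]
  rw [Measure.dirac_apply' _ (measurableSet_Icc.compl)]
  simp only [Env.Θ] at hθ
  exact Set.indicator_of_notMem (by simpa using hθ) _

lemma wt_fix (E : Env) (θ : ℝ) (D : Demand E) :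
    E.wt (pFix E) (tFix E) θ D = D.V (D.D E.θu) - E.θu * D.D E.θu := by
  simp only [Env.wt, Env.rent, pFix, tFix]
  ring

lemma Gt_fix_ge (E : Env) : E.Gstar ≤ E.Gt (pFix E) (tFix E) := by
  apply le_csInf
  · exact ⟨_, E.DlDemand, Measure.dirac E.θl, dirac_tech E (left_mem_Icc.2 E.θlu.le), rfl⟩
  · rintro w ⟨D, μ, ⟨hprob, hsupp⟩, rfl⟩
    simp only [Env.Wt, wt_fix]
    rw [integral_const]
    haveI := hprob
    simp only [measure_univ, probReal_univ, ENNReal.toReal_one, one_smul]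
    exact guarantee_ge D

variable {p : ℝ → ℝ} {t : ℝ → Demand E → ℝ}

lemma rent_step (hC : E.EPIC p t) {θ θ' : ℝ} (hθ : θ ∈ E.Θ) (hθ' : θ' ∈ E.Θ) (D : Demand E) :
    E.rent p t θ' D + (θ' - θ) * D.D (p θ') ≤ E.rent p t θ D := by
  have h := hC θ hθ θ' hθ' D
  simp only [Env.rent] at *
  nlinarith [h]

lemma Q_anti (hC : E.EPIC p t) (D : Demand E) : AntitoneOn (fun θ => D.D (p θ)) E.Θ := by
  intro a ha b hb hab
  have h1 := rent_step hC ha hb D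
  have h2 := rent_step hC hb ha D
  rcases eq_or_lt_of_le hab with rfl | h
  · exact le_refl _
  · nlinarith [h1, h2]

lemma rent_ge_integral (hC : E.EPIC p t) (hR : E.EPIR p t) (D : Demand E)
    {θ : ℝ} (hθ : θ ∈ E.Θ) :
    ∫ y in θ..E.θu, D.D (p y) ≤ E.rent p t θ D := by
  have hθu : E.θu ∈ E.Θ := right_mem_Icc.2 E.θlu.le
  have hanti : AntitoneOn (fun y => D.D (p y)) E.Θ := Q_anti hC D
  have h0 : 0 ≤ E.rent p t E.θu D := hR E.θu hθu D
  rcases eq_or_lt_of_le hθ.2 with heq | hlt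
  · rw [heq]
    simpa using h0
  have key : ∀ n : ℕ, 0 < n →
      ∫ y in θ..E.θu, D.D (p y) ≤
        (E.rent p t θ D - E.rent p t E.θu D) + (E.θu - θ) / n * E.qbar := by
    intro n hn
    set Δ : ℝ := (E.θu - θ) / n with hΔdef
    have hnR : (0:ℝ) < n := Nat.cast_pos.2 hn
    have hΔpos : 0 < Δ := div_pos (by linarith) hnR
    set g : ℕ → ℝ := fun i => θ + i * Δ with hgdef
    have hgn : g n = E.θu := by
      simp only [hgdef, hΔdef]
      field_simp
      ring
    have hg0 : g 0 = θ := by simp [hgdef]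
    have hmono : ∀ i j : ℕ, i ≤ j → g i ≤ g j := by
      intro i j hij
      simp only [hgdef]
      have : (i:ℝ) ≤ j := Nat.cast_le.2 hij
      nlinarith
    have hmem : ∀ i : ℕ, i ≤ n → g i ∈ E.Θ := by
      intro i hi
      constructor
      · have : θ ≤ g i := by rw [← hg0]; exact hmono 0 i (Nat.zero_le _)
        exact le_trans hθ.1 this
      · rw [← hgn]; exact hmono i n hi
    have hstep : ∀ i ∈ Finset.range n,
        E.rent p t (g (i+1)) D + Δ * D.D (p (g (i+1))) ≤ E.rent p t (g i) D := by
      intro i hi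
      rw [Finset.mem_range] at hi
      have h := rent_step hC (hmem i hi.le) (hmem (i+1) hi) D
      have : g (i+1) - g i = Δ := by simp only [hgdef]; push_cast; ring
      rw [this] at h
      exact h
    have htel : (Finset.range n).sum (fun i => E.rent p t (g i) D - E.rent p t (g (i+1)) D)
        = E.rent p t (g 0) D - E.rent p t (g n) D := Finset.sum_range_sub' _ n
    have hsum1 : (Finset.range n).sum (fun i => Δ * D.D (p (g (i+1))))
        ≤ E.rent p t (g 0) D - E.rent p t (g n) D := by
      rw [← htel]
      apply Finset.sum_le_sum
      intro i hi
      linarith [hstep i hi]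
    have hint : ∀ k : ℕ, k < n → IntervalIntegrable (fun y => D.D (p y)) volume (g k) (g (k+1)) := by
      intro k hk
      apply AntitoneOn.intervalIntegrable
      apply hanti.mono
      rw [uIcc_of_le (hmono k (k+1) (Nat.le_succ _))]
      intro x hx
      exact ⟨le_trans (hmem k hk.le).1 hx.1, le_trans hx.2 (hmem (k+1) hk).2⟩
    have hsplit := intervalIntegral.sum_integral_adjacent_intervals hint
    have hpiece : ∀ i ∈ Finset.range n,
        ∫ y in (g i)..(g (i+1)), D.D (p y) ≤ Δ * D.D (p (g i)) := by
      intro i hi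
      rw [Finset.mem_range] at hi
      have hle : g i ≤ g (i+1) := hmono i (i+1) (Nat.le_succ _)
      have := intervalIntegral.integral_mono_on (μ := volume) hle (hint i hi)
        intervalIntegrable_const (g := fun _ => D.D (p (g i)))
        (fun x hx => hanti (hmem i hi.le)
          ⟨le_trans (hmem i hi.le).1 hx.1, le_trans hx.2 (hmem (i+1) hi).2⟩ hx.1)
      rw [intervalIntegral.integral_const] at this
      have hgg : g (i+1) - g i = Δ := by simp only [hgdef]; push_cast; ring
      rw [hgg] at this
      simpa [smul_eq_mul] using this
    have htel2 : (Finset.range n).sum (fun i => Δ * D.D (p (g i)) - Δ * D.D (p (g (i+1))))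
        = Δ * D.D (p (g 0)) - Δ * D.D (p (g n)) := Finset.sum_range_sub' _ n
    have hQbd : Δ * D.D (p (g 0)) - Δ * D.D (p (g n)) ≤ Δ * E.qbar := by
      have h1 := (D_mem D (p (g 0))).2
      have h2 := (D_mem D (p (g n))).1
      nlinarith
    calc ∫ y in θ..E.θu, D.D (p y)
        = ∫ y in (g 0)..(g n), D.D (p y) := by rw [hg0, hgn]
      _ = (Finset.range n).sum (fun i => ∫ y in (g i)..(g (i+1)), D.D (p y)) := hsplit.symm
      _ ≤ (Finset.range n).sum (fun i => Δ * D.D (p (g i))) := Finset.sum_le_sum hpiece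
      _ = (Finset.range n).sum (fun i => Δ * D.D (p (g (i+1))))
            + (Δ * D.D (p (g 0)) - Δ * D.D (p (g n))) := by
          rw [← htel2]
          rw [← Finset.sum_add_distrib]
          apply Finset.sum_congr rfl
          intro i _
          ring
      _ ≤ (E.rent p t (g 0) D - E.rent p t (g n) D) + Δ * E.qbar := by
          linarith [hsum1, hQbd]
      _ = (E.rent p t θ D - E.rent p t E.θu D) + (E.θu - θ) / n * E.qbar := by
          rw [hg0, hgn]
  -- pass to the limit
  have hfinal : ∫ y in θ..E.θu, D.D (p y) ≤ E.rent p t θ D - E.rent p t E.θu D := by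
    apply le_of_forall_pos_le_add
    intro ε hε
    obtain ⟨n, hn⟩ := exists_nat_gt ((E.θu - θ) * E.qbar / ε)
    have hn0 : 0 < n := by
      by_contra hcon
      push_neg at hcon
      interval_cases n
      simp at hn
      have : 0 < (E.θu - θ) * E.qbar / ε := div_pos (mul_pos (by linarith) E.qbar_pos) hε
      linarith
    have h := key n hn0
    have hnR : (0:ℝ) < n := Nat.cast_pos.2 hn0
    have hlast : (E.θu - θ) / n * E.qbar ≤ ε := by
      rw [div_mul_eq_mul_div, div_le_iff₀ hnR]
      rw [div_lt_iff₀ hε] at hn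
      linarith
    linarith
  linarith

end QDP

namespace QDP

variable {E : Env} (Mo : Model E)

lemma θu_mem (E : Env) : E.θu ∈ E.Θ := right_mem_Icc.2 E.θlu.le

lemma θl_mem (E : Env) : E.θl ∈ E.Θ := left_mem_Icc.2 E.θlu.le

lemma Dl_mem (E : Env) (v : ℝ) : E.Dl v ∈ Icc (0:ℝ) E.qbar := D_mem E.DlDemand v

/-- If the worst-case welfare bound holds at `θu` under the lowest demand, the price at the
top equals `θu`. -/
lemma p_θu_eq (E : Env) {p : ℝ → ℝ} {t : ℝ → Demand E → ℝ}
    (hwt : E.Gstar ≤ E.wt p t E.θu E.DlDemand)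
    (hIR : 0 ≤ E.rent p t E.θu E.DlDemand) : p E.θu = E.θu := by
  have hx : E.Gstar ≤ E.Vl (E.Dl (p E.θu)) - E.θu * E.Dl (p E.θu) := by
    simp only [Env.wt] at hwt
    have h1 : E.DlDemand.V (E.DlDemand.D (p E.θu)) = E.Vl (E.Dl (p E.θu)) := rfl
    have h2 : E.DlDemand.D (p E.θu) = E.Dl (p E.θu) := rfl
    rw [h1, h2] at hwt
    linarith
  have hx0 : E.Dl (p E.θu) = E.ql := by
    by_contra hne
    have := Vl_strict_max E (Dl_mem E (p E.θu)) hne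
    linarith
  rcases lt_or_ge (p E.θu) (E.Pl E.qbar) with h | h
  · rw [E.Dl_low _ h] at hx0
    exact absurd hx0 (ne_of_gt (ql_lt_qbar E))
  rcases le_or_gt (p E.θu) (E.Pl 0) with h2 | h2
  · have h3 := (E.Dl_inv _ h h2).2
    rw [hx0, Pl_ql] at h3
    exact h3.symm
  · rw [E.Dl_high _ h2] at hx0
    exact absurd hx0.symm (ql_pos E).ne'

lemma f_int : IntervalIntegrable Mo.fstar volume E.θl E.θu := by
  by_contra h
  have h0 := intervalIntegral.integral_undef h
  have h1 := Mo.Fstar_ac E.θu (θu_mem E)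
  rw [Mo.Fstar_u, h0] at h1
  norm_num at h1

lemma F_nonneg {θ : ℝ} (hθ : θ ∈ E.Θ) : 0 ≤ Mo.Fstar θ := by
  rw [Mo.Fstar_ac θ hθ]
  apply intervalIntegral.integral_nonneg hθ.1
  intro u hu
  exact (Mo.fstar_pos u ⟨hu.1, le_trans hu.2 hθ.2⟩).le

lemma z_ge {θ : ℝ} (hθ : θ ∈ E.Θ) : θ ≤ Mo.zstar θ := by
  have h1 := F_nonneg Mo hθ
  have h2 := Mo.fstar_pos θ hθ
  simp only [Model.zstar]
  have : 0 ≤ Mo.Fstar θ / Mo.fstar θ := div_nonneg h1 h2.le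
  linarith

lemma z_lb {θ : ℝ} (hθ : θ ∈ E.Θ) : E.θl ≤ Mo.zstar θ := le_trans hθ.1 (z_ge Mo hθ)

lemma DstarD (v : ℝ) : Mo.DstarDemand.D v = Mo.Dstar v := rfl

lemma DstarV (x : ℝ) : Mo.DstarDemand.V x = Mo.Vstar x := rfl

lemma hstep_le {z u v : ℝ} (hu : 0 ≤ u) (huv : u ≤ v) (hv : v ≤ E.qbar) :
    (Mo.Vstar v - z * v) - (Mo.Vstar u - z * u) ≤ (v - u) * (Mo.Pstar u - z) := by
  have hadd : Mo.Vstar u + ∫ s in u..v, Mo.Pstar s = Mo.Vstar v :=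
    intervalIntegral.integral_add_adjacent_intervals
      (ci Mo.Pstar_cont le_rfl hu (le_trans huv hv)) (ci Mo.Pstar_cont hu huv hv)
  have hle : ∫ s in u..v, Mo.Pstar s ≤ (v - u) * Mo.Pstar u :=
    integral_le_left Mo.Pstar_anti.antitoneOn Mo.Pstar_cont hu huv hv
  nlinarith

lemma hstep_ge {z u v : ℝ} (hu : 0 ≤ u) (huv : u ≤ v) (hv : v ≤ E.qbar) :
    (v - u) * (Mo.Pstar v - z) ≤ (Mo.Vstar v - z * v) - (Mo.Vstar u - z * u) := by
  have hadd : Mo.Vstar u + ∫ s in u..v, Mo.Pstar s = Mo.Vstar v :=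
    intervalIntegral.integral_add_adjacent_intervals
      (ci Mo.Pstar_cont le_rfl hu (le_trans huv hv)) (ci Mo.Pstar_cont hu huv hv)
  have hge : (v - u) * Mo.Pstar v ≤ ∫ s in u..v, Mo.Pstar s :=
    integral_ge_right Mo.Pstar_anti.antitoneOn Mo.Pstar_cont hu huv hv
  nlinarith

/-- Pointwise comparison: any `x ∈ [q_ℓ, q̄]` yields a lower virtual surplus than `q*`. -/
lemma pointwise_le {θ : ℝ} (hθ : θ ∈ E.Θ) {x : ℝ} (hx : x ∈ Icc (0:ℝ) E.qbar)
    (hxq : E.ql ≤ x) :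
    Mo.Vstar x - Mo.zstar θ * x ≤ Mo.Vstar (Mo.qstar θ) - Mo.zstar θ * Mo.qstar θ := by
  set z := Mo.zstar θ with hz
  have hzl : E.θl ≤ z := z_lb Mo hθ
  set b := Mo.Dstar z with hb
  have hbmem : b ∈ Icc (0:ℝ) E.qbar := D_mem Mo.DstarDemand z
  have hPb : Mo.Pstar b ≤ z := Pval_le Mo.DstarDemand hzl
  have hqstar : Mo.qstar θ = max b E.ql := rfl
  rcases le_total b E.ql with hbq | hbq
  · -- m = ql
    rw [hqstar, max_eq_right hbq]
    have hPq : Mo.Pstar E.ql ≤ z := by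
      have := Mo.Pstar_anti.antitoneOn hbmem (ql_mem E) hbq
      linarith
    have := hstep_le Mo (z := z) (ql_mem E).1 hxq hx.2
    nlinarith [mul_nonneg (sub_nonneg.2 hxq) (sub_nonneg.2 hPq)]
  · -- m = b
    rw [hqstar, max_eq_left hbq]
    rcases le_total b x with hbx | hbx
    · have := hstep_le Mo (z := z) hbmem.1 hbx hx.2
      nlinarith [mul_nonneg (sub_nonneg.2 hbx) (sub_nonneg.2 hPb)]
    · rcases le_or_gt z (Mo.Pstar 0) with hz0 | hz0
      · have hPbz : z ≤ Mo.Pstar b := Pval_ge Mo.DstarDemand hz0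
        have := hstep_ge Mo (z := z) hx.1 hbx hbmem.2
        nlinarith [mul_nonneg (sub_nonneg.2 hbx) (sub_nonneg.2 hPbz)]
      · have hb0 : b = 0 := Mo.Dstar_high z hz0
        have : x = b := le_antisymm (hb0 ▸ hbx) (hb0 ▸ hx.1)
        rw [this]

lemma D_lt_of_θu_lt (D : Demand E) {v : ℝ} (hv : E.θu < v) : D.D v < D.D E.θu := by
  rcases le_or_gt v (D.P 0) with h | h
  · by_contra hcon
    push_neg at hcon
    have h1 : D.P (D.D v) = v := D_inv' D (le_trans E.θlu.le hv.le) h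
    have h2 : D.P (D.D E.θu) = E.θu := D_inv' D E.θlu.le (le_of_lt D.P0)
    have h3 : D.P (D.D v) ≤ D.P (D.D E.θu) :=
      D.P_anti.antitoneOn (D_mem D E.θu) (D_mem D v) hcon
    rw [h1, h2] at h3
    linarith
  · rw [D.D_high v h]
    exact lt_of_lt_of_le (ql_pos E) (ql_le_Dθu D)

/-- Pointwise strict comparison on the upper part of the type space. -/
lemma pointwise_strict {θ z2 z3 : ℝ} (hθ : θ ∈ E.Θ) (hz2 : E.θu < z2)
    (hz23 : z2 < z3) (hz3 : z3 ≤ Mo.zstar θ) {x : ℝ} (hx : x ∈ Icc (0:ℝ) E.qbar)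
    (hxA : Mo.Dstar E.θu ≤ x) (hql : E.ql < Mo.Dstar E.θu) :
    Mo.Vstar x - Mo.zstar θ * x ≤ (Mo.Vstar (Mo.qstar θ) - Mo.zstar θ * Mo.qstar θ)
      - (Mo.Dstar E.θu - max (Mo.Dstar z2) E.ql) * (z3 - z2) := by
  set z := Mo.zstar θ with hzdef
  have hzl : E.θl ≤ z := z_lb Mo hθ
  have hz2l : E.θl ≤ z2 := le_trans E.θlu.le hz2.le
  set Dd := Mo.DstarDemand with hDd
  set A := Mo.Dstar E.θu with hA
  set B := max (Mo.Dstar z2) E.ql with hB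
  set b := Mo.Dstar z with hb
  have hAmem : A ∈ Icc (0:ℝ) E.qbar := D_mem Dd E.θu
  have hBmem : B ∈ Icc (0:ℝ) E.qbar := by
    constructor
    · exact le_trans (ql_mem E).1 (le_max_right _ _)
    · exact max_le (D_mem Dd z2).2 (ql_mem E).2
  have hbmem : b ∈ Icc (0:ℝ) E.qbar := D_mem Dd z
  have hzz2 : z2 ≤ z := le_trans hz23.le hz3
  have hbB : b ≤ Mo.Dstar z2 := D_anti Dd hzz2
  have hbB' : b ≤ B := le_trans hbB (le_max_left _ _)
  have hBA : B < A := by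
    apply max_lt ?_ hql
    exact D_lt_of_θu_lt Dd hz2
  have hqstar : Mo.qstar θ = max b E.ql := rfl
  set m := max b E.ql with hm
  have hmB : m ≤ B := max_le_max hbB (le_refl _)
  have hmmem : m ∈ Icc (0:ℝ) E.qbar := by
    constructor
    · exact le_trans (ql_mem E).1 (le_max_right _ _)
    · exact max_le hbmem.2 (ql_mem E).2
  have hmb : b ≤ m := le_max_left _ _
  have hPA : Mo.Pstar A ≤ E.θu := Pval_le Dd E.θlu.le
  have hPB : Mo.Pstar B ≤ z2 := by
    have h1 : Mo.Pstar B ≤ Mo.Pstar (Mo.Dstar z2) :=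
      Mo.Pstar_anti.antitoneOn (D_mem Dd z2) hBmem (le_max_left _ _)
    exact le_trans h1 (Pval_le Dd hz2l)
  have hPm : Mo.Pstar m ≤ z := by
    have h1 : Mo.Pstar m ≤ Mo.Pstar b := Mo.Pstar_anti.antitoneOn hbmem hmmem hmb
    exact le_trans h1 (Pval_le Dd hzl)
  -- three steps
  have s1 : (Mo.Vstar x - z * x) - (Mo.Vstar A - z * A) ≤ 0 := by
    have := hstep_le Mo (z := z) hAmem.1 hxA hx.2
    have hPAz : Mo.Pstar A - z ≤ 0 := by linarith
    nlinarith [sub_nonneg.2 hxA]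
  have s2 : (Mo.Vstar A - z * A) - (Mo.Vstar B - z * B) ≤ (A - B) * (z2 - z3) := by
    have := hstep_le Mo (z := z) hBmem.1 hBA.le hAmem.2
    have : (A - B) * (Mo.Pstar B - z) ≤ (A - B) * (z2 - z3) := by
      apply mul_le_mul_of_nonneg_left ?_ (by linarith)
      linarith
    nlinarith [hstep_le Mo (z := z) hBmem.1 hBA.le hAmem.2]
  have s3 : (Mo.Vstar B - z * B) - (Mo.Vstar m - z * m) ≤ 0 := by
    have := hstep_le Mo (z := z) hmmem.1 hmB hBmem.2
    nlinarith [mul_nonneg (sub_nonneg.2 hmB) (sub_nonneg.2 hPm)]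
  have : Mo.qstar θ = m := hqstar
  rw [this]
  nlinarith [s1, s2, s3]

end QDP

namespace QDP

variable {E : Env} (Mo : Model E)

lemma II_of_bdd {φ : ℝ → ℝ} {a b : ℝ} (hab : a ≤ b)
    (hm : AEStronglyMeasurable φ (volume.restrict (Ioc a b)))
    {C : ℝ} (hb : ∀ x ∈ Ioc a b, |φ x| ≤ C) :
    IntervalIntegrable φ volume a b := by
  rw [intervalIntegrable_iff_integrableOn_Ioc_of_le hab]
  apply Integrable.mono' (integrable_const C) hm
  filter_upwards [ae_restrict_mem measurableSet_Ioc] with x hx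
  simpa using hb x hx

lemma f_intOn : IntegrableOn Mo.fstar (Ioc E.θl E.θu) :=
  (intervalIntegrable_iff_integrableOn_Ioc_of_le E.θlu.le).1 (f_int Mo)

lemma II_mul_f {φ : ℝ → ℝ}
    (hm : AEStronglyMeasurable φ (volume.restrict (Ioc E.θl E.θu)))
    {C : ℝ} (hb : ∀ x ∈ Ioc E.θl E.θu, |φ x| ≤ C) :
    IntervalIntegrable (fun θ => φ θ * Mo.fstar θ) volume E.θl E.θu := by
  rw [intervalIntegrable_iff_integrableOn_Ioc_of_le E.θlu.le]
  apply Integrable.bdd_mul (f_intOn Mo) hm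
  filter_upwards [ae_restrict_mem measurableSet_Ioc] with x hx
  simpa using hb x hx

lemma aesm_of_eqOn {φ g : ℝ → ℝ} {s : Set ℝ} (hs : MeasurableSet s) (hg : Measurable g)
    (h : ∀ x ∈ s, φ x = g x) : AEStronglyMeasurable φ (volume.restrict s) := by
  refine (hg.aestronglyMeasurable).congr ?_
  filter_upwards [ae_restrict_mem hs] with x hx
  exact (h x hx).symm

def clampΘ (E : Env) (θ : ℝ) : ℝ := max E.θl (min θ E.θu)

lemma clampΘ_mono (E : Env) : Monotone (clampΘ E) := by
  intro x y hxy
  exact max_le_max (le_refl _) (min_le_min hxy (le_refl _))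

lemma clampΘ_mem (E : Env) (θ : ℝ) : clampΘ E θ ∈ E.Θ :=
  ⟨le_max_left _ _, max_le E.θlu.le (min_le_right _ _)⟩

lemma clampΘ_eq (E : Env) {θ : ℝ} (hθ : θ ∈ E.Θ) : clampΘ E θ = θ := by
  simp only [clampΘ]
  rw [min_eq_left hθ.2, max_eq_right hθ.1]

lemma ext_anti {q : ℝ → ℝ} (hq : AntitoneOn q E.Θ) :
    Antitone (fun θ => q (clampΘ E θ)) := fun _ _ hab =>
  hq (clampΘ_mem E _) (clampΘ_mem E _) (clampΘ_mono E hab)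

/-- The key Fubini exchange. -/
lemma fubini_key {q : ℝ → ℝ} (hq : Antitone q) (hq0 : ∀ y, 0 ≤ q y)
    (hq1 : ∀ y, q y ≤ E.qbar) :
    ∫ θ in E.θl..E.θu, (∫ y in θ..E.θu, q y) * Mo.fstar θ
      = ∫ θ in E.θl..E.θu, (∫ y in E.θl..θ, Mo.fstar y) * q θ := by
  set a := E.θl with ha
  set b := E.θu with hb
  have hab : a ≤ b := E.θlu.le
  set μ := volume.restrict (Ioc a b) with hμ
  haveI : IsFiniteMeasure μ := by
    constructor
    rw [hμ, Measure.restrict_apply_univ, Real.volume_Ioc]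
    exact ENNReal.ofReal_lt_top
  have hfae : AEStronglyMeasurable Mo.fstar μ := (f_intOn Mo).aestronglyMeasurable
  set g := hfae.mk Mo.fstar with hg
  have hgm : Measurable g := hfae.stronglyMeasurable_mk.measurable
  have hgae : Mo.fstar =ᵐ[μ] g := hfae.ae_eq_mk
  have hgint : Integrable g μ := (f_intOn Mo).congr hgae
  have hqm : Measurable q := hq.measurable
  have hqint : Integrable q μ := by
    apply Integrable.mono' (integrable_const E.qbar) hqm.aestronglyMeasurable
    apply ae_of_all
    intro y
    rw [Real.norm_eq_abs, abs_of_nonneg (hq0 y)]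
    exact hq1 y
  set S : Set (ℝ × ℝ) := {z : ℝ × ℝ | z.1 < z.2 ∧ z.2 ≤ b} with hS
  have hSm : MeasurableSet S :=
    (measurableSet_lt measurable_fst measurable_snd).inter (measurable_snd measurableSet_Iic)
  set H : ℝ × ℝ → ℝ := S.indicator (fun z => q z.2 * g z.1) with hH
  have hHint : Integrable H (μ.prod μ) := by
    apply Integrable.indicator ?_ hSm
    have h1 : Integrable (fun z : ℝ × ℝ => g z.1 * q z.2) (μ.prod μ) :=
      Integrable.mul_prod hgint hqint
    have : (fun z : ℝ × ℝ => q z.2 * g z.1) = (fun z : ℝ × ℝ => g z.1 * q z.2) := by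
      funext z; ring
    rw [this]
    exact h1
  have huncurry : Function.uncurry (fun x y => H (x, y)) = H := by
    funext z
    simp [Function.uncurry]
  have hswap : ∫ θ, (∫ y, H (θ, y) ∂μ) ∂μ = ∫ y, (∫ θ, H (θ, y) ∂μ) ∂μ := by
    apply MeasureTheory.integral_integral_swap
    rw [huncurry]
    exact hHint
  have hL : ∫ θ in a..b, (∫ y in θ..b, q y) * Mo.fstar θ = ∫ θ, (∫ y, H (θ, y) ∂μ) ∂μ := by
    rw [intervalIntegral.integral_of_le hab]
    apply integral_congr_ae
    filter_upwards [ae_restrict_mem measurableSet_Ioc, hgae] with θ hθ hgθ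
    have h1 : ∀ y, H (θ, y) = (Ioc θ b).indicator q y * g θ := by
      intro y
      simp only [hH, hS, Set.indicator_apply, Set.mem_setOf_eq, Set.mem_Ioc]
      by_cases hcase : θ < y ∧ y ≤ b
      · simp [hcase]
      · simp [hcase]
    rw [integral_congr_ae (ae_of_all _ h1), integral_mul_const,
      integral_indicator measurableSet_Ioc, hμ,
      Measure.restrict_restrict measurableSet_Ioc]
    have h2 : Ioc θ b ∩ Ioc a b = Ioc θ b :=
      inter_eq_left.2 (Ioc_subset_Ioc hθ.1.le (le_refl _))
    rw [h2, ← intervalIntegral.integral_of_le hθ.2, hgθ]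
  have hR : ∫ y, (∫ θ, H (θ, y) ∂μ) ∂μ = ∫ θ in a..b, (∫ y in a..θ, Mo.fstar y) * q θ := by
    rw [intervalIntegral.integral_of_le hab]
    apply integral_congr_ae
    filter_upwards [ae_restrict_mem measurableSet_Ioc] with y hy
    have h1 : ∀ θ, H (θ, y) = (Iio y).indicator g θ * q y := by
      intro θ
      simp only [hH, hS, Set.indicator_apply, Set.mem_setOf_eq, Set.mem_Iio]
      by_cases hcase : θ < y
      · simp [hcase, hy.2, mul_comm]
      · simp [hcase]
    rw [integral_congr_ae (ae_of_all _ h1), integral_mul_const,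
      integral_indicator measurableSet_Iio, hμ,
      Measure.restrict_restrict measurableSet_Iio]
    have h2 : Iio y ∩ Ioc a b = Ioo a y := by
      ext x
      simp only [mem_inter_iff, mem_Iio, mem_Ioc, mem_Ioo]
      constructor
      · rintro ⟨h1', h2', _⟩; exact ⟨h2', h1'⟩
      · rintro ⟨h1', h2'⟩; exact ⟨h2', h1', le_trans h2'.le hy.2⟩
    rw [h2, ← integral_Ioc_eq_integral_Ioo]
    have h3 : ∫ x in Ioc a y, g x = ∫ x in Ioc a y, Mo.fstar x := by
      apply integral_congr_ae
      have h4 : Mo.fstar =ᵐ[volume.restrict (Ioc a y)] g :=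
        ae_restrict_of_ae_restrict_of_subset (Ioc_subset_Ioc (le_refl _) hy.2) hgae
      exact h4.symm
    rw [h3, ← intervalIntegral.integral_of_le hy.1.le]
  rw [hL, hswap, hR]

end QDP

namespace QDP

variable {E : Env} (Mo : Model E)

lemma Vstar_contOn : ContinuousOn Mo.Vstar (Icc 0 E.qbar) := by
  have h := intervalIntegral.continuousOn_primitive_interval'
    (ci Mo.Pstar_cont le_rfl E.qbar_pos.le le_rfl) (a := 0)
    (by rw [uIcc_of_le E.qbar_pos.le]; exact left_mem_Icc.2 E.qbar_pos.le)
  rwa [uIcc_of_le E.qbar_pos.le] at h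

def Vb {E : Env} (Mo : Model E) : ℝ → ℝ := fun x => Mo.Vstar (max 0 (min x E.qbar))

lemma clampQ_mem (E : Env) (x : ℝ) : max 0 (min x E.qbar) ∈ Icc (0:ℝ) E.qbar :=
  ⟨le_max_left _ _, max_le E.qbar_pos.le (min_le_right _ _)⟩

lemma Vb_cont : Continuous (Vb Mo) := by
  apply (Vstar_contOn Mo).comp_continuous
  · exact continuous_const.max (continuous_id.min continuous_const)
  · exact clampQ_mem E

lemma Vb_eq {x : ℝ} (hx : x ∈ Icc (0:ℝ) E.qbar) : Vb Mo x = Mo.Vstar x := by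
  simp only [Vb]
  rw [min_eq_left hx.2, max_eq_right hx.1]

lemma Vstar_bound : ∃ C : ℝ, ∀ x ∈ Icc (0:ℝ) E.qbar, |Mo.Vstar x| ≤ C := by
  obtain ⟨C, hC⟩ := isCompact_Icc.exists_bound_of_continuousOn (Vstar_contOn Mo)
  exact ⟨C, fun x hx => by simpa using hC x hx⟩

lemma f_int_sub {a' b' : ℝ} (h1 : E.θl ≤ a') (h2 : a' ≤ b') (h3 : b' ≤ E.θu) :
    IntervalIntegrable Mo.fstar volume a' b' := by
  apply (f_int Mo).mono_set
  rw [uIcc_of_le h2, uIcc_of_le E.θlu.le]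
  exact Icc_subset_Icc h1 h3

lemma F_le_one {θ : ℝ} (hθ : θ ∈ E.Θ) : Mo.Fstar θ ≤ 1 := by
  have h1 : Mo.Fstar θ + ∫ y in θ..E.θu, Mo.fstar y = 1 := by
    rw [Mo.Fstar_ac θ hθ, ← Mo.Fstar_u, Mo.Fstar_ac E.θu (θu_mem E)]
    exact intervalIntegral.integral_add_adjacent_intervals
      (f_int_sub Mo le_rfl hθ.1 hθ.2) (f_int_sub Mo hθ.1 hθ.2 le_rfl)
  have h2 : 0 ≤ ∫ y in θ..E.θu, Mo.fstar y := by
    apply intervalIntegral.integral_nonneg hθ.2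
    intro u hu
    exact (Mo.fstar_pos u ⟨le_trans hθ.1 hu.1, hu.2⟩).le
  linarith

lemma Fs_monoOn : MonotoneOn (fun θ => ∫ y in E.θl..θ, Mo.fstar y) E.Θ := by
  intro x hx y hy hxy
  have h1 := intervalIntegral.integral_add_adjacent_intervals
    (f_int_sub Mo le_rfl hx.1 (le_trans hxy hy.2)) (f_int_sub Mo hx.1 hxy hy.2)
  have h2 : 0 ≤ ∫ u in x..y, Mo.fstar u := by
    apply intervalIntegral.integral_nonneg hxy
    intro u hu
    exact (Mo.fstar_pos u ⟨le_trans hx.1 hu.1, le_trans hu.2 hy.2⟩).le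
  simp only
  linarith

section Sched

variable {q : ℝ → ℝ} (hs : E.IsSchedule q)

lemma qc_anti (hs : E.IsSchedule q) : Antitone (fun θ => q (clampΘ E θ)) := ext_anti hs.1

lemma qc_mem (hs : E.IsSchedule q) (θ : ℝ) : q (clampΘ E θ) ∈ Icc (0:ℝ) E.qbar :=
  hs.2 _ (clampΘ_mem E θ)

lemma qc_eq (q : ℝ → ℝ) (θ : ℝ) (hθ : θ ∈ E.Θ) : q (clampΘ E θ) = q θ := congrArg q (clampΘ_eq E hθ)

lemma aesm_q (hs : E.IsSchedule q) :
    AEStronglyMeasurable q (volume.restrict (Ioc E.θl E.θu)) :=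
  aesm_of_eqOn measurableSet_Ioc (qc_anti hs).measurable
    (fun θ hθ => (qc_eq q θ ⟨hθ.1.le, hθ.2⟩).symm)

lemma aesm_Vq (hs : E.IsSchedule q) :
    AEStronglyMeasurable (fun θ => Mo.Vstar (q θ)) (volume.restrict (Ioc E.θl E.θu)) := by
  apply aesm_of_eqOn measurableSet_Ioc ((Vb_cont Mo).measurable.comp (qc_anti hs).measurable)
  intro θ hθ
  rw [Function.comp_apply, qc_eq q θ ⟨hθ.1.le, hθ.2⟩, Vb_eq Mo (hs.2 θ ⟨hθ.1.le, hθ.2⟩)]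

lemma Rq_congr (q : ℝ → ℝ) {θ : ℝ} (hθ : θ ∈ E.Θ) :
    ∫ y in θ..E.θu, q y = ∫ y in θ..E.θu, q (clampΘ E y) := by
  apply intervalIntegral.integral_congr
  intro y hy
  rw [uIcc_of_le hθ.2] at hy
  exact (qc_eq q y ⟨le_trans hθ.1 hy.1, hy.2⟩).symm

lemma Rc_cont (hs : E.IsSchedule q) :
    Continuous (fun θ : ℝ => ∫ y in θ..E.θu, q (clampΘ E y)) := by
  have hii : ∀ a' b' : ℝ, IntervalIntegrable (fun y => q (clampΘ E y)) volume a' b' :=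
    fun a' b' => (qc_anti hs).intervalIntegrable
  have h1 : Continuous (fun θ => ∫ y in E.θl..θ, q (clampΘ E y)) :=
    intervalIntegral.continuous_primitive hii E.θl
  have h2 : (fun θ : ℝ => ∫ y in θ..E.θu, q (clampΘ E y))
      = fun θ => (∫ y in E.θl..E.θu, q (clampΘ E y)) - ∫ y in E.θl..θ, q (clampΘ E y) := by
    funext θ
    have := intervalIntegral.integral_add_adjacent_intervals (hii E.θl θ) (hii θ E.θu)
    linarith
  rw [h2]
  exact continuous_const.sub h1

lemma aesm_Rq (hs : E.IsSchedule q) :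
    AEStronglyMeasurable (fun θ => ∫ y in θ..E.θu, q y) (volume.restrict (Ioc E.θl E.θu)) :=
  aesm_of_eqOn measurableSet_Ioc (Rc_cont hs).measurable
    (fun θ hθ => Rq_congr q ⟨hθ.1.le, hθ.2⟩)

lemma Rq_bound (hs : E.IsSchedule q) {θ : ℝ} (hθ : θ ∈ E.Θ) :
    |∫ y in θ..E.θu, q y| ≤ (E.θu - E.θl) * E.qbar := by
  rw [Rq_congr q hθ]
  have hii : IntervalIntegrable (fun y => q (clampΘ E y)) volume θ E.θu :=
    (qc_anti hs).intervalIntegrable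
  have hup : ∫ y in θ..E.θu, q (clampΘ E y) ≤ (E.θu - θ) * E.qbar := by
    have := intervalIntegral.integral_mono_on (μ := volume) hθ.2 hii
      intervalIntegrable_const (g := fun _ => E.qbar) (fun y _ => (qc_mem hs y).2)
    simpa using this
  have hlo : 0 ≤ ∫ y in θ..E.θu, q (clampΘ E y) :=
    intervalIntegral.integral_nonneg hθ.2 (fun y _ => (qc_mem hs y).1)
  rw [abs_le]
  have hq0 : (0:ℝ) ≤ E.qbar := E.qbar_pos.le
  have : (E.θu - θ) * E.qbar ≤ (E.θu - E.θl) * E.qbar :=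
    mul_le_mul_of_nonneg_right (by linarith [hθ.1]) hq0
  constructor <;> nlinarith [mul_nonneg (sub_nonneg.2 hθ.1) hq0]

lemma int_VF (hs : E.IsSchedule q) :
    IntervalIntegrable (fun θ => (Mo.Vstar (q θ) - θ * q θ) * Mo.fstar θ) volume E.θl E.θu := by
  obtain ⟨CV, hCV⟩ := Vstar_bound Mo
  apply II_mul_f Mo (φ := fun θ => Mo.Vstar (q θ) - θ * q θ) (C := CV + E.θu * E.qbar)
    (((aesm_Vq Mo hs).sub (measurable_id.aestronglyMeasurable.mul (aesm_q hs))))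
  intro θ hθ
  have hθΘ : θ ∈ E.Θ := ⟨hθ.1.le, hθ.2⟩
  have hqθ := hs.2 θ hθΘ
  have e1 := abs_le.1 (hCV _ hqθ)
  have h2 : |θ * q θ| ≤ E.θu * E.qbar := by
    rw [abs_mul, abs_of_pos (lt_trans E.θl_pos hθ.1), abs_of_nonneg hqθ.1]
    apply mul_le_mul hθ.2 hqθ.2 hqθ.1 (θu_pos E).le
  have e2 := abs_le.1 h2
  rw [abs_le]
  constructor <;> linarith [e1.1, e1.2, e2.1, e2.2]

lemma int_RF (hs : E.IsSchedule q) :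
    IntervalIntegrable (fun θ => (∫ y in θ..E.θu, q y) * Mo.fstar θ) volume E.θl E.θu := by
  apply II_mul_f Mo (φ := fun θ => ∫ y in θ..E.θu, q y) (C := (E.θu - E.θl) * E.qbar)
    (aesm_Rq hs)
  intro θ hθ
  exact Rq_bound hs ⟨hθ.1.le, hθ.2⟩

lemma int_FQ (hs : E.IsSchedule q) :
    IntervalIntegrable (fun θ => (∫ y in E.θl..θ, Mo.fstar y) * q θ) volume E.θl E.θu := by
  have hFm : Monotone (fun θ => ∫ y in E.θl..(clampΘ E θ), Mo.fstar y) :=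
    fun a b hab => Fs_monoOn Mo (clampΘ_mem E a) (clampΘ_mem E b) (clampΘ_mono E hab)
  have hFaesm : AEStronglyMeasurable (fun θ => ∫ y in E.θl..θ, Mo.fstar y)
      (volume.restrict (Ioc E.θl E.θu)) := by
    apply aesm_of_eqOn measurableSet_Ioc hFm.measurable
    intro θ hθ
    rw [clampΘ_eq E ⟨hθ.1.le, hθ.2⟩]
  apply II_of_bdd (φ := fun θ => (∫ y in E.θl..θ, Mo.fstar y) * q θ) E.θlu.le
    (hFaesm.mul (aesm_q hs)) (C := 1 * E.qbar)
  intro θ hθ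
  have hθΘ : θ ∈ E.Θ := ⟨hθ.1.le, hθ.2⟩
  have hqθ := hs.2 θ hθΘ
  have hF1 : ∫ y in E.θl..θ, Mo.fstar y = Mo.Fstar θ := (Mo.Fstar_ac θ hθΘ).symm
  rw [abs_mul, hF1, abs_of_nonneg (F_nonneg Mo hθΘ), abs_of_nonneg hqθ.1]
  apply mul_le_mul (F_le_one Mo hθΘ) hqθ.2 hqθ.1 zero_le_one

lemma J_integrand_eq {θ : ℝ} (hθ : θ ∈ E.Θ) (x : ℝ) :
    (Mo.Vstar x - Mo.zstar θ * x) * Mo.fstar θ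
      = (Mo.Vstar x - θ * x) * Mo.fstar θ - (∫ y in E.θl..θ, Mo.fstar y) * x := by
  have hf := Mo.fstar_pos θ hθ
  rw [← Mo.Fstar_ac θ hθ, Model.zstar]
  field_simp
  ring

lemma int_J (hs : E.IsSchedule q) :
    IntervalIntegrable (fun θ => (Mo.Vstar (q θ) - Mo.zstar θ * q θ) * Mo.fstar θ)
      volume E.θl E.θu := by
  rw [intervalIntegrable_iff_integrableOn_Ioc_of_le E.θlu.le]
  have hnice := (int_VF Mo hs).sub (int_FQ Mo hs)
  rw [intervalIntegrable_iff_integrableOn_Ioc_of_le E.θlu.le] at hnice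
  apply hnice.congr
  filter_upwards [ae_restrict_mem measurableSet_Ioc] with θ hθ
  exact (J_integrand_eq Mo ⟨hθ.1.le, hθ.2⟩ (q θ)).symm

lemma congr_Ioc {f g : ℝ → ℝ} (h : ∀ θ ∈ Ioc E.θl E.θu, f θ = g θ) :
    ∫ θ in E.θl..E.θu, f θ = ∫ θ in E.θl..E.θu, g θ := by
  apply intervalIntegral.integral_congr_ae
  apply ae_of_all
  intro x hx
  rw [uIoc_of_le E.θlu.le] at hx
  exact h x hx

/-- Integration by parts: the welfare form equals the virtual surplus form. -/
lemma key_ibp (hs : E.IsSchedule q) :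
    ∫ θ in E.θl..E.θu, (Mo.Vstar (q θ) - θ * q θ - ∫ y in θ..E.θu, q y) * Mo.fstar θ
      = Mo.J q := by
  set qc : ℝ → ℝ := fun θ => q (clampΘ E θ) with hqcdef
  have hsc : E.IsSchedule qc :=
    ⟨(qc_anti hs).antitoneOn _, fun θ _ => qc_mem hs θ⟩
  have step1 : ∫ θ in E.θl..E.θu, (Mo.Vstar (q θ) - θ * q θ - ∫ y in θ..E.θu, q y) * Mo.fstar θ
      = ∫ θ in E.θl..E.θu, (Mo.Vstar (qc θ) - θ * qc θ - ∫ y in θ..E.θu, qc y) * Mo.fstar θ := by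
    apply congr_Ioc
    intro θ hθ
    have hθΘ : θ ∈ E.Θ := ⟨hθ.1.le, hθ.2⟩
    rw [hqcdef]
    simp only
    rw [qc_eq q θ hθΘ, ← Rq_congr q hθΘ]
  have hsub : (fun θ => (Mo.Vstar (qc θ) - θ * qc θ - ∫ y in θ..E.θu, qc y) * Mo.fstar θ)
      = fun θ => (Mo.Vstar (qc θ) - θ * qc θ) * Mo.fstar θ
          - (∫ y in θ..E.θu, qc y) * Mo.fstar θ := by
    funext θ; ring
  have step2 : ∫ θ in E.θl..E.θu, (Mo.Vstar (qc θ) - θ * qc θ - ∫ y in θ..E.θu, qc y) * Mo.fstar θ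
      = (∫ θ in E.θl..E.θu, (Mo.Vstar (qc θ) - θ * qc θ) * Mo.fstar θ)
        - ∫ θ in E.θl..E.θu, (∫ y in θ..E.θu, qc y) * Mo.fstar θ := by
    rw [hsub]
    exact intervalIntegral.integral_sub (int_VF Mo hsc) (int_RF Mo hsc)
  have step3 : ∫ θ in E.θl..E.θu, (∫ y in θ..E.θu, qc y) * Mo.fstar θ
      = ∫ θ in E.θl..E.θu, (∫ y in E.θl..θ, Mo.fstar y) * qc θ :=
    fubini_key Mo (qc_anti hs) (fun y => (qc_mem hs y).1) (fun y => (qc_mem hs y).2)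
  have step4 : (∫ θ in E.θl..E.θu, (Mo.Vstar (qc θ) - θ * qc θ) * Mo.fstar θ)
        - ∫ θ in E.θl..E.θu, (∫ y in E.θl..θ, Mo.fstar y) * qc θ
      = ∫ θ in E.θl..E.θu, ((Mo.Vstar (qc θ) - θ * qc θ) * Mo.fstar θ
          - (∫ y in E.θl..θ, Mo.fstar y) * qc θ) :=
    (intervalIntegral.integral_sub (int_VF Mo hsc) (int_FQ Mo hsc)).symm
  have step5 : ∫ θ in E.θl..E.θu, ((Mo.Vstar (qc θ) - θ * qc θ) * Mo.fstar θ
          - (∫ y in E.θl..θ, Mo.fstar y) * qc θ) = Mo.J q := by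
    rw [Model.J]
    apply congr_Ioc
    intro θ hθ
    have hθΘ : θ ∈ E.Θ := ⟨hθ.1.le, hθ.2⟩
    rw [hqcdef]
    simp only
    rw [qc_eq q θ hθΘ]
    exact (J_integrand_eq Mo hθΘ (q θ)).symm
  rw [step1, step2, step3, step4, step5]

end Sched

end QDP

namespace QDP

variable {E : Env} (Mo : Model E)

lemma Vl_le_Vstar_ql : E.Vl E.ql ≤ Mo.Vstar E.ql := by
  apply intervalIntegral.integral_mono_on (ql_mem E).1
    (ci E.Pl_cont le_rfl (ql_mem E).1 (ql_mem E).2)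
    (ci Mo.Pstar_cont le_rfl (ql_mem E).1 (ql_mem E).2)
  intro x hx
  exact Mo.Pstar_ge x (Icc_subset_Icc le_rfl (ql_mem E).2 hx)

lemma const_feas (E : Env) : E.FeasibleROPT (fun _ => E.ql) := by
  refine ⟨⟨fun a _ b _ _ => le_rfl, fun θ _ => ql_mem E⟩, ?_⟩
  intro θ hθ
  apply le_of_eq
  simp only [Env.Wl, Env.Gstar, intervalIntegral.integral_const, smul_eq_mul]
  ring

lemma f_total : ∫ y in E.θl..E.θu, Mo.fstar y = 1 :=
  (Mo.Fstar_ac E.θu (θu_mem E)).symm.trans Mo.Fstar_u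

lemma J_const_ql : Mo.J (fun _ => E.ql) = Mo.Vstar E.ql - E.θu * E.ql := by
  have hsched : E.IsSchedule (fun _ => E.ql) := ⟨fun a _ b _ _ => le_rfl, fun θ _ => ql_mem E⟩
  rw [← key_ibp Mo hsched]
  have hcg : ∀ θ ∈ Ioc E.θl E.θu,
      (Mo.Vstar ((fun _ => E.ql) θ) - θ * (fun _ => E.ql) θ
        - ∫ y in θ..E.θu, (fun _ => E.ql) y) * Mo.fstar θ
      = (Mo.Vstar E.ql - E.θu * E.ql) * Mo.fstar θ := by
    intro θ _
    simp only [intervalIntegral.integral_const, smul_eq_mul]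
    ring
  rw [congr_Ioc hcg, intervalIntegral.integral_const_mul, f_total Mo, mul_one]

lemma z_top (Mo : Model E) : E.θu < Mo.zstar E.θu := by
  have hf := Mo.fstar_pos E.θu (θu_mem E)
  simp only [Model.zstar, Mo.Fstar_u]
  have : 0 < 1 / Mo.fstar E.θu := by positivity
  linarith

end QDP

open QDP

/-- Proposition 4(1): if the Baron–Myerson-with-quantity-floor schedule solves (ROPT),
quantity regulation dominates price regulation, strictly when `D*(θu) > D̲(θu)`. -/
theorem quantity_dominates_price (E : Env) (Mo : Model E)
    (hstar : Mo.SolvesROPT Mo.qstar)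
    (qOPT : ℝ → ℝ) (hOPT : Mo.SolvesROPT qOPT)
    (p : ℝ → ℝ) (t : ℝ → Demand E → ℝ) (hpt : Mo.RobustlyOptimalPR p t) :
    Mo.WtStar p t ≤ Mo.WStar qOPT (fun θ => ∫ y in θ..E.θu, qOPT y) ∧
      (E.Dl E.θu < Mo.Dstar E.θu →
        Mo.WtStar p t < Mo.WStar qOPT (fun θ => ∫ y in θ..E.θu, qOPT y)) := by
  classical
  obtain ⟨⟨hadm, hGtmax⟩, _hWmax⟩ := hpt
  obtain ⟨hPR, hC, hR⟩ := hadm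
  -- the guarantee of (p, t) is at least G*
  have hGt : E.Gstar ≤ E.Gt p t := le_trans (Gt_fix_ge E) (hGtmax _ _ (fix_admissible E))
  -- worst-case welfare bound at every type and demand
  have hwt_ge : ∀ θ ∈ E.Θ, ∀ D : Demand E, E.Gstar ≤ E.wt p t θ D := by
    intro θ hθ D
    by_cases hbdd : BddBelow {w : ℝ | ∃ (D : Demand E) (μ : Measure ℝ),
      E.IsTech μ ∧ w = E.Wt p t D μ}
    · refine le_trans hGt ?_
      have hmem : E.wt p t θ D ∈ {w : ℝ | ∃ (D : Demand E) (μ : Measure ℝ),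
          E.IsTech μ ∧ w = E.Wt p t D μ} := by
        refine ⟨D, Measure.dirac θ, dirac_tech E hθ, ?_⟩
        rw [Env.Wt, integral_dirac]
      exact csInf_le hbdd hmem
    · exfalso
      have h0 : E.Gt p t = 0 := by
        rw [Env.Gt]
        exact Real.sInf_of_not_bddBelow hbdd
      have := Gstar_pos E
      rw [h0] at hGt
      linarith
  -- the top price equals θu
  have hpθu : p E.θu = E.θu :=
    p_θu_eq E (hwt_ge E.θu (θu_mem E) E.DlDemand) (hR E.θu (θu_mem E) E.DlDemand)
  -- the conjectured-demand quantity schedule of the price regulation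
  set Q : ℝ → ℝ := fun θ => Mo.DstarDemand.D (p θ) with hQdef
  have hQanti : AntitoneOn Q E.Θ := Q_anti hC Mo.DstarDemand
  have hQmem : ∀ θ, Q θ ∈ Icc (0:ℝ) E.qbar := fun θ => D_mem Mo.DstarDemand (p θ)
  have schedQ : E.IsSchedule Q := ⟨hQanti, fun θ _ => hQmem θ⟩
  have hQθu : Q E.θu = Mo.Dstar E.θu := by rw [hQdef]; simp only; rw [hpθu]; rfl
  have hQ_ge : ∀ θ ∈ E.Θ, Mo.Dstar E.θu ≤ Q θ := by
    intro θ hθ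
    have := hQanti hθ (θu_mem E) hθ.2
    rwa [hQθu] at this
  have hqlA : E.ql ≤ Mo.Dstar E.θu := ql_le_Dθu Mo.DstarDemand
  -- schedule facts for q*
  have schedstar : E.IsSchedule Mo.qstar := hstar.1.1
  have schedOPT : E.IsSchedule qOPT := hOPT.1.1
  -- J comparison (weak)
  have hptle : ∀ θ ∈ Icc E.θl E.θu,
      (Mo.Vstar (Q θ) - Mo.zstar θ * Q θ) * Mo.fstar θ
        ≤ (Mo.Vstar (Mo.qstar θ) - Mo.zstar θ * Mo.qstar θ) * Mo.fstar θ := by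
    intro θ hθ
    apply mul_le_mul_of_nonneg_right ?_ (Mo.fstar_pos θ hθ).le
    exact pointwise_le Mo hθ (hQmem θ) (le_trans hqlA (hQ_ge θ hθ))
  have hJQle : Mo.J Q ≤ Mo.J Mo.qstar :=
    intervalIntegral.integral_mono_on E.θlu.le (int_J Mo schedQ) (int_J Mo schedstar) hptle
  have hJeq : Mo.J Mo.qstar = Mo.J qOPT :=
    le_antisymm (hOPT.2 Mo.qstar hstar.1) (hstar.2 qOPT hOPT.1)
  -- RHS equals J qOPT
  have hRHS : Mo.WStar qOPT (fun θ => ∫ y in θ..E.θu, qOPT y) = Mo.J qOPT := by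
    rw [Model.WStar]
    exact key_ibp Mo schedOPT
  by_cases hint : IntervalIntegrable
      (fun θ => E.wt p t θ Mo.DstarDemand * Mo.fstar θ) volume E.θl E.θu
  · -- integrable case
    have hWKQ : IntervalIntegrable
        (fun θ => (Mo.Vstar (Q θ) - θ * Q θ - ∫ y in θ..E.θu, Q y) * Mo.fstar θ)
        volume E.θl E.θu := by
      have h := (int_VF Mo schedQ).sub (int_RF Mo schedQ)
      have heq : (fun θ => (Mo.Vstar (Q θ) - θ * Q θ - ∫ y in θ..E.θu, Q y) * Mo.fstar θ)
          = fun θ => (Mo.Vstar (Q θ) - θ * Q θ) * Mo.fstar θ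
            - (∫ y in θ..E.θu, Q y) * Mo.fstar θ := by
        funext θ; ring
      rw [heq]
      exact h
    have hwt_le : ∀ θ ∈ Icc E.θl E.θu,
        E.wt p t θ Mo.DstarDemand * Mo.fstar θ
          ≤ (Mo.Vstar (Q θ) - θ * Q θ - ∫ y in θ..E.θu, Q y) * Mo.fstar θ := by
      intro θ hθ
      apply mul_le_mul_of_nonneg_right ?_ (Mo.fstar_pos θ hθ).le
      have hrent := rent_ge_integral hC hR Mo.DstarDemand hθ
      simp only [Env.wt]
      have hV : Mo.DstarDemand.V (Mo.DstarDemand.D (p θ)) = Mo.Vstar (Q θ) := rfl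
      rw [hV]
      have hD : Mo.DstarDemand.D (p θ) = Q θ := rfl
      rw [hD]
      linarith
    have h1 : Mo.WtStar p t
        ≤ ∫ θ in E.θl..E.θu, (Mo.Vstar (Q θ) - θ * Q θ - ∫ y in θ..E.θu, Q y) * Mo.fstar θ := by
      rw [Model.WtStar]
      exact intervalIntegral.integral_mono_on E.θlu.le hint hWKQ hwt_le
    have h2 : Mo.WtStar p t ≤ Mo.J Q := by
      rw [← key_ibp Mo schedQ]
      exact h1
    constructor
    · rw [hRHS]
      linarith
    · -- strict case
      intro hlt
      have hltA : E.ql < Mo.Dstar E.θu := hlt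
      -- find θ2 < θu with zstar > θu on a neighborhood
      have hcw : ContinuousWithinAt (fun θ => θ + Mo.Fstar θ / Mo.fstar θ) E.Θ E.θu :=
        Mo.zstar_cont E.θu (θu_mem E)
      have hev : ∀ᶠ θ in nhdsWithin E.θu E.Θ, E.θu < Mo.zstar θ :=
        hcw.eventually (eventually_gt_nhds (z_top Mo))
      obtain ⟨ε, hε, hball⟩ := Metric.mem_nhdsWithin_iff.1 hev
      set θ2 : ℝ := max E.θl (E.θu - ε/2) with hθ2def
      have hθ2Θ : θ2 ∈ E.Θ := ⟨le_max_left _ _, max_le E.θlu.le (by linarith)⟩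
      have hθ2lt : θ2 < E.θu := max_lt E.θlu (by linarith)
      have hz2 : E.θu < Mo.zstar θ2 := by
        apply hball
        refine ⟨Metric.mem_ball.2 ?_, hθ2Θ⟩
        rw [Real.dist_eq, abs_of_nonpos (by linarith)]
        have h9 := le_max_right E.θl (E.θu - ε/2)
        have h10 : E.θu - ε/2 ≤ θ2 := h9
        linarith
      set θ3 : ℝ := (θ2 + E.θu) / 2 with hθ3def
      have hθ23 : θ2 < θ3 := by simp only [hθ3def]; linarith
      have hθ3u : θ3 < E.θu := by simp only [hθ3def]; linarith
      have hθ3Θ : θ3 ∈ E.Θ := ⟨le_trans hθ2Θ.1 hθ23.le, hθ3u.le⟩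
      have hz23 : Mo.zstar θ2 < Mo.zstar θ3 := Mo.zstar_mono hθ2Θ hθ3Θ hθ23
      set A : ℝ := Mo.Dstar E.θu with hAdef
      set B : ℝ := max (Mo.Dstar (Mo.zstar θ2)) E.ql with hBdef
      have hBA : B < A := max_lt (D_lt_of_θu_lt Mo.DstarDemand hz2) hltA
      set ε0 : ℝ := (A - B) * (Mo.zstar θ3 - Mo.zstar θ2) with hε0def
      have hε0pos : 0 < ε0 := mul_pos (by linarith) (by linarith)
      -- pointwise strict bound on [θ3, θu]
      have hps : ∀ θ ∈ Icc θ3 E.θu,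
          (Mo.Vstar (Q θ) - Mo.zstar θ * Q θ) * Mo.fstar θ
            ≤ (Mo.Vstar (Mo.qstar θ) - Mo.zstar θ * Mo.qstar θ) * Mo.fstar θ
              - ε0 * Mo.fstar θ := by
        intro θ hθ
        have hθΘ : θ ∈ E.Θ := ⟨le_trans hθ3Θ.1 hθ.1, hθ.2⟩
        have hz3θ : Mo.zstar θ3 ≤ Mo.zstar θ :=
          Mo.zstar_mono.monotoneOn hθ3Θ hθΘ hθ.1
        have hp := pointwise_strict Mo hθΘ hz2 hz23 hz3θ (hQmem θ) (hQ_ge θ hθΘ) hltA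
        have hf := (Mo.fstar_pos θ hθΘ).le
        have := mul_le_mul_of_nonneg_right hp hf
        have hring : ((Mo.Vstar (Mo.qstar θ) - Mo.zstar θ * Mo.qstar θ)
            - (A - B) * (Mo.zstar θ3 - Mo.zstar θ2)) * Mo.fstar θ
            = (Mo.Vstar (Mo.qstar θ) - Mo.zstar θ * Mo.qstar θ) * Mo.fstar θ
              - ε0 * Mo.fstar θ := by
          rw [hε0def]; ring
        rw [hring] at this
        exact this
      -- split integrals at θ3
      have hQ1 : IntervalIntegrable (fun θ => (Mo.Vstar (Q θ) - Mo.zstar θ * Q θ) * Mo.fstar θ)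
          volume E.θl θ3 := (int_J Mo schedQ).mono_set
        (by rw [uIcc_of_le hθ3Θ.1, uIcc_of_le E.θlu.le]; exact Icc_subset_Icc le_rfl hθ3Θ.2)
      have hQ2 : IntervalIntegrable (fun θ => (Mo.Vstar (Q θ) - Mo.zstar θ * Q θ) * Mo.fstar θ)
          volume θ3 E.θu := (int_J Mo schedQ).mono_set
        (by rw [uIcc_of_le hθ3u.le, uIcc_of_le E.θlu.le]; exact Icc_subset_Icc hθ3Θ.1 le_rfl)
      have hS1 : IntervalIntegrable
          (fun θ => (Mo.Vstar (Mo.qstar θ) - Mo.zstar θ * Mo.qstar θ) * Mo.fstar θ)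
          volume E.θl θ3 := (int_J Mo schedstar).mono_set
        (by rw [uIcc_of_le hθ3Θ.1, uIcc_of_le E.θlu.le]; exact Icc_subset_Icc le_rfl hθ3Θ.2)
      have hS2 : IntervalIntegrable
          (fun θ => (Mo.Vstar (Mo.qstar θ) - Mo.zstar θ * Mo.qstar θ) * Mo.fstar θ)
          volume θ3 E.θu := (int_J Mo schedstar).mono_set
        (by rw [uIcc_of_le hθ3u.le, uIcc_of_le E.θlu.le]; exact Icc_subset_Icc hθ3Θ.1 le_rfl)
      have hfs : IntervalIntegrable Mo.fstar volume θ3 E.θu :=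
        f_int_sub Mo hθ3Θ.1 hθ3u.le le_rfl
      have hsplitQ := intervalIntegral.integral_add_adjacent_intervals hQ1 hQ2
      have hsplitS := intervalIntegral.integral_add_adjacent_intervals hS1 hS2
      have hcomp1 : ∫ θ in E.θl..θ3, (Mo.Vstar (Q θ) - Mo.zstar θ * Q θ) * Mo.fstar θ
          ≤ ∫ θ in E.θl..θ3, (Mo.Vstar (Mo.qstar θ) - Mo.zstar θ * Mo.qstar θ) * Mo.fstar θ := by
        apply intervalIntegral.integral_mono_on hθ3Θ.1 hQ1 hS1
        intro θ hθ
        exact hptle θ ⟨hθ.1, le_trans hθ.2 hθ3u.le⟩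
      have hcomp2 : ∫ θ in θ3..E.θu, (Mo.Vstar (Q θ) - Mo.zstar θ * Q θ) * Mo.fstar θ
          ≤ (∫ θ in θ3..E.θu, (Mo.Vstar (Mo.qstar θ) - Mo.zstar θ * Mo.qstar θ) * Mo.fstar θ)
            - ε0 * ∫ θ in θ3..E.θu, Mo.fstar θ := by
        have hmono := intervalIntegral.integral_mono_on hθ3u.le hQ2
          (hS2.sub (hfs.const_mul ε0)) hps
        have hrw : ∫ θ in θ3..E.θu,
            ((Mo.Vstar (Mo.qstar θ) - Mo.zstar θ * Mo.qstar θ) * Mo.fstar θ - ε0 * Mo.fstar θ)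
            = (∫ θ in θ3..E.θu, (Mo.Vstar (Mo.qstar θ) - Mo.zstar θ * Mo.qstar θ) * Mo.fstar θ)
              - ε0 * ∫ θ in θ3..E.θu, Mo.fstar θ := by
          rw [intervalIntegral.integral_sub hS2 (hfs.const_mul ε0),
            intervalIntegral.integral_const_mul]
        rw [hrw] at hmono
        exact hmono
      have hfpos : 0 < ∫ θ in θ3..E.θu, Mo.fstar θ := by
        apply intervalIntegral.intervalIntegral_pos_of_pos_on hfs ?_ hθ3u
        intro x hx
        exact Mo.fstar_pos x ⟨le_trans hθ3Θ.1 hx.1.le, hx.2.le⟩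
      have hJQlt : Mo.J Q < Mo.J Mo.qstar := by
        rw [Model.J, Model.J, ← hsplitQ, ← hsplitS]
        have := mul_pos hε0pos hfpos
        linarith
      rw [hRHS]
      linarith
  · -- non-integrable case: WtStar = 0 < Gstar ≤ RHS
    have h0 : Mo.WtStar p t = 0 := by
      rw [Model.WtStar]
      exact intervalIntegral.integral_undef hint
    have hJG : E.Gstar ≤ Mo.J qOPT := by
      have h1 := hOPT.2 (fun _ => E.ql) (const_feas E)
      rw [J_const_ql Mo] at h1
      have h2 := Vl_le_Vstar_ql Mo
      simp only [Env.Gstar]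
      linarith
    have hGpos := Gstar_pos E
    constructor
    · rw [hRHS, h0]
      linarith
    · intro _
      rw [hRHS, h0]
      linarith
end
end
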